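/- arXiv:2211.04702 — 5 statements merged into one kernel-verified Lean document; each statement's English description precedes it below -/
import Mathlib

section
/- Let (X,Y) be a pair of real-valued random variables on a probability space with Y not almost surely a constant. Then 0 ≤ ξ(X,Y) ≤ 1; in particular the denominator ∫ Var(1_{Y ≥ t}) dμ(t) is strictly positive. -/
open MeasureTheory ProbabilityTheory Filter Set
open scoped NNReal Topology

open scoped ENNReal

set_option linter.unusedSectionVars false
set_option maxHeartbeats 1000000

section aux
variable {Ω : Type*} [MeasurableSpace Ω] (P : Measure Ω) [IsProbabilityMeasure P] {Y : Ω → ℝ}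

lemma aux_meas (hY : Measurable Y) (t : ℝ) :
    Measurable (fun ω => if t ≤ Y ω then (1 : ℝ) else 0) :=
  Measurable.ite (measurableSet_le measurable_const hY) measurable_const measurable_const

lemma aux_memℒp (hY : Measurable Y) (t : ℝ) :
    MemLp (fun ω => if t ≤ Y ω then (1 : ℝ) else 0) 2 P :=
  MemLp.of_bound ((aux_meas hY t).aestronglyMeasurable) 1
    (Eventually.of_forall fun ω => by split <;> simp)

lemma aux_integral (hY : Measurable Y) (t : ℝ) :
    ∫ ω, (if t ≤ Y ω then (1 : ℝ) else 0) ∂P = (P {ω | t ≤ Y ω}).toReal := by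
  have h : (fun ω => if t ≤ Y ω then (1 : ℝ) else 0)
      = Set.indicator {ω | t ≤ Y ω} (fun _ => (1:ℝ)) := by
    funext ω; simp [Set.indicator_apply, Set.mem_setOf_eq]
  rw [show (∫ ω, (if t ≤ Y ω then (1 : ℝ) else 0) ∂P)
      = ∫ ω, Set.indicator {ω | t ≤ Y ω} (fun _ => (1:ℝ)) ω ∂P from by rw [← h],
    integral_indicator_const _ (measurableSet_le measurable_const hY)]
  simp
  rfl

lemma aux_variance (hY : Measurable Y) (t : ℝ) :
    variance (fun ω => if t ≤ Y ω then (1 : ℝ) else 0) P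
      = (P {ω | t ≤ Y ω}).toReal - (P {ω | t ≤ Y ω}).toReal ^ 2 := by
  rw [variance_eq_sub (aux_memℒp P hY t)]
  have hsq : (fun ω => if t ≤ Y ω then (1 : ℝ) else 0) ^ 2
      = fun ω => if t ≤ Y ω then (1 : ℝ) else 0 := by
    funext ω; simp only [Pi.pow_apply]; split <;> norm_num
  rw [hsq]
  rw [show (∫ ω, (fun ω => if t ≤ Y ω then (1 : ℝ) else 0) ω ∂P) = (P {ω | t ≤ Y ω}).toReal
    from aux_integral P hY t]

lemma aux_var_le {E : Type*} [MeasurableSpace E] {X : Ω → E}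
    (hX : Measurable X) (hY : Measurable Y) (t : ℝ) :
    variance (P[(fun ω => if t ≤ Y ω then (1 : ℝ) else 0) |
      MeasurableSpace.comap X inferInstance]) P
      ≤ (P {ω | t ≤ Y ω}).toReal - (P {ω | t ≤ Y ω}).toReal ^ 2 := by
  have hm : MeasurableSpace.comap X inferInstance ≤ ‹MeasurableSpace Ω› := hX.comap_le
  set f : Ω → ℝ := fun ω => if t ≤ Y ω then (1 : ℝ) else 0 with hfdef
  have hfmem : MemLp f 2 P := aux_memℒp P hY t
  have hfint : Integrable f P := hfmem.integrable one_le_two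
  have hf0 : (0 : Ω → ℝ) ≤ᵐ[P] f := Eventually.of_forall fun ω => by
    simp only [hfdef, Pi.zero_apply]; split <;> norm_num
  have hf1 : f ≤ᵐ[P] fun _ => (1:ℝ) := Eventually.of_forall fun ω => by
    simp only [hfdef]; split <;> norm_num
  set g := P[f|MeasurableSpace.comap X inferInstance] with hgdef
  have hg0 : 0 ≤ᵐ[P] g := condExp_nonneg hf0
  have hg1 : g ≤ᵐ[P] fun _ => (1:ℝ) := by
    have h := condExp_mono (m := MeasurableSpace.comap X inferInstance) hfint (integrable_const (1:ℝ)) hf1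
    rwa [condExp_const hm (1:ℝ)] at h
  have hgaesm : AEStronglyMeasurable g P :=
    ((stronglyMeasurable_condExp (m := MeasurableSpace.comap X inferInstance)
      (f := f) (μ := P)).mono hm).aestronglyMeasurable
  have hgmem : MemLp g 2 P := MemLp.of_bound hgaesm 1 (by
    filter_upwards [hg0, hg1] with ω h0 h1
    have h0' : (0:ℝ) ≤ g ω := h0
    rw [Real.norm_eq_abs, abs_le]
    exact ⟨by linarith, h1⟩)
  have hEg : ∫ ω, g ω ∂P = (P {ω | t ≤ Y ω}).toReal := by
    rw [hgdef, integral_condExp hm]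
    exact aux_integral P hY t
  have hsq_le : ∫ ω, g ω ^ 2 ∂P ≤ ∫ ω, g ω ∂P := by
    refine integral_mono_ae hgmem.integrable_sq (hgmem.integrable one_le_two) ?_
    filter_upwards [hg0, hg1] with ω h0 h1
    have h0' : (0:ℝ) ≤ g ω := h0
    nlinarith [h0', h1]
  have hvg := variance_eq_sub hgmem
  calc variance g P = (∫ ω, g ω ^ 2 ∂P) - (∫ ω, g ω ∂P) ^ 2 := by
        rw [hvg]; congr 1
      _ ≤ (P {ω | t ≤ Y ω}).toReal - (P {ω | t ≤ Y ω}).toReal ^ 2 := by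
        rw [hEg] at hsq_le ⊢; linarith

lemma aux_const (hY : Measurable Y)
    (h : ∀ᵐ ω ∂P, P {ω' | Y ω ≤ Y ω'} = 0 ∨ P {ω' | Y ω ≤ Y ω'} = 1) :
    ∃ c : ℝ, ∀ᵐ ω ∂P, Y ω = c := by
  set q : ℝ → ℝ≥0∞ := fun t => P {ω | t ≤ Y ω} with hqdef
  have hqanti : Antitone q := fun s t hst => measure_mono (fun ω (hw : t ≤ Y ω) => hst.trans hw)
  have hmeas : ∀ t : ℝ, MeasurableSet {ω | t ≤ Y ω} := fun t =>
    measurableSet_le measurable_const hY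
  -- Step 1 : the event where q (Y ω) = 0 is null
  have hzero : P {ω | q (Y ω) = 0} = 0 := by
    by_cases hne : {t | q t = 0}.Nonempty
    · have hnotall : ∃ t₀, q t₀ ≠ 0 := by
        by_contra hall
        push_neg at hall
        have hsub : (univ : Set Ω) ⊆ ⋃ n : ℕ, {ω | (-(n:ℝ)) ≤ Y ω} := by
          intro ω _
          obtain ⟨n, hn⟩ := exists_nat_ge (-(Y ω))
          exact mem_iUnion.2 ⟨n, by simp only [mem_setOf_eq]; linarith⟩
        have h1 : (1 : ℝ≥0∞) ≤ 0 := by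
          calc (1:ℝ≥0∞) = P univ := (measure_univ).symm
          _ ≤ ∑' n : ℕ, P {ω | (-(n:ℝ)) ≤ Y ω} := (measure_mono hsub).trans (measure_iUnion_le _)
          _ = 0 := by rw [ENNReal.tsum_eq_zero]; exact fun n => hall _
        simp at h1
      obtain ⟨t₀, ht₀⟩ := hnotall
      have hbdd : BddBelow {t | q t = 0} := ⟨t₀, fun z hz => by
        by_contra hlt
        push_neg at hlt
        exact ht₀ (le_antisymm (hz ▸ hqanti hlt.le) (zero_le))⟩
      set b := sInf {t | q t = 0} with hb
      have hgt : P {ω | b < Y ω} = 0 := by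
        have hsub : {ω | b < Y ω} ⊆ ⋃ n : ℕ, {ω | b + 1/(n+1) ≤ Y ω} := by
          intro ω hω
          obtain ⟨n, hn⟩ := exists_nat_one_div_lt (K := ℝ) (sub_pos.2 hω)
          exact mem_iUnion.2 ⟨n, by simp only [mem_setOf_eq]; linarith⟩
        have hterm : ∀ n : ℕ, P {ω | b + 1/(n+1 : ℝ) ≤ Y ω} = 0 := by
          intro n
          obtain ⟨z, hz, hzlt⟩ := (csInf_lt_iff hbdd hne).mp
            (show b < b + 1/(n+1 : ℝ) from lt_add_of_pos_right b (by positivity))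
          exact le_antisymm (hz ▸ hqanti hzlt.le) (zero_le)
        refine le_antisymm ((measure_mono hsub).trans ((measure_iUnion_le _).trans ?_)) (zero_le)
        rw [nonpos_iff_eq_zero, ENNReal.tsum_eq_zero]; exact fun n => hterm n
      by_cases hbz : q b = 0
      · have hsub : {ω | q (Y ω) = 0} ⊆ {ω | b ≤ Y ω} := fun ω hω => csInf_le hbdd hω
        exact le_antisymm ((measure_mono hsub).trans_eq hbz) (zero_le)
      · have hsub : {ω | q (Y ω) = 0} ⊆ {ω | b < Y ω} := fun ω hω =>
          lt_of_le_of_ne (csInf_le hbdd hω) (fun he => hbz (by rw [hb, he]; exact hω))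
        exact le_antisymm ((measure_mono hsub).trans_eq hgt) (zero_le)
    · have hempty : {ω | q (Y ω) = 0} = ∅ := by
        ext ω; simp only [mem_setOf_eq, mem_empty_iff_false, iff_false]
        exact fun h0 => hne ⟨Y ω, h0⟩
      simp [hempty]
  have hne0 : ∀ᵐ ω ∂P, q (Y ω) ≠ 0 := by
    rw [ae_iff]; simpa using hzero
  have hone : ∀ᵐ ω ∂P, q (Y ω) = 1 := by
    filter_upwards [h, hne0] with ω h1 h2
    exact h1.resolve_left h2
  -- measurability of q
  have hqmeas : Measurable q := hqanti.measurable
  have hA1 : P {ω | q (Y ω) = 1} = 1 := by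
    have hms : MeasurableSet {ω | q (Y ω) = 1} :=
      (hqmeas.comp hY) (measurableSet_singleton 1)
    rw [← prob_compl_eq_zero_iff hms]
    rw [ae_iff] at hone
    simpa [compl_setOf] using hone
  have hAne : {t | q t = 1}.Nonempty := by
    have hne' : P {ω | q (Y ω) = 1} ≠ 0 := by rw [hA1]; exact one_ne_zero
    obtain ⟨ω, hω⟩ := nonempty_of_measure_ne_zero hne'
    exact ⟨Y ω, hω⟩
  have hnotallA : ∃ t₁, q t₁ ≠ 1 := by
    by_contra hall
    push_neg at hall
    have hlt : ∀ n : ℕ, P {ω | Y ω < n} = 0 := by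
      intro n
      have hc : P {ω | (n:ℝ) ≤ Y ω}ᶜ = 0 := by
        rw [prob_compl_eq_zero_iff (hmeas _)]
        exact hall n
      simpa [compl_setOf, not_le] using hc
    have huniv : (univ : Set Ω) ⊆ ⋃ n : ℕ, {ω | Y ω < n} := by
      intro ω _
      obtain ⟨n, hn⟩ := exists_nat_gt (Y ω)
      exact mem_iUnion.2 ⟨n, hn⟩
    have h1 : (1:ℝ≥0∞) ≤ 0 := by
      calc (1:ℝ≥0∞) = P univ := measure_univ.symm
      _ ≤ ∑' n : ℕ, P {ω | Y ω < (n:ℝ)} := (measure_mono huniv).trans (measure_iUnion_le _)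
      _ = 0 := by rw [ENNReal.tsum_eq_zero]; exact fun n => hlt n
    simp at h1
  obtain ⟨t₁, ht₁⟩ := hnotallA
  have hAbdd : BddAbove {t | q t = 1} := ⟨t₁, fun z hz => by
    by_contra hlt
    push_neg at hlt
    exact ht₁ (le_antisymm prob_le_one (hz ▸ hqanti hlt.le))⟩
  set a := sSup {t | q t = 1} with ha
  refine ⟨a, ?_⟩
  have hlt0 : P {ω | Y ω < a} = 0 := by
    have hsub : {ω | Y ω < a} ⊆ ⋃ n : ℕ, {ω | Y ω < a - 1/(n+1)} := by
      intro ω hω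
      obtain ⟨n, hn⟩ := exists_nat_one_div_lt (K := ℝ) (sub_pos.2 hω)
      exact mem_iUnion.2 ⟨n, by simp only [mem_setOf_eq]; linarith⟩
    have hterm : ∀ n : ℕ, P {ω | Y ω < a - 1/(n+1 : ℝ)} = 0 := by
      intro n
      obtain ⟨z, hz, hzgt⟩ := (lt_csSup_iff hAbdd hAne).mp
        (show a - 1/(n+1 : ℝ) < a from by
          have h0 : (0:ℝ) < 1/(n+1 : ℝ) := by positivity
          linarith)
      have hsub2 : {ω | Y ω < a - 1/(n+1 : ℝ)} ⊆ {ω | z ≤ Y ω}ᶜ := by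
        intro ω hω
        simp only [mem_compl_iff, mem_setOf_eq, not_le]
        exact hω.trans hzgt
      refine le_antisymm ((measure_mono hsub2).trans_eq ?_) (zero_le)
      rw [prob_compl_eq_zero_iff (hmeas _)]
      exact hz
    refine le_antisymm ((measure_mono hsub).trans ((measure_iUnion_le _).trans ?_)) (zero_le)
    rw [nonpos_iff_eq_zero, ENNReal.tsum_eq_zero]; exact fun n => hterm n
  have hgt0 : P {ω | a < Y ω} = 0 := by
    have hsub : {ω | q (Y ω) = 1} ⊆ {ω | Y ω ≤ a} := fun ω hω => le_csSup hAbdd hω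
    have hle : P {ω | Y ω ≤ a} = 1 :=
      le_antisymm prob_le_one (hA1 ▸ measure_mono hsub)
    have heq : {ω | a < Y ω} = {ω | Y ω ≤ a}ᶜ := by ext ω; simp [not_le]
    rw [heq, prob_compl_eq_zero_iff (measurableSet_le hY measurable_const)]
    exact hle
  rw [ae_iff]
  have hsub : {ω | ¬ Y ω = a} ⊆ {ω | Y ω < a} ∪ {ω | a < Y ω} := fun ω hω =>
    (lt_or_gt_of_ne hω).imp id id
  refine le_antisymm ((measure_mono hsub).trans ((measure_union_le _ _).trans ?_)) (zero_le)
  rw [hlt0, hgt0]; simp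

end aux


/-- The population coefficient
`ξ(X,Y) = (∫ Var(E[1_{Y≥t} | σ(X)]) dμ(t)) / (∫ Var(1_{Y≥t}) dμ(t))`, `μ = law of Y`. -/
noncomputable def xiCoef {Ω : Type*} [MeasurableSpace Ω] {E : Type*} [MeasurableSpace E]
    (P : Measure Ω) (X : Ω → E) (Y : Ω → ℝ) : ℝ :=
  (∫ t, variance (P[(fun ω => if t ≤ Y ω then (1 : ℝ) else 0) |
      MeasurableSpace.comap X inferInstance]) P ∂(Measure.map Y P)) /
  (∫ t, variance (fun ω => if t ≤ Y ω then (1 : ℝ) else 0) P ∂(Measure.map Y P))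

/-- If `Y` is not almost surely a constant, then `0 ≤ ξ(X,Y) ≤ 1`;
in particular the denominator `∫ Var(1_{Y≥t}) dμ(t)` is strictly positive. -/
theorem xi_mem_unit_interval
    {Ω : Type*} [MeasurableSpace Ω] (P : Measure Ω) [IsProbabilityMeasure P]
    (X Y : Ω → ℝ) (hX : Measurable X) (hY : Measurable Y)
    (hYnonconst : ¬ ∃ c : ℝ, ∀ᵐ ω ∂P, Y ω = c) :
    0 < ∫ t, variance (fun ω => if t ≤ Y ω then (1 : ℝ) else 0) P ∂(Measure.map Y P) ∧
    0 ≤ xiCoef P X Y ∧ xiCoef P X Y ≤ 1 := by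
  haveI : IsProbabilityMeasure (Measure.map Y P) := Measure.isProbabilityMeasure_map hY.aemeasurable
  set μ := Measure.map Y P with hμdef
  set φ : ℝ → ℝ := fun t => (P {ω | t ≤ Y ω}).toReal with hφdef
  have hφanti : Antitone φ := fun s t hst =>
    ENNReal.toReal_mono (measure_ne_top _ _) (measure_mono fun ω (hw : t ≤ Y ω) => hst.trans hw)
  have hφmeas : Measurable φ := hφanti.measurable
  have hφ0 : ∀ t, 0 ≤ φ t := fun t => ENNReal.toReal_nonneg
  have hφ1 : ∀ t, φ t ≤ 1 := fun t => by
    have h := ENNReal.toReal_mono ENNReal.one_ne_top (prob_le_one (μ := P) (s := {ω | t ≤ Y ω}))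
    simpa using h
  have hvar : ∀ t, variance (fun ω => if t ≤ Y ω then (1:ℝ) else 0) P = φ t - φ t ^ 2 :=
    fun t => aux_variance P hY t
  have hhmeas : Measurable (fun t => φ t - φ t ^ 2) := hφmeas.sub (hφmeas.pow_const 2)
  have hhint : Integrable (fun t => φ t - φ t ^ 2) μ := by
    refine (integrable_const (1:ℝ)).mono' hhmeas.aestronglyMeasurable
      (Eventually.of_forall fun t => ?_)
    rw [Real.norm_eq_abs, abs_le]
    constructor <;> nlinarith [hφ0 t, hφ1 t]
  have hDrw : (∫ t, variance (fun ω => if t ≤ Y ω then (1:ℝ) else 0) P ∂μ)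
      = ∫ t, (φ t - φ t ^ 2) ∂μ :=
    integral_congr_ae (Eventually.of_forall fun t => hvar t)
  have hD0 : 0 ≤ ∫ t, (φ t - φ t ^ 2) ∂μ :=
    integral_nonneg fun t => by simp only [Pi.zero_apply]; nlinarith [hφ0 t, hφ1 t]
  have hDpos : 0 < ∫ t, (φ t - φ t ^ 2) ∂μ := by
    rcases hD0.lt_or_eq with hlt | heq
    · exact hlt
    · exfalso
      have hae : ∀ᵐ t ∂μ, φ t - φ t ^ 2 = 0 := by
        have h0 := (integral_eq_zero_iff_of_nonneg
          (fun t => by simp only [Pi.zero_apply]; nlinarith [hφ0 t, hφ1 t] : 0 ≤ fun t => φ t - φ t ^ 2) hhint).mp heq.symm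
        filter_upwards [h0] with t ht using ht
      have hmeasS : MeasurableSet {t : ℝ | φ t - φ t ^ 2 = 0} :=
        hhmeas (measurableSet_singleton 0)
      have haeP : ∀ᵐ ω ∂P, φ (Y ω) - φ (Y ω) ^ 2 = 0 :=
        (ae_map_iff hY.aemeasurable hmeasS).mp hae
      have h01 : ∀ᵐ ω ∂P, P {ω' | Y ω ≤ Y ω'} = 0 ∨ P {ω' | Y ω ≤ Y ω'} = 1 := by
        filter_upwards [haeP] with ω hω
        have hmul : φ (Y ω) * (1 - φ (Y ω)) = 0 := by linear_combination hω
        rcases mul_eq_zero.mp hmul with hcase | hcase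
        · left
          have := ENNReal.toReal_eq_zero_iff (P {ω' | Y ω ≤ Y ω'}) |>.mp hcase
          exact this.resolve_right (measure_ne_top _ _)
        · right
          have hc1 : φ (Y ω) = 1 := by linarith
          exact (ENNReal.toReal_eq_one_iff _).mp hc1
      exact hYnonconst (aux_const P hY h01)
  have hvarle : ∀ t, variance (P[(fun ω => if t ≤ Y ω then (1:ℝ) else 0) |
      MeasurableSpace.comap X inferInstance]) P ≤ φ t - φ t ^ 2 :=
    fun t => aux_var_le P hX hY t
  have hNle : (∫ t, variance (P[(fun ω => if t ≤ Y ω then (1:ℝ) else 0) |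
        MeasurableSpace.comap X inferInstance]) P ∂μ) ≤ ∫ t, (φ t - φ t ^ 2) ∂μ :=
    integral_mono_of_nonneg (Eventually.of_forall fun t => variance_nonneg _ _) hhint
      (Eventually.of_forall fun t => hvarle t)
  have hN0 : 0 ≤ ∫ t, variance (P[(fun ω => if t ≤ Y ω then (1:ℝ) else 0) |
      MeasurableSpace.comap X inferInstance]) P ∂μ :=
    integral_nonneg fun t => variance_nonneg _ _
  refine ⟨hDrw ▸ hDpos, ?_, ?_⟩
  · exact div_nonneg hN0 (hDrw ▸ hD0)
  · rw [xiCoef, ← hμdef, hDrw]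
    exact (div_le_one hDpos).mpr hNle
end

section
/- Let (X,Y) be a pair of real-valued random variables on a probability space with Y not almost surely a constant. Then ξ(X,Y) = 0 if and only if X and Y are independent. -/
open MeasureTheory ProbabilityTheory Filter Set
open scoped NNReal Topology

set_option linter.unusedSectionVars false

section Aux
variable {Ω : Type*} [MeasurableSpace Ω] {P : Measure Ω} [IsProbabilityMeasure P] {Y : Ω → ℝ}

private lemma variance_congr_ae {f g : Ω → ℝ} (h : f =ᵐ[P] g) :
    variance f P = variance g P := by
  unfold ProbabilityTheory.variance ProbabilityTheory.evariance
  rw [integral_congr_ae h, lintegral_congr_ae (h.mono fun ω hω => by rw [hω])]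

private lemma variance_const' (c : ℝ) : variance (fun _ : Ω => c) P = 0 := by
  unfold ProbabilityTheory.variance ProbabilityTheory.evariance
  simp [integral_const]

private lemma indEq (Y : Ω → ℝ) (t : ℝ) :
    (fun ω => if t ≤ Y ω then (1:ℝ) else 0) = (Y ⁻¹' Ici t).indicator (fun _ => (1:ℝ)) := by
  funext ω; by_cases h : t ≤ Y ω <;> simp [Set.indicator_apply, mem_Ici, h]

private lemma hIint (hY : Measurable Y) (t : ℝ) :
    Integrable (fun ω => if t ≤ Y ω then (1:ℝ) else 0) P := by
  rw [indEq]; exact (integrable_const 1).indicator (hY measurableSet_Ici)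

private lemma hImeas (hY : Measurable Y) (t : ℝ) :
    Measurable (fun ω => if t ≤ Y ω then (1:ℝ) else 0) :=
  Measurable.ite (hY measurableSet_Ici) measurable_const measurable_const

private lemma hIintegral (hY : Measurable Y) (t : ℝ) :
    ∫ ω, (if t ≤ Y ω then (1:ℝ) else 0) ∂P = (P (Y ⁻¹' Ici t)).toReal := by
  rw [show (fun ω => if t ≤ Y ω then (1:ℝ) else 0) = (Y ⁻¹' Ici t).indicator (fun _ => (1:ℝ)) from indEq Y t]
  rw [integral_indicator_const _ (hY measurableSet_Ici)]
  simp
  rfl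

private lemma var_ind (hY : Measurable Y) (t : ℝ) :
    variance (fun ω => if t ≤ Y ω then (1:ℝ) else 0) P
      = (P (Y ⁻¹' Ici t)).toReal - (P (Y ⁻¹' Ici t)).toReal ^ 2 := by
  have hm : MemLp (fun ω => if t ≤ Y ω then (1:ℝ) else 0) 2 P :=
    memLp_of_bounded (a := 0) (b := 1) (Eventually.of_forall fun ω => by
      by_cases h : t ≤ Y ω <;> simp [h, Set.mem_Icc] <;> norm_num)
      (hImeas hY t).aestronglyMeasurable 2
  rw [variance_eq_sub hm]
  have h2 : (fun ω => if t ≤ Y ω then (1:ℝ) else 0) ^ 2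
      = fun ω => if t ≤ Y ω then (1:ℝ) else 0 := by
    funext ω; by_cases h : t ≤ Y ω <;> simp [h]
  rw [h2, hIintegral hY t]
end Aux

section Den
variable {Ω : Type*} [MeasurableSpace Ω] {P : Measure Ω} [IsProbabilityMeasure P] {Y : Ω → ℝ}

private lemma toReal_zero' {s : Set Ω} (h : (P s).toReal = 0) : P s = 0 :=
  ((ENNReal.toReal_eq_zero_iff _).mp h).resolve_right (measure_ne_top P s)

private lemma toReal_one' {s : Set Ω} (h : (P s).toReal = 1) : P s = 1 := by
  rwa [ENNReal.toReal_eq_one_iff] at h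

private lemma den_ne_zero (hY : Measurable Y) (hYnc : ¬ ∃ c : ℝ, ∀ᵐ ω ∂P, Y ω = c) :
    ∫ t, variance (fun ω => if t ≤ Y ω then (1:ℝ) else 0) P ∂(Measure.map Y P) ≠ 0 := by
  intro h0
  haveI : IsProbabilityMeasure (Measure.map Y P) := Measure.isProbabilityMeasure_map hY.aemeasurable
  set μ := Measure.map Y P with hμ
  set p : ℝ → ℝ := fun t => (P (Y ⁻¹' Ici t)).toReal with hpdef
  have hp0 : ∀ t, 0 ≤ p t := fun t => ENNReal.toReal_nonneg
  have hp1 : ∀ t, p t ≤ 1 := fun t => by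
    have := ENNReal.toReal_mono ENNReal.one_ne_top (prob_le_one (μ := P) (s := Y ⁻¹' Ici t))
    simpa using this
  have hpanti : Antitone p := fun a b hab => ENNReal.toReal_mono (measure_ne_top P _)
    (measure_mono (preimage_mono (Ici_subset_Ici.mpr hab)))
  have hpm : Measurable p := hpanti.measurable
  set g : ℝ → ℝ := fun t => p t - p t ^ 2 with hgdef
  have hgm : Measurable g := hpm.sub (hpm.pow_const 2)
  have hgnn : ∀ t, 0 ≤ g t := fun t => by
    have := hp0 t; have := hp1 t; show 0 ≤ p t - p t ^ 2; nlinarith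
  have hgi : Integrable g μ := by
    refine Integrable.mono' (integrable_const 1) hgm.aestronglyMeasurable
      (Eventually.of_forall fun t => ?_)
    have := hp0 t; have := hp1 t
    rw [Real.norm_eq_abs, abs_le]
    refine ⟨show -1 ≤ p t - p t ^ 2 by nlinarith, show p t - p t ^ 2 ≤ 1 by nlinarith⟩
  have h0' : ∫ t, g t ∂μ = 0 := by
    rw [← h0]
    exact integral_congr_ae (Eventually.of_forall fun t => (var_ind hY t).symm)
  have hae : ∀ᵐ t ∂μ, g t = 0 :=
    (integral_eq_zero_iff_of_nonneg hgnn hgi).mp h0'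
  have hae01 : ∀ᵐ t ∂μ, p t = 0 ∨ p t = 1 := by
    filter_upwards [hae] with t ht
    rcases mul_eq_zero.mp (show p t * (1 - p t) = 0 by simp only [hgdef] at ht; nlinarith) with h | h
    · exact Or.inl h
    · exact Or.inr (by linarith)
  -- Step 1: μ {t | p t = 0} = 0
  have hZ : μ {t | p t = 0} = 0 := by
    set Z := {t | p t = 0} with hZdef
    have hup : ∀ t ∈ Z, ∀ u, t ≤ u → u ∈ Z := fun t ht u htu =>
      le_antisymm (ht ▸ hpanti htu) (hp0 u)
    rcases Set.eq_empty_or_nonempty Z with hZe | hZe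
    · simp [hZe]
    by_cases hbb : BddBelow Z
    · set β := sInf Z with hβdef
      have hall : ∀ u, β < u → p u = 0 := fun u hu => by
        obtain ⟨z, hz, hzu⟩ := exists_lt_of_csInf_lt hZe hu
        exact hup z hz u hzu.le
      by_cases hβ : β ∈ Z
      · refine measure_mono_null (show Z ⊆ Ici β from fun z hz => csInf_le hbb hz) ?_
        rw [hμ, Measure.map_apply hY measurableSet_Ici]
        exact toReal_zero' hβ
      · have hsub : Z ⊆ Ioi β := fun z hz =>
          lt_of_le_of_ne (csInf_le hbb hz) (by rintro rfl; exact hβ hz)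
        refine measure_mono_null hsub ?_
        have hcov : Ioi β ⊆ ⋃ n : ℕ, Ici (β + 1/(n+1)) := fun x hx => by
          obtain ⟨n, hn⟩ := exists_nat_one_div_lt (show (0:ℝ) < _ - _ from sub_pos.mpr hx)
          exact mem_iUnion.mpr ⟨n, by simp only [mem_Ici]; push_cast; push_cast at hn; linarith⟩
        refine measure_mono_null hcov (measure_iUnion_null fun n => ?_)
        rw [hμ, Measure.map_apply hY measurableSet_Ici]
        refine toReal_zero' (hall _ ?_)
        have : (0:ℝ) < 1/(n+1) := by positivity
        linarith
    · exfalso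
      rw [not_bddBelow_iff] at hbb
      have hall : ∀ t, p t = 0 := fun t => by
        obtain ⟨z, hz, hzt⟩ := hbb t
        exact hup z hz t hzt.le
      have hP0 : P univ = 0 := by
        have hcov : (univ : Set Ω) ⊆ ⋃ n : ℕ, Y ⁻¹' Ici (-(n:ℝ)) := fun ω _ => by
          obtain ⟨n, hn⟩ := exists_nat_ge (-Y ω)
          exact mem_iUnion.mpr ⟨n, by simp only [mem_preimage, mem_Ici]; linarith⟩
        exact measure_mono_null hcov (measure_iUnion_null fun n => toReal_zero' (hall _))
      simp [measure_univ] at hP0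
  -- Step 2: a.e., p t = 1
  have hae1 : ∀ᵐ t ∂μ, p t = 1 := by
    have hZ' : ∀ᵐ t ∂μ, p t ≠ 0 := by
      rw [ae_iff]; simpa using hZ
    filter_upwards [hae01, hZ'] with t h1 h2
    exact h1.resolve_left h2
  set W := {t | p t = 1} with hWdef
  have hWc : μ {t | ¬ p t = 1} = 0 := by rw [← ae_iff] at *; exact hae1
  have hdown : ∀ t ∈ W, ∀ u, u ≤ t → u ∈ W := fun t ht u hut =>
    le_antisymm (hp1 u) (ht ▸ hpanti hut)
  have hWne : W.Nonempty := by
    rcases Set.eq_empty_or_nonempty W with hWe | hWe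
    · exfalso
      have : μ univ = 0 := by
        refine measure_mono_null (fun t _ => ?_) hWc
        intro h; exact absurd (show t ∈ W from h) (by simp [hWe])
      simp [measure_univ] at this
    · exact hWe
  have hIio0 : ∀ w ∈ W, P (Y ⁻¹' Iio w) = 0 := fun w hw => by
    have h1 : P (Y ⁻¹' Ici w) = 1 := toReal_one' hw
    have : Y ⁻¹' Iio w = (Y ⁻¹' Ici w)ᶜ := by
      rw [← preimage_compl, compl_Ici]
    rw [this, prob_compl_eq_zero_iff (hY measurableSet_Ici)]
    exact h1
  have hbdd : BddAbove W := by
    by_contra hbb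
    rw [not_bddAbove_iff] at hbb
    have hall : ∀ t, t ∈ W := fun t => by
      obtain ⟨z, hz, htz⟩ := hbb t
      exact hdown z hz t htz.le
    have hP0 : P univ = 0 := by
      have hcov : (univ : Set Ω) ⊆ ⋃ n : ℕ, Y ⁻¹' Iio (n:ℝ) := fun ω _ => by
        obtain ⟨n, hn⟩ := exists_nat_gt (Y ω)
        exact mem_iUnion.mpr ⟨n, by simp only [mem_preimage, mem_Iio]; linarith⟩
      exact measure_mono_null hcov (measure_iUnion_null fun n => hIio0 _ (hall _))
    simp [measure_univ] at hP0
  set c := sSup W with hcdef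
  have hIoi : μ (Ioi c) = 0 := by
    refine measure_mono_null (fun x hx => ?_) hWc
    intro hxW
    exact absurd (le_csSup hbdd hxW) (not_le.mpr hx)
  have hIio : μ (Iio c) = 0 := by
    have hcov : Iio c ⊆ ⋃ n : ℕ, Iio (c - 1/(n+1)) := fun x hx => by
      obtain ⟨n, hn⟩ := exists_nat_one_div_lt (show (0:ℝ) < _ - _ from sub_pos.mpr hx)
      exact mem_iUnion.mpr ⟨n, by simp only [mem_Iio]; push_cast; push_cast at hn; linarith⟩
    refine measure_mono_null hcov (measure_iUnion_null fun n => ?_)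
    have hpos : (0:ℝ) < 1/(n+1) := by positivity
    obtain ⟨w, hw, hw2⟩ := exists_lt_of_lt_csSup hWne (show c - 1/(n+1) < c by linarith)
    rw [hμ, Measure.map_apply hY measurableSet_Iio]
    refine measure_mono_null (preimage_mono (Iio_subset_Iio hw2.le)) (hIio0 w hw)
  refine hYnc ⟨c, ?_⟩
  rw [ae_iff]
  have hsub : {ω | ¬ Y ω = c} ⊆ Y ⁻¹' Iio c ∪ Y ⁻¹' Ioi c := fun ω hω => by
    rcases lt_or_gt_of_ne (hω : Y ω ≠ c) with h | h
    · exact Or.inl h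
    · exact Or.inr h
  refine measure_mono_null hsub (measure_union_null ?_ ?_)
  · rw [← Measure.map_apply hY measurableSet_Iio]; exact hIio
  · rw [← Measure.map_apply hY measurableSet_Ioi]; exact hIoi
end Den

section Rev
variable {Ω : Type*} [MeasurableSpace Ω] {P : Measure Ω} [IsProbabilityMeasure P] {X Y : Ω → ℝ}

private lemma trim_sf (hm : MeasurableSpace.comap X (inferInstance : MeasurableSpace ℝ) ≤ _) :
    SigmaFinite (P.trim hm) := by
  haveI : IsFiniteMeasure (P.trim hm) :=
    ⟨by rw [trim_measurableSet_eq hm MeasurableSet.univ]; exact measure_lt_top P _⟩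
  infer_instance

private lemma xi_zero_of_indep (hX : Measurable X) (hY : Measurable Y)
    (h : IndepFun X Y P) : xiCoef P X Y = 0 := by
  have hmX : MeasurableSpace.comap X (inferInstance : MeasurableSpace ℝ) ≤ _ := hX.comap_le
  haveI := trim_sf (P := P) hmX
  have hnum : ∀ t : ℝ, variance
      (P[(fun ω => if t ≤ Y ω then (1 : ℝ) else 0) | MeasurableSpace.comap X inferInstance]) P
        = 0 := by
    intro t
    have hsm : StronglyMeasurable[MeasurableSpace.comap Y (inferInstance : MeasurableSpace ℝ)]
        (fun ω => if t ≤ Y ω then (1 : ℝ) else 0) := by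
      have hset : MeasurableSet[MeasurableSpace.comap Y (inferInstance : MeasurableSpace ℝ)]
          {ω | t ≤ Y ω} := ⟨Ici t, measurableSet_Ici, rfl⟩
      exact (Measurable.ite hset measurable_const measurable_const).stronglyMeasurable
    have hindep : Indep (MeasurableSpace.comap Y (inferInstance : MeasurableSpace ℝ))
        (MeasurableSpace.comap X (inferInstance : MeasurableSpace ℝ)) P :=
      (IndepFun_iff_Indep Y X P).mp h.symm
    have hc := condExp_indep_eq (μ := P) hY.comap_le hmX hsm hindep
    rw [variance_congr_ae hc, variance_const']
  rw [xiCoef]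
  rw [show (fun t : ℝ => variance
      (P[(fun ω => if t ≤ Y ω then (1 : ℝ) else 0) | MeasurableSpace.comap X inferInstance]) P)
      = fun _ => (0:ℝ) from funext hnum]
  simp
end Rev

section Fwd
variable {Ω : Type*} [MeasurableSpace Ω] {P : Measure Ω} [IsProbabilityMeasure P] {X Y : Ω → ℝ}

private lemma kernel_Iio (κ : ProbabilityTheory.Kernel ℝ ℝ) [IsMarkovKernel κ] (x t : ℝ) :
    κ x (Iio t) = ⨆ r : ℚ, if (r : ℝ) < t then κ x (Iic (r : ℝ)) else 0 := by
  refine le_antisymm ?_ (iSup_le fun r => ?_)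
  · obtain ⟨r0, hr0⟩ := exists_rat_lt t
    have hcov : Iio t = ⋃ r : {r : ℚ // (r : ℝ) < t}, Iic (r : ℝ) := by
      ext x
      simp only [mem_Iio, mem_iUnion, mem_Iic]
      constructor
      · intro hx
        obtain ⟨q, hq1, hq2⟩ := exists_rat_btwn hx
        exact ⟨⟨q, hq2⟩, hq1.le⟩
      · rintro ⟨⟨q, hq⟩, hxq⟩
        exact lt_of_le_of_lt hxq hq
    rw [hcov]
    haveI : Nonempty {r : ℚ // (r : ℝ) < t} := ⟨⟨r0, hr0⟩⟩
    have hdir : Directed (· ⊆ ·) (fun r : {r : ℚ // (r : ℝ) < t} => Iic (r : ℝ)) := by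
      intro a b
      rcases le_total (a : ℚ) (b : ℚ) with h | h
      · exact ⟨b, Iic_subset_Iic.mpr (by exact_mod_cast h), Iic_subset_Iic.mpr le_rfl⟩
      · exact ⟨a, Iic_subset_Iic.mpr le_rfl, Iic_subset_Iic.mpr (by exact_mod_cast h)⟩
    rw [hdir.measure_iUnion]
    refine iSup_le fun r => le_iSup_of_le (r : ℚ) ?_
    rw [if_pos r.2]
  · by_cases h : (r : ℝ) < t
    · rw [if_pos h]
      exact measure_mono (Iic_subset_Iio.mpr h)
    · rw [if_neg h]; exact zero_le

private lemma kernel_joint_meas (κ : ProbabilityTheory.Kernel ℝ ℝ) [IsMarkovKernel κ]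
    (hX : Measurable X) :
    Measurable (fun q : ℝ × Ω => ((κ (X q.2)) (Ici q.1)).toReal) := by
  have h1 : (fun q : ℝ × Ω => (κ (X q.2)) (Ici q.1))
      = fun q => 1 - ⨆ r : ℚ, if (r : ℝ) < q.1 then (κ (X q.2)) (Iic (r : ℝ)) else 0 := by
    funext q
    rw [← kernel_Iio κ (X q.2) q.1]
    have h := measure_compl (μ := κ (X q.2)) (measurableSet_Iio (a := q.1)) (measure_ne_top _ _)
    rw [compl_Iio] at h
    rw [h]
    simp
  have h2 : Measurable (fun q : ℝ × Ω =>
      ⨆ r : ℚ, if (r : ℝ) < q.1 then (κ (X q.2)) (Iic (r : ℝ)) else 0) := by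
    refine Measurable.iSup fun r => ?_
    refine Measurable.ite ?_ ((κ.measurable_coe measurableSet_Iic).comp (hX.comp measurable_snd))
      measurable_const
    exact measurable_fst measurableSet_Ioi
  exact ENNReal.measurable_toReal.comp (h1 ▸ measurable_const.sub h2)
end Fwd

section Fwd2
variable {Ω : Type*} [MeasurableSpace Ω] {P : Measure Ω} [IsProbabilityMeasure P] {X Y : Ω → ℝ}

private lemma indep_of_ae_Q (hX : Measurable X) (hY : Measurable Y)
    (hQ : ∀ᵐ t ∂(Measure.map Y P), ∀ s : Set ℝ, MeasurableSet s →
      P (X ⁻¹' s ∩ Y ⁻¹' Ici t) = P (X ⁻¹' s) * P (Y ⁻¹' Ici t)) :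
    IndepFun X Y P := by
  rw [indepFun_iff_measure_inter_preimage_eq_mul]
  intro s B hs hB
  set S := {u : ℝ | ∀ s' : Set ℝ, MeasurableSet s' →
    P (X ⁻¹' s' ∩ Y ⁻¹' Ici u) = P (X ⁻¹' s') * P (Y ⁻¹' Ici u)} with hSdef
  have hN : (Measure.map Y P) Sᶜ = 0 := ae_iff.mp hQ
  set ν₁ := (P.restrict (X ⁻¹' s)).map Y with hν₁def
  set ν₂ := P (X ⁻¹' s) • (Measure.map Y P) with hν₂def
  haveI : IsFiniteMeasure ν₁ :=
    ⟨by rw [hν₁def, Measure.map_apply hY MeasurableSet.univ]; exact measure_lt_top _ _⟩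
  have hv1 : ∀ B : Set ℝ, MeasurableSet B → ν₁ B = P (X ⁻¹' s ∩ Y ⁻¹' B) := fun B hB => by
    rw [hν₁def, Measure.map_apply hY hB, Measure.restrict_apply (hY hB), inter_comm]
  have hv2 : ∀ B : Set ℝ, MeasurableSet B → ν₂ B = P (X ⁻¹' s) * P (Y ⁻¹' B) := fun B hB => by
    rw [hν₂def, Measure.smul_apply, Measure.map_apply hY hB, smul_eq_mul]
  have hv1le : ∀ B : Set ℝ, MeasurableSet B → ν₁ B ≤ (Measure.map Y P) B := fun B hB => by
    rw [hv1 B hB, Measure.map_apply hY hB]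
    exact measure_mono inter_subset_right
  have hv2le : ∀ B : Set ℝ, MeasurableSet B → ν₂ B ≤ (Measure.map Y P) B := fun B hB => by
    rw [hv2 B hB, Measure.map_apply hY hB]
    exact mul_le_of_le_one_left (zero_le) prob_le_one
  have key : ∀ u ∈ S, ν₁ (Ici u) = ν₂ (Ici u) := fun u hu => by
    rw [hv1 _ measurableSet_Ici, hv2 _ measurableSet_Ici]
    exact hu s hs
  have main : ∀ t : ℝ, ν₁ (Ici t) = ν₂ (Ici t) := by
    intro t
    by_cases hT : (S ∩ Ici t).Nonempty
    · have hbdd : BddBelow (S ∩ Ici t) := ⟨t, fun u hu => hu.2⟩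
      set v := sInf (S ∩ Ici t) with hvdef
      have htv : t ≤ v := le_csInf hT fun u hu => hu.2
      have hIco : (Measure.map Y P) (Ico t v) = 0 := by
        refine measure_mono_null ?_ hN
        intro u hu
        simp only [mem_compl_iff, hSdef]
        intro huS
        exact absurd (csInf_le hbdd ⟨huS, hu.1⟩) (not_le.mpr hu.2)
      have hsplit : ∀ (ν : Measure ℝ), ν (Ico t v) = 0 → ν (Ici t) = ν (Ici v) := by
        intro ν h
        rw [← Ico_union_Ici_eq_Ici htv]
        refine le_antisymm ((measure_union_le _ _).trans ?_) (measure_mono subset_union_right)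
        rw [h, zero_add]
      have h1 : ν₁ (Ici t) = ν₁ (Ici v) :=
        hsplit ν₁ (le_antisymm ((hv1le _ measurableSet_Ico).trans hIco.le) (zero_le))
      have h2 : ν₂ (Ici t) = ν₂ (Ici v) :=
        hsplit ν₂ (le_antisymm ((hv2le _ measurableSet_Ico).trans hIco.le) (zero_le))
      rw [h1, h2]
      by_cases hv : v ∈ S
      · exact key v hv
      · have hvnull : (Measure.map Y P) {v} = 0 :=
          measure_mono_null (singleton_subset_iff.mpr hv) hN
        have hseq : ∀ n : ℕ, ∃ u, u ∈ S ∩ Ici t ∧ u < v + 1/(n+1) := fun n => by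
          obtain ⟨u, hu, hu2⟩ := exists_lt_of_csInf_lt hT
            (lt_add_of_pos_right v (by positivity : (0:ℝ) < 1/(n+1)))
          exact ⟨u, hu, hu2⟩
        choose u hu hu2 using hseq
        have hvu : ∀ n, v < u n := fun n => lt_of_le_of_ne (csInf_le hbdd (hu n))
          (by intro h; exact hv (h ▸ (hu n).1))
        have hIoi : Ioi v = ⋃ n : ℕ, Ici (u n) := by
          ext x
          simp only [mem_Ioi, mem_iUnion, mem_Ici]
          constructor
          · intro hx
            obtain ⟨n, hn⟩ := exists_nat_one_div_lt (show (0:ℝ) < x - v from sub_pos.mpr hx)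
            refine ⟨n, ?_⟩
            have := hu2 n
            push_cast at hn this ⊢
            linarith
          · rintro ⟨n, hn⟩
            exact lt_of_lt_of_le (hvu n) hn
        have hdir : Directed (· ⊆ ·) (fun n : ℕ => Ici (u n)) := fun a b => by
          rcases le_total (u a) (u b) with h | h
          · exact ⟨a, Ici_subset_Ici.mpr le_rfl, Ici_subset_Ici.mpr h⟩
          · exact ⟨b, Ici_subset_Ici.mpr h, Ici_subset_Ici.mpr le_rfl⟩
        have hsing : ∀ (ν : Measure ℝ), ν {v} = 0 → ν (Ici v) = ν (Ioi v) := by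
          intro ν h
          rw [← Ioi_insert, ← singleton_union]
          refine le_antisymm ((measure_union_le _ _).trans ?_) (measure_mono subset_union_right)
          rw [h, zero_add]
        rw [hsing ν₁ (le_antisymm ((hv1le _ (measurableSet_singleton v)).trans hvnull.le)
            (zero_le)),
          hsing ν₂ (le_antisymm ((hv2le _ (measurableSet_singleton v)).trans hvnull.le)
            (zero_le)),
          hIoi, hdir.measure_iUnion, hdir.measure_iUnion]
        exact iSup_congr fun n => key (u n) (hu n).1
    · have hIci : (Measure.map Y P) (Ici t) = 0 := by
        refine measure_mono_null (fun u hu huS => hT ⟨u, huS, hu⟩) hN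
      have hP0 : P (Y ⁻¹' Ici t) = 0 := by
        rwa [Measure.map_apply hY measurableSet_Ici] at hIci
      rw [hv1 _ measurableSet_Ici, hv2 _ measurableSet_Ici, hP0, mul_zero]
      exact measure_mono_null inter_subset_right hP0
  have hext : ν₁ = ν₂ := Measure.ext_of_Ici ν₁ ν₂ main
  have h1 := hv1 B hB
  rw [hext, hv2 B hB] at h1
  exact h1.symm
end Fwd2

section Fwd3
variable {Ω : Type*} [MeasurableSpace Ω] {P : Measure Ω} [IsProbabilityMeasure P] {X Y : Ω → ℝ}

private lemma ae_Q_of_num_zero (hX : Measurable X) (hY : Measurable Y)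
    (hnum : ∫ t, variance (P[(fun ω => if t ≤ Y ω then (1 : ℝ) else 0) |
      MeasurableSpace.comap X inferInstance]) P ∂(Measure.map Y P) = 0) :
    ∀ᵐ t ∂(Measure.map Y P), ∀ s : Set ℝ, MeasurableSet s →
      P (X ⁻¹' s ∩ Y ⁻¹' Ici t) = P (X ⁻¹' s) * P (Y ⁻¹' Ici t) := by
  have hmX : MeasurableSpace.comap X (inferInstance : MeasurableSpace ℝ) ≤ _ := hX.comap_le
  haveI := trim_sf (P := P) hmX
  set κ := condDistrib Y X P with hκdef
  set f : ℝ × Ω → ℝ := fun q => ((κ (X q.2)) (Ici q.1)).toReal with hfdef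
  have hfm : Measurable f := kernel_joint_meas κ hX
  have hf01 : ∀ q, f q ∈ Icc (0:ℝ) 1 := fun q => by
    constructor
    · exact ENNReal.toReal_nonneg
    · have := ENNReal.toReal_mono ENNReal.one_ne_top
        (prob_le_one (μ := κ (X q.2)) (s := Ici q.1))
      simpa using this
  have hmemp : ∀ t, MemLp (fun ω => f (t, ω)) 2 P := fun t =>
    memLp_of_bounded (a := 0) (b := 1) (Eventually.of_forall fun ω => hf01 (t, ω))
      ((hfm.comp measurable_prodMk_left).aestronglyMeasurable) 2
  have hae : ∀ t : ℝ, (P[(fun ω => if t ≤ Y ω then (1 : ℝ) else 0) |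
      MeasurableSpace.comap X inferInstance]) =ᵐ[P] fun ω => f (t, ω) := fun t => by
    have h := condDistrib_ae_eq_condExp (μ := P) hX hY (measurableSet_Ici (a := t))
    rw [indEq Y t]
    exact h.symm
  set H : ℝ → ℝ := fun t => ∫ ω, f (t, ω) ∂P with hHdef
  set K : ℝ → ℝ := fun t => ∫ ω, f (t, ω) ^ 2 ∂P with hKdef
  have hvar : ∀ t : ℝ, variance (P[(fun ω => if t ≤ Y ω then (1 : ℝ) else 0) |
      MeasurableSpace.comap X inferInstance]) P = K t - H t ^ 2 := fun t => by
    rw [variance_congr_ae (hae t), variance_eq_sub (hmemp t)]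
    congr 1
  have hHm : Measurable H := hfm.stronglyMeasurable.integral_prod_right'.measurable
  have hKm : Measurable K :=
    ((hfm.pow_const 2).stronglyMeasurable.integral_prod_right').measurable
  have hK_int : ∀ t, Integrable (fun ω => f (t, ω) ^ 2) P := fun t =>
    memLp_one_iff_integrable.mp (memLp_of_bounded (a := 0) (b := 1)
      (Eventually.of_forall fun ω => ⟨sq_nonneg _, by
        have h1 := (hf01 (t, ω)).1; have h2 := (hf01 (t, ω)).2; nlinarith⟩)
      (((hfm.pow_const 2).comp measurable_prodMk_left).aestronglyMeasurable) 1)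
  have hK1 : ∀ t, K t ≤ 1 := fun t => by
    have : K t ≤ ∫ _ω, (1:ℝ) ∂P := integral_mono (hK_int t) (integrable_const 1) fun ω => by
      have h1 := (hf01 (t, ω)).1; have h2 := (hf01 (t, ω)).2; nlinarith
    simpa using this
  have hG'nn : ∀ t, 0 ≤ K t - H t ^ 2 := fun t => by
    rw [← hvar t]; exact variance_nonneg _ _
  have hG'int : Integrable (fun t => K t - H t ^ 2) (Measure.map Y P) := by
    refine Integrable.mono' (integrable_const 1)
      ((hKm.sub (hHm.pow_const 2)).aestronglyMeasurable) (Eventually.of_forall fun t => ?_)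
    rw [Real.norm_eq_abs, abs_le]
    refine ⟨by have := hG'nn t; linarith, ?_⟩
    have := hK1 t
    have := sq_nonneg (H t)
    linarith
  have h0 : ∫ t, (K t - H t ^ 2) ∂(Measure.map Y P) = 0 := by
    rw [← hnum]
    exact integral_congr_ae (Eventually.of_forall fun t => (hvar t).symm)
  have haeG : ∀ᵐ t ∂(Measure.map Y P), K t - H t ^ 2 = 0 :=
    (integral_eq_zero_iff_of_nonneg hG'nn hG'int).mp h0
  filter_upwards [haeG] with t ht
  intro s hs
  have hvz : variance (P[(fun ω => if t ≤ Y ω then (1 : ℝ) else 0) |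
      MeasurableSpace.comap X inferInstance]) P = 0 := by rw [hvar t]; exact ht
  have hcm : MemLp (P[(fun ω => if t ≤ Y ω then (1 : ℝ) else 0) |
      MeasurableSpace.comap X inferInstance]) 2 P := (hmemp t).ae_eq (hae t).symm
  have hev : evariance (P[(fun ω => if t ≤ Y ω then (1 : ℝ) else 0) |
      MeasurableSpace.comap X inferInstance]) P = 0 := by
    rcases (ENNReal.toReal_eq_zero_iff _).mp hvz with h | h
    · exact h
    · exact absurd h hcm.evariance_lt_top.ne
  have heq := (evariance_eq_zero_iff hcm.aestronglyMeasurable.aemeasurable).mp hev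
  have hci : ∫ ω, (P[(fun ω => if t ≤ Y ω then (1 : ℝ) else 0) |
      MeasurableSpace.comap X inferInstance]) ω ∂P = (P (Y ⁻¹' Ici t)).toReal := by
    rw [integral_condExp hmX]
    exact hIintegral hY t
  have hA : MeasurableSet[MeasurableSpace.comap X (inferInstance : MeasurableSpace ℝ)]
      (X ⁻¹' s) := ⟨s, hs, rfl⟩
  have h1 : ∫ ω in X ⁻¹' s, (P[(fun ω => if t ≤ Y ω then (1 : ℝ) else 0) |
        MeasurableSpace.comap X inferInstance]) ω ∂P
      = ∫ ω in X ⁻¹' s, (if t ≤ Y ω then (1:ℝ) else 0) ∂P :=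
    setIntegral_condExp hmX (hIint hY t) hA
  have h2 : ∫ ω in X ⁻¹' s, (P[(fun ω => if t ≤ Y ω then (1 : ℝ) else 0) |
        MeasurableSpace.comap X inferInstance]) ω ∂P
      = (P (Y ⁻¹' Ici t)).toReal * (P (X ⁻¹' s)).toReal := by
    rw [integral_congr_ae (ae_restrict_of_ae heq), setIntegral_const, hci, smul_eq_mul, mul_comm]; rfl
  have h3 : ∫ ω in X ⁻¹' s, (if t ≤ Y ω then (1:ℝ) else 0) ∂P
      = (P (Y ⁻¹' Ici t ∩ X ⁻¹' s)).toReal := by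
    rw [show (fun ω => if t ≤ Y ω then (1:ℝ) else 0)
        = (Y ⁻¹' Ici t).indicator (fun _ => (1:ℝ)) from indEq Y t]
    rw [integral_indicator_const _ (hY measurableSet_Ici),
      Measure.real, Measure.restrict_apply (hY measurableSet_Ici), smul_eq_mul, mul_one]
  rw [inter_comm]
  apply (ENNReal.toReal_eq_toReal_iff' (measure_ne_top P _)
    (ENNReal.mul_ne_top (measure_ne_top P _) (measure_ne_top P _))).mp
  rw [ENNReal.toReal_mul]
  rw [h2] at h1
  rw [h3] at h1
  rw [← h1]
  ring
end Fwd3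


/-- If `Y` is not almost surely a constant, then `ξ(X,Y) = 0` if and
only if `X` and `Y` are independent. -/
theorem xi_eq_zero_iff_indep
    {Ω : Type*} [MeasurableSpace Ω] (P : Measure Ω) [IsProbabilityMeasure P]
    (X Y : Ω → ℝ) (hX : Measurable X) (hY : Measurable Y)
    (hYnonconst : ¬ ∃ c : ℝ, ∀ᵐ ω ∂P, Y ω = c) :
    xiCoef P X Y = 0 ↔ IndepFun X Y P := by
  constructor
  · intro h
    rw [xiCoef] at h
    rcases div_eq_zero_iff.mp h with hnum | hden
    · exact indep_of_ae_Q hX hY (ae_Q_of_num_zero hX hY hnum)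
    · exact absurd hden (den_ne_zero hY hYnonconst)
  · intro h
    exact xi_zero_of_indep hX hY h
end

section
/- Let Y be a real-valued random variable that is not almost surely a constant. Then E[G(Y)(1 − G(Y))] > 0 (so τ² is well-defined), and τ² > 0. -/
open MeasureTheory ProbabilityTheory Filter Set
open scoped NNReal Topology

/-- The cumulative distribution function `F(t) = P(Y ≤ t)` of `Y` under `P`. -/
noncomputable def cdfF {Ω : Type*} [MeasurableSpace Ω] (P : Measure Ω) (Y : Ω → ℝ) (t : ℝ) : ℝ :=
  (Measure.map Y P (Set.Iic t)).toReal

/-- The survival function `G(t) = P(Y ≥ t)` of `Y` under `P`. -/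
noncomputable def survG {Ω : Type*} [MeasurableSpace Ω] (P : Measure Ω) (Y : Ω → ℝ) (t : ℝ) : ℝ :=
  (Measure.map Y P (Set.Ici t)).toReal

/-- `φ(y,y') = min{F(y), F(y')}`. -/
noncomputable def phiF {Ω : Type*} [MeasurableSpace Ω] (P : Measure Ω) (Y : Ω → ℝ)
    (y y' : ℝ) : ℝ :=
  min (cdfF P Y y) (cdfF P Y y')

/-- The asymptotic variance
`τ² = (E[φ(Y₁,Y₂)²] − 2 E[φ(Y₁,Y₂)φ(Y₁,Y₃)] + (E[φ(Y₁,Y₂)])²) / (E[G(Y)(1−G(Y))])²`,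
where `Y₁, Y₂, Y₃` are independent copies of `Y`; the expectations over independent copies
are written as iterated integrals against the law `μ` of `Y`. -/
noncomputable def tauSq {Ω : Type*} [MeasurableSpace Ω] (P : Measure Ω) (Y : Ω → ℝ) : ℝ :=
  (∫ y₁, ∫ y₂, (phiF P Y y₁ y₂) ^ 2 ∂(Measure.map Y P) ∂(Measure.map Y P)
    - 2 * ∫ y₁, ∫ y₂, ∫ y₃, phiF P Y y₁ y₂ * phiF P Y y₁ y₃
        ∂(Measure.map Y P) ∂(Measure.map Y P) ∂(Measure.map Y P)
    + (∫ y₁, ∫ y₂, phiF P Y y₁ y₂ ∂(Measure.map Y P) ∂(Measure.map Y P)) ^ 2) /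
  (∫ y, survG P Y y * (1 - survG P Y y) ∂(Measure.map Y P)) ^ 2


section Aux
variable {μ : Measure ℝ}

lemma integrable_of_bdd {α : Type*} [MeasurableSpace α] {ν : Measure α} [IsFiniteMeasure ν]
    {f : α → ℝ} (hf : AEStronglyMeasurable f ν) {C : ℝ} (hC : ∀ x, |f x| ≤ C) :
    Integrable f ν :=
  (integrable_const C).mono' hf (ae_of_all _ (by simpa [Real.norm_eq_abs] using hC))

lemma Fmono (μ : Measure ℝ) [IsFiniteMeasure μ] : Monotone (fun y => (μ (Iic y)).toReal) :=
  fun a b hab => ENNReal.toReal_mono (measure_ne_top μ _) (measure_mono (Iic_subset_Iic.2 hab))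

lemma Gaanti (μ : Measure ℝ) [IsFiniteMeasure μ] : Antitone (fun y => (μ (Ici y)).toReal) :=
  fun a b hab => ENNReal.toReal_mono (measure_ne_top μ _) (measure_mono (Ici_subset_Ici.2 hab))

/-- The set where the survival function vanishes is null. -/
lemma null_G_zero (μ : Measure ℝ) [IsProbabilityMeasure μ] : μ {y | μ (Ici y) = 0} = 0 := by
  set N : Set ℝ := {y | μ (Ici y) = 0} with hN
  have hup : ∀ y ∈ N, ∀ z, y ≤ z → z ∈ N := by
    intro y hy z hz
    exact measure_mono_null (Ici_subset_Ici.2 hz) hy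
  by_cases hne : N.Nonempty
  swap
  · rw [Set.not_nonempty_iff_eq_empty.1 hne]; simp
  have hbdd : BddBelow N := by
    by_contra hb
    have hall : ∀ n : ℕ, μ (Ici (-(n:ℝ))) = 0 := by
      intro n
      obtain ⟨m, hm, hlt⟩ := not_bddBelow_iff.1 hb (-(n:ℝ))
      exact hup m hm _ hlt.le
    have : μ (⋃ n : ℕ, Ici (-(n:ℝ))) = 0 := measure_iUnion_null hall
    have huniv : (⋃ n : ℕ, Ici (-(n:ℝ))) = univ := by
      ext x
      simp only [mem_iUnion, mem_Ici, mem_univ, iff_true]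
      obtain ⟨n, hn⟩ := exists_nat_ge (-x)
      exact ⟨n, by linarith⟩
    rw [huniv] at this
    simp [measure_univ] at this
  set b := sInf N with hbdef
  have hIoi : μ (Ioi b) = 0 := by
    have hcover : Ioi b ⊆ ⋃ n : ℕ, Ici (b + 1/(n+1)) := by
      intro x hx
      obtain ⟨n, hn⟩ := exists_nat_one_div_lt (sub_pos.2 (mem_Ioi.1 hx))
      exact mem_iUnion.2 ⟨n, by simp only [mem_Ici]; push_cast at hn ⊢; linarith⟩
    refine measure_mono_null hcover (measure_iUnion_null fun n => ?_)
    have : b < b + 1/(n+1) := lt_add_of_pos_right b (by positivity)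
    obtain ⟨m, hm, hlt⟩ := exists_lt_of_csInf_lt hne this
    exact measure_mono_null (Ici_subset_Ici.2 hlt.le) hm
  by_cases hbN : b ∈ N
  · exact measure_mono_null (fun y hy => (csInf_le hbdd hy : b ≤ y)) hbN
  · refine measure_mono_null (fun y hy => ?_) hIoi
    have hle : b ≤ y := csInf_le hbdd hy
    rcases lt_or_eq_of_le hle with h | h
    · exact h
    · exact absurd (h ▸ hy) hbN
end Aux

section Aux2
variable {μ : Measure ℝ}

/-- If all CDF values are 0 or 1, the measure is a point mass. -/
lemma pointmass_of_01 (μ : Measure ℝ) [IsProbabilityMeasure μ]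
    (h01 : ∀ t : ℝ, μ (Iic t) = 0 ∨ μ (Iic t) = 1) : ∃ a : ℝ, μ {a}ᶜ = 0 := by
  set T : Set ℝ := {t | μ (Iic t) = 1} with hT
  have hTne : T.Nonempty := by
    by_contra hne
    have hz : ∀ n : ℕ, μ (Iic (n:ℝ)) = 0 := by
      intro n
      rcases h01 n with h | h
      · exact h
      · exact absurd h (by simpa [hT] using fun h' => hne ⟨n, h'⟩)
    have huniv : (⋃ n : ℕ, Iic ((n:ℝ))) = univ := by
      ext x; simp only [mem_iUnion, mem_Iic, mem_univ, iff_true]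
      obtain ⟨n, hn⟩ := exists_nat_ge x
      exact ⟨n, hn⟩
    have := measure_iUnion_null hz
    rw [huniv] at this
    simp [measure_univ] at this
  have hTbdd : BddBelow T := by
    by_contra hb
    have hall : ∀ n : ℕ, μ (Iic (-(n:ℝ))) = 1 := by
      intro n
      obtain ⟨m, hm, hlt⟩ := not_bddBelow_iff.1 hb (-(n:ℝ))
      have : μ (Iic (-(n:ℝ))) ≥ μ (Iic m) := measure_mono (Iic_subset_Iic.2 hlt.le)
      rcases h01 (-(n:ℝ)) with h | h
      · rw [hm] at this; rw [h] at this; simp at this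
      · exact h
    have hint : (⋂ n : ℕ, Iic (-(n:ℝ))) = ∅ := by
      ext x; simp only [mem_iInter, mem_Iic, mem_empty_iff_false, iff_false, not_forall, not_le]
      obtain ⟨n, hn⟩ := exists_nat_gt (-x)
      exact ⟨n, by linarith⟩
    have hmono : Antitone (fun n : ℕ => Iic (-(n:ℝ))) := fun a b hab =>
      Iic_subset_Iic.2 (neg_le_neg (Nat.cast_le.2 hab))
    have := MeasureTheory.tendsto_measure_iInter_atTop (fun n => (measurableSet_Iic).nullMeasurableSet)
      hmono ⟨0, measure_ne_top μ _⟩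
    rw [hint] at this
    simp only [measure_empty] at this
    have h1 : Tendsto (fun _ : ℕ => (1:ENNReal)) atTop (nhds 0) := by
      convert this using 2 with n
      exact (hall n).symm
    have := tendsto_nhds_unique h1 tendsto_const_nhds
    simp at this
  set a := sInf T with ha
  refine ⟨a, ?_⟩
  have hIoi : μ (Ioi a) = 0 := by
    have hcover : Ioi a ⊆ ⋃ n : ℕ, (Iic (a + 1/(n+1)))ᶜ ∩ Ioi a := by
      intro x hx
      obtain ⟨n, hn⟩ := exists_nat_one_div_lt (sub_pos.2 (mem_Ioi.1 hx))
      refine mem_iUnion.2 ⟨n, ⟨?_, hx⟩⟩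
      simp only [mem_compl_iff, mem_Iic, not_le]
      push_cast at hn ⊢; linarith
    refine measure_mono_null hcover (measure_iUnion_null fun n => ?_)
    have hlt : a < a + 1/(n+1) := lt_add_of_pos_right a (by positivity)
    obtain ⟨t, ht, htlt⟩ := exists_lt_of_csInf_lt hTne hlt
    have h1 : μ (Iic t) = 1 := ht
    have : μ (Iic t)ᶜ = 0 := by
      rw [measure_compl measurableSet_Iic (measure_ne_top μ _), h1, measure_univ]
      simp
    refine measure_mono_null ?_ this
    intro x hx
    simp only [mem_inter_iff, mem_compl_iff, mem_Iic, not_le] at hx ⊢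
    linarith [hx.1]
  have hIio : μ (Iio a) = 0 := by
    have hcover : Iio a ⊆ ⋃ n : ℕ, Iic (a - 1/(n+1)) := by
      intro x hx
      obtain ⟨n, hn⟩ := exists_nat_one_div_lt (sub_pos.2 (mem_Iio.1 hx))
      refine mem_iUnion.2 ⟨n, ?_⟩
      simp only [mem_Iic]; push_cast at hn ⊢; linarith
    refine measure_mono_null hcover (measure_iUnion_null fun n => ?_)
    rcases h01 (a - 1/(n+1)) with h | h
    · exact h
    · exfalso
      have : a ≤ a - 1/(n+1) := csInf_le hTbdd h
      have hpos : (0:ℝ) < 1/(n+1) := by positivity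
      linarith
  have hset : ({a}ᶜ : Set ℝ) = Iio a ∪ Ioi a := by
    ext x
    simp only [mem_compl_iff, mem_singleton_iff, mem_union, mem_Iio, mem_Ioi]
    exact ⟨fun h => lt_or_gt_of_ne h, fun h => h.elim ne_of_lt ne_of_gt⟩
  rw [hset]
  exact measure_union_null hIio hIoi
end Aux2

section Aux3

lemma full_of_compl_null {α : Type*} [MeasurableSpace α] {μ : Measure α} [IsProbabilityMeasure μ]
    {s : Set α} (h : μ sᶜ = 0) : μ s = 1 := by
  have h1 : (1:ENNReal) ≤ μ s + μ sᶜ := by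
    have := measure_union_le (μ := μ) s sᶜ
    rwa [union_compl_self, measure_univ] at this
  rw [h, add_zero] at h1
  exact le_antisymm prob_le_one h1

/-- If the CDF is a.e. constant (w.r.t. the measure itself), the measure is a point mass. -/
lemma pointmass_of_ae_constF (μ : Measure ℝ) [IsProbabilityMeasure μ] {m : ℝ}
    (hm : μ {y | (μ (Iic y)).toReal = m}ᶜ = 0) : ∃ a : ℝ, μ {a}ᶜ = 0 := by
  set F : ℝ → ℝ := fun y => (μ (Iic y)).toReal with hF
  set T : Set ℝ := {y | F y = m} with hT
  have hμT : μ T = 1 := full_of_compl_null hm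
  have hTne : T.Nonempty := by
    apply nonempty_of_measure_ne_zero (μ := μ); rw [hμT]; exact one_ne_zero
  have hTne2 := hTne
  obtain ⟨y₀, hy₀⟩ := hTne2
  have hm0 : 0 ≤ m := hy₀ ▸ ENNReal.toReal_nonneg
  have hm1 : m ≤ 1 := by
    rw [← hy₀]
    exact ENNReal.toReal_le_of_le_ofReal zero_le_one (by simpa using prob_le_one)
  have hofm : ∀ t ∈ T, μ (Iic t) = ENNReal.ofReal m := by
    intro t ht
    have : (μ (Iic t)).toReal = m := ht
    rw [← this, ENNReal.ofReal_toReal (measure_ne_top μ _)]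
  rcases eq_or_lt_of_le hm1 with hmeq | hmlt
  · -- m = 1 : point mass at sInf T
    have hT1 : ∀ t ∈ T, μ (Iic t) = 1 := by
      intro t ht; rw [hofm t ht, hmeq]; simp
    have hbdd : BddBelow T := by
      by_contra hb
      have hall : ∀ n : ℕ, μ (Iic (-(n:ℝ))) = 1 := by
        intro n
        obtain ⟨t, ht, hlt⟩ := not_bddBelow_iff.1 hb (-(n:ℝ))
        exact le_antisymm prob_le_one
          ((hT1 t ht) ▸ measure_mono (Iic_subset_Iic.2 hlt.le))
      have hint : (⋂ n : ℕ, Iic (-(n:ℝ))) = ∅ := by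
        ext x; simp only [mem_iInter, mem_Iic, mem_empty_iff_false, iff_false, not_forall, not_le]
        obtain ⟨n, hn⟩ := exists_nat_gt (-x)
        exact ⟨n, by linarith⟩
      have hmono : Antitone (fun n : ℕ => Iic (-(n:ℝ))) := fun a b hab =>
        Iic_subset_Iic.2 (neg_le_neg (Nat.cast_le.2 hab))
      have htend := MeasureTheory.tendsto_measure_iInter_atTop
        (fun n => (measurableSet_Iic).nullMeasurableSet) hmono ⟨0, measure_ne_top μ _⟩
      rw [hint] at htend
      simp only [measure_empty] at htend
      have h1 : Tendsto (fun _ : ℕ => (1:ENNReal)) atTop (nhds 0) := by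
        convert htend using 2 with n
        exact (hall n).symm
      have := tendsto_nhds_unique h1 tendsto_const_nhds
      simp at this
    set a := sInf T with ha
    refine ⟨a, ?_⟩
    have hIoi : μ (Ioi a) = 0 := by
      have hcover : Ioi a ⊆ ⋃ n : ℕ, (Iic (a + 1/(n+1)))ᶜ ∩ Ioi a := by
        intro x hx
        obtain ⟨n, hn⟩ := exists_nat_one_div_lt (sub_pos.2 (mem_Ioi.1 hx))
        refine mem_iUnion.2 ⟨n, ⟨?_, hx⟩⟩
        simp only [mem_compl_iff, mem_Iic, not_le]
        push_cast at hn ⊢; linarith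
      refine measure_mono_null hcover (measure_iUnion_null fun n => ?_)
      have hlt : a < a + 1/(n+1) := lt_add_of_pos_right a (by positivity)
      obtain ⟨t, ht, htlt⟩ := exists_lt_of_csInf_lt hTne hlt
      have hcnull : μ (Iic t)ᶜ = 0 := by
        rw [measure_compl measurableSet_Iic (measure_ne_top μ _), hT1 t ht, measure_univ]
        simp
      refine measure_mono_null ?_ hcnull
      intro x hx
      simp only [mem_inter_iff, mem_compl_iff, mem_Iic, not_le] at hx ⊢
      linarith [hx.1]
    have hIio : μ (Iio a) = 0 := by
      refine measure_mono_null (fun x hx => ?_) hm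
      intro hxT
      exact absurd (csInf_le hbdd hxT) (not_le.2 (mem_Iio.1 hx))
    have hset : ({a}ᶜ : Set ℝ) = Iio a ∪ Ioi a := by
      ext x
      simp only [mem_compl_iff, mem_singleton_iff, mem_union, mem_Iio, mem_Ioi]
      exact ⟨fun h => lt_or_gt_of_ne h, fun h => h.elim ne_of_lt ne_of_gt⟩
    rw [hset]
    exact measure_union_null hIio hIoi
  · -- m < 1 : contradiction
    exfalso
    -- find b with F b > m
    have hsup : (⨆ n : ℕ, μ (Iic (n:ℝ))) = 1 := by
      have hdir : Directed (fun x1 x2 : Set ℝ => x1 ⊆ x2) (fun n : ℕ => Iic (n:ℝ)) := by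
        intro a b
        exact ⟨max a b, Iic_subset_Iic.2 (by exact_mod_cast le_max_left a b),
          Iic_subset_Iic.2 (by exact_mod_cast le_max_right a b)⟩
      have huniv : (⋃ n : ℕ, Iic ((n:ℝ))) = univ := by
        ext x; simp only [mem_iUnion, mem_Iic, mem_univ, iff_true]
        exact exists_nat_ge x
      rw [← Directed.measure_iUnion hdir, huniv, measure_univ]
    have hexb : ∃ b : ℕ, ENNReal.ofReal m < μ (Iic (b:ℝ)) := by
      rw [← lt_iSup_iff, hsup]
      exact ENNReal.ofReal_lt_one.2 hmlt
    obtain ⟨b, hb⟩ := hexb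
    have hTbdd : BddAbove T := by
      refine ⟨b, fun y hy => ?_⟩
      by_contra hyb
      push_neg at hyb
      have : μ (Iic (b:ℝ)) ≤ μ (Iic y) := measure_mono (Iic_subset_Iic.2 hyb.le)
      rw [hofm y hy] at this
      exact absurd (lt_of_lt_of_le hb this) (lt_irrefl _)
    set s := sSup T with hs
    have hIic : μ (Iic s) = 1 := by
      refine le_antisymm prob_le_one ?_
      rw [← hμT]
      exact measure_mono (fun y hy => le_csSup hTbdd hy)
    have hIio : μ (Iio s) ≤ ENNReal.ofReal m := by
      have hcover : Iio s = ⋃ n : ℕ, Iic (s - 1/(n+1)) := by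
        ext x
        simp only [mem_iUnion, mem_Iic, mem_Iio]
        constructor
        · intro hx
          obtain ⟨n, hn⟩ := exists_nat_one_div_lt (sub_pos.2 hx)
          exact ⟨n, by push_cast at hn ⊢; linarith⟩
        · rintro ⟨n, hn⟩
          have : (0:ℝ) < 1/(n+1) := by positivity
          linarith
      have hdir : Directed (fun x1 x2 : Set ℝ => x1 ⊆ x2) (fun n : ℕ => Iic (s - 1/(n+1))) := by
        intro a b
        refine ⟨max a b, Iic_subset_Iic.2 ?_, Iic_subset_Iic.2 ?_⟩ <;>
        · apply sub_le_sub_left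
          apply one_div_le_one_div_of_le (by positivity)
          push_cast
          simp [le_max_left, le_max_right]
      rw [hcover, Directed.measure_iUnion hdir]
      refine iSup_le fun n => ?_
      have hlt : s - 1/(n+1) < s := by
        have : (0:ℝ) < 1/(n+1) := by positivity
        linarith
      obtain ⟨t, ht, htlt⟩ := exists_lt_of_lt_csSup hTne hlt
      rw [← hofm t ht]
      exact measure_mono (Iic_subset_Iic.2 htlt.le)
    have hsingle : μ {s} ≠ 0 := by
      intro h0
      have hsub : Iic s ⊆ Iio s ∪ {s} := by
        intro x hx
        rcases lt_or_eq_of_le (mem_Iic.1 hx) with h | h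
        · exact Or.inl h
        · exact Or.inr (by simp [h])
      have : (1:ENNReal) ≤ μ (Iio s) + μ {s} :=
        hIic ▸ le_trans (measure_mono hsub) (measure_union_le _ _)
      rw [h0, add_zero] at this
      have : (1:ENNReal) ≤ ENNReal.ofReal m := le_trans this hIio
      exact absurd (lt_of_lt_of_le (ENNReal.ofReal_lt_one.2 hmlt) this) (lt_irrefl _)
    apply hsingle
    refine measure_mono_null ?_ hm
    intro x hx
    simp only [mem_singleton_iff] at hx
    subst hx
    simp only [mem_compl_iff, mem_setOf_eq, hT, hF]
    rw [hIic]
    simp only [ENNReal.toReal_one]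
    exact fun h => absurd (h ▸ hmlt) (lt_irrefl _)
end Aux3

section Aux4

lemma exists_middle (μ : Measure ℝ) [IsProbabilityMeasure μ] (hnc : ∀ a : ℝ, μ {a}ᶜ ≠ 0) :
    ∃ t : ℝ, μ (Iic t) ≠ 0 ∧ μ (Iic t) ≠ 1 := by
  by_contra h
  push_neg at h
  obtain ⟨a, ha⟩ := pointmass_of_01 μ (fun t => by
    rcases eq_or_ne (μ (Iic t)) 0 with h0 | h0
    · exact Or.inl h0
    · exact Or.inr (h t h0))
  exact hnc a ha

lemma denom_pos (μ : Measure ℝ) [IsProbabilityMeasure μ] (hnc : ∀ a : ℝ, μ {a}ᶜ ≠ 0) :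
    0 < ∫ y, (μ (Ici y)).toReal * (1 - (μ (Ici y)).toReal) ∂μ := by
  set G : ℝ → ℝ := fun y => (μ (Ici y)).toReal with hG
  have hGanti : Antitone G := Gaanti μ
  have hGmeas : Measurable G := hGanti.measurable
  have hG01 : ∀ y, 0 ≤ G y ∧ G y ≤ 1 := fun y =>
    ⟨ENNReal.toReal_nonneg, ENNReal.toReal_le_of_le_ofReal zero_le_one (by simpa using prob_le_one)⟩
  set f : ℝ → ℝ := fun y => G y * (1 - G y) with hf
  have hfnonneg : ∀ y, 0 ≤ f y := fun y =>
    mul_nonneg (hG01 y).1 (by linarith [(hG01 y).2])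
  have hfmeas : Measurable f := hGmeas.mul (measurable_const.sub hGmeas)
  have hfint : Integrable f μ := by
    refine integrable_of_bdd hfmeas.aestronglyMeasurable (C := 1) fun y => ?_
    rw [abs_of_nonneg (hfnonneg y)]
    show G y * (1 - G y) ≤ 1
    nlinarith [(hG01 y).1, (hG01 y).2]
  rw [integral_pos_iff_support_of_nonneg hfnonneg hfint]
  obtain ⟨t, ht0, ht1⟩ := exists_middle μ hnc
  have hsub : Ioi t \ {y | μ (Ici y) = 0} ⊆ Function.support f := by
    rintro y ⟨hyt, hy0⟩
    simp only [mem_setOf_eq] at hy0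
    have hGpos : 0 < G y := ENNReal.toReal_pos hy0 (measure_ne_top μ _)
    have hGlt : G y < 1 := by
      have h1 : μ (Ici y) ≤ μ (Ioi t) := measure_mono (fun x hx => mem_Ioi.2 (lt_of_lt_of_le (mem_Ioi.1 hyt) (mem_Ici.1 hx)))
      have h2 : μ (Ioi t) = 1 - μ (Iic t) := by
        rw [← Set.compl_Iic, measure_compl measurableSet_Iic (measure_ne_top μ _), measure_univ]
      have h3 : μ (Ioi t) < 1 := by
        rw [h2]
        exact ENNReal.sub_lt_self ENNReal.one_ne_top one_ne_zero ht0
      calc G y ≤ (μ (Ioi t)).toReal :=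
            ENNReal.toReal_mono (measure_ne_top μ _) h1
        _ < 1 := by
            rw [← ENNReal.toReal_one]
            exact ENNReal.toReal_strict_mono ENNReal.one_ne_top h3
    simp only [Function.mem_support, hf]
    exact ne_of_gt (mul_pos hGpos (by linarith))
  have hdiff : μ (Ioi t \ {y | μ (Ici y) = 0}) = μ (Ioi t) :=
    measure_diff_null (null_G_zero μ)
  have hIoipos : μ (Ioi t) ≠ 0 := by
    rw [← Set.compl_Iic, measure_compl measurableSet_Iic (measure_ne_top μ _), measure_univ]
    intro h0
    exact ht1 (le_antisymm prob_le_one (tsub_eq_zero_iff_le.1 h0))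
  calc (0:ENNReal) < μ (Ioi t \ {y | μ (Ici y) = 0}) := by
        rw [hdiff]; exact pos_iff_ne_zero.2 hIoipos
    _ ≤ μ (Function.support f) := measure_mono hsub
end Aux4

section Aux5

set_option maxHeartbeats 1000000 in
lemma numer_pos (μ : Measure ℝ) [IsProbabilityMeasure μ] (hnc : ∀ a : ℝ, μ {a}ᶜ ≠ 0) :
    0 < (∫ y₁, ∫ y₂, (min (μ (Iic y₁)).toReal (μ (Iic y₂)).toReal) ^ 2 ∂μ ∂μ
      - 2 * ∫ y₁, ∫ y₂, ∫ y₃, (min (μ (Iic y₁)).toReal (μ (Iic y₂)).toReal)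
          * (min (μ (Iic y₁)).toReal (μ (Iic y₃)).toReal) ∂μ ∂μ ∂μ
      + (∫ y₁, ∫ y₂, (min (μ (Iic y₁)).toReal (μ (Iic y₂)).toReal) ∂μ ∂μ) ^ 2) := by
  set F : ℝ → ℝ := fun y => (μ (Iic y)).toReal with hF
  have hFmono : Monotone F := Fmono μ
  have hFmeas : Measurable F := hFmono.measurable
  have hF0 : ∀ y, 0 ≤ F y := fun y => ENNReal.toReal_nonneg
  have hF1 : ∀ y, F y ≤ 1 := fun y =>
    ENNReal.toReal_le_of_le_ofReal zero_le_one (by simpa using prob_le_one)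
  -- the kernel φ and its slice integrals
  have hφmeas : ∀ y1, Measurable (fun y2 => min (F y1) (F y2)) :=
    fun y1 => measurable_const.min hFmeas
  have hφ0 : ∀ y1 y2, 0 ≤ min (F y1) (F y2) := fun y1 y2 => le_min (hF0 y1) (hF0 y2)
  have hφ1 : ∀ y1 y2, min (F y1) (F y2) ≤ 1 := fun y1 y2 => (min_le_left _ _).trans (hF1 y1)
  have habs : ∀ {x : ℝ}, 0 ≤ x → x ≤ 1 → |x| ≤ 1 := fun h0 h1 => abs_le.2 ⟨by linarith, h1⟩
  have hφint : ∀ y1, Integrable (fun y2 => min (F y1) (F y2)) μ := fun y1 =>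
    integrable_of_bdd (hφmeas y1).aestronglyMeasurable (C := 1)
      (fun y2 => habs (hφ0 y1 y2) (hφ1 y1 y2))
  set h : ℝ → ℝ := fun y => ∫ y', min (F y) (F y') ∂μ with hh
  have hhmono : Monotone h := by
    intro a b hab
    exact integral_mono (hφint a) (hφint b) (fun y => min_le_min (hFmono hab) le_rfl)
  have hhmeas : Measurable h := hhmono.measurable
  have hh0 : ∀ y, 0 ≤ h y := fun y => integral_nonneg (fun y' => hφ0 y y')
  have hh1 : ∀ y, h y ≤ 1 := by
    intro y
    calc h y ≤ ∫ _, (1:ℝ) ∂μ := integral_mono (hφint y) (integrable_const 1) (fun y' => hφ1 y y')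
      _ = 1 := by simp
  have hhint : Integrable h μ :=
    integrable_of_bdd hhmeas.aestronglyMeasurable (C := 1) (fun y => habs (hh0 y) (hh1 y))
  set c : ℝ := ∫ y, h y ∂μ with hc
  have hc0 : 0 ≤ c := integral_nonneg hh0
  have hc1 : c ≤ 1 := by
    calc c ≤ ∫ _, (1:ℝ) ∂μ := integral_mono hhint (integrable_const 1) hh1
      _ = 1 := by simp
  set Q : ℝ := ∫ y, h y * h y ∂μ with hQ
  -- triple integral reduces to Q
  have htriple : (∫ y₁, ∫ y₂, ∫ y₃, (min (F y₁) (F y₂)) * (min (F y₁) (F y₃)) ∂μ ∂μ ∂μ) = Q := by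
    rw [hQ]
    congr 1
    funext y1
    have inner3 : ∀ y2, (∫ y₃, (min (F y1) (F y2)) * (min (F y1) (F y₃)) ∂μ)
        = min (F y1) (F y2) * h y1 := fun y2 => integral_const_mul _ _
    calc (∫ y₂, ∫ y₃, (min (F y1) (F y₂)) * (min (F y1) (F y₃)) ∂μ ∂μ)
        = ∫ y₂, min (F y1) (F y₂) * h y1 ∂μ := by
          congr 1; funext y2; exact inner3 y2
      _ = (∫ y₂, min (F y1) (F y₂) ∂μ) * h y1 := integral_mul_const _ _
      _ = h y1 * h y1 := rfl
  -- s and w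
  set s : ℝ → ℝ := fun y => ∫ y', (min (F y) (F y')) ^ 2 ∂μ with hs
  have hsq_meas : ∀ y1, Measurable (fun y2 => (min (F y1) (F y2)) ^ 2) :=
    fun y1 => (hφmeas y1).pow measurable_const
  have hsqint : ∀ y1, Integrable (fun y2 => (min (F y1) (F y2)) ^ 2) μ := fun y1 =>
    integrable_of_bdd (hsq_meas y1).aestronglyMeasurable (C := 1) (fun y2 => by
      have := hφ0 y1 y2; have := hφ1 y1 y2
      rw [abs_of_nonneg (by positivity)]; nlinarith)
  have hsmono : Monotone s := by
    intro a b hab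
    refine integral_mono (hsqint a) (hsqint b) (fun y => ?_)
    have h1 : min (F a) (F y) ≤ min (F b) (F y) := min_le_min (hFmono hab) le_rfl
    have := hφ0 a y
    nlinarith
  have hsmeas : Measurable s := hsmono.measurable
  have hs0 : ∀ y, 0 ≤ s y := fun y => integral_nonneg (fun y' => sq_nonneg _)
  have hs1 : ∀ y, s y ≤ 1 := by
    intro y
    calc s y ≤ ∫ _, (1:ℝ) ∂μ := integral_mono (hsqint y) (integrable_const 1) (fun y' => by
          have := hφ0 y y'; have := hφ1 y y'; nlinarith)
      _ = 1 := by simp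
  set w : ℝ → ℝ := fun y => ∫ y', min (F y) (F y') * h y' ∂μ with hw
  have hwint_sl : ∀ y1, Integrable (fun y2 => min (F y1) (F y2) * h y2) μ := fun y1 =>
    integrable_of_bdd ((hφmeas y1).mul hhmeas).aestronglyMeasurable (C := 1) (fun y2 => by
      have := hφ0 y1 y2; have := hφ1 y1 y2; have := hh0 y2; have := hh1 y2
      rw [abs_of_nonneg (by positivity)]; nlinarith)
  have hwmono : Monotone w := by
    intro a b hab
    refine integral_mono (hwint_sl a) (hwint_sl b) (fun y => ?_)
    exact mul_le_mul_of_nonneg_right (min_le_min (hFmono hab) le_rfl) (hh0 y)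
  have hwmeas : Measurable w := hwmono.measurable
  have hw0 : ∀ y, 0 ≤ w y := fun y => integral_nonneg (fun y' => mul_nonneg (hφ0 y y') (hh0 y'))
  have hw1 : ∀ y, w y ≤ 1 := by
    intro y
    calc w y ≤ ∫ _, (1:ℝ) ∂μ := integral_mono (hwint_sl y) (integrable_const 1) (fun y' => by
          have := hφ0 y y'; have := hφ1 y y'; have := hh0 y'; have := hh1 y'; nlinarith)
      _ = 1 := by simp
  -- ∫ w = Q  via Fubini swap
  have hwQ : ∫ y, w y ∂μ = Q := by
    have hswap : ∫ y₁, ∫ y₂, min (F y₁) (F y₂) * h y₂ ∂μ ∂μ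
        = ∫ y₂, ∫ y₁, min (F y₁) (F y₂) * h y₂ ∂μ ∂μ := by
      apply integral_integral_swap
      refine integrable_of_bdd ?_ (C := 1) ?_
      · exact (((hFmeas.comp measurable_fst).min (hFmeas.comp measurable_snd)).mul
          (hhmeas.comp measurable_snd)).aestronglyMeasurable
      · rintro ⟨y1, y2⟩
        simp only [Function.uncurry_apply_pair]
        have := hφ0 y1 y2; have := hφ1 y1 y2; have := hh0 y2; have := hh1 y2
        rw [abs_of_nonneg (by positivity)]; nlinarith
    calc ∫ y, w y ∂μ = ∫ y₂, ∫ y₁, min (F y₁) (F y₂) * h y₂ ∂μ ∂μ := hswap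
      _ = ∫ y₂, h y₂ * h y₂ ∂μ := by
          congr 1; funext y2
          calc ∫ y₁, min (F y₁) (F y2) * h y2 ∂μ
              = (∫ y₁, min (F y₁) (F y2) ∂μ) * h y2 := integral_mul_const _ _
            _ = h y2 * h y2 := by
                congr 1
                simp only [hh]
                congr 1; funext y1; rw [min_comm]
      _ = Q := by rw [hQ]
  have hQ0 : 0 ≤ Q := integral_nonneg (fun y => mul_nonneg (hh0 y) (hh0 y))
  have hQ1 : Q ≤ 1 := by
    have : Q ≤ ∫ _, (1:ℝ) ∂μ := by
      refine integral_mono ?_ (integrable_const 1) (fun y => by nlinarith [hh0 y, hh1 y])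
      exact integrable_of_bdd (hhmeas.mul hhmeas).aestronglyMeasurable (C := 1) (fun y => by
        have := hh0 y; have := hh1 y
        rw [abs_of_nonneg (by positivity)]; nlinarith)
    simpa using this
  have hhhint : Integrable (fun y => h y * h y) μ :=
    integrable_of_bdd (hhmeas.mul hhmeas).aestronglyMeasurable (C := 1) (fun y => by
      have := hh0 y; have := hh1 y
      rw [abs_of_nonneg (by positivity)]; nlinarith)
  -- slice identity
  have hslice : ∀ y1, (∫ y2, (min (F y1) (F y2) - h y1 - h y2 + c)^2 ∂μ)
      = s y1 - 2 * w y1 + Q - (h y1 - c)^2 := by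
    intro y1
    set B := h y1 - c with hB
    have hfun : (fun y2 => (min (F y1) (F y2) - h y1 - h y2 + c)^2)
        = fun y2 => ((min (F y1) (F y2))^2 + (-2) * (min (F y1) (F y2) * h y2) + h y2 * h y2)
          + ((-(2*B)) * min (F y1) (F y2) + ((2*B) * h y2 + B^2)) := by
      funext y2; rw [hB]; ring
    have i2 : Integrable (fun y2 => (-2 : ℝ) * (min (F y1) (F y2) * h y2)) μ :=
      (hwint_sl y1).const_mul (-2)
    have i4 : Integrable (fun y2 => (-(2*B)) * min (F y1) (F y2)) μ :=
      (hφint y1).const_mul _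
    have i5 : Integrable (fun y2 => (2*B) * h y2) μ := hhint.const_mul _
    have i6 : Integrable (fun _ : ℝ => B^2) μ := integrable_const _
    have e1 : (∫ y2, min (F y1) (F y2) ∂μ) = h y1 := rfl
    have e2 : (∫ y, h y ∂μ) = c := rfl
    have e3 : (∫ y, h y * h y ∂μ) = Q := rfl
    have e4 : (∫ y2, min (F y1) (F y2) * h y2 ∂μ) = w y1 := rfl
    have e5 : (∫ y2, (min (F y1) (F y2))^2 ∂μ) = s y1 := rfl
    have S1 : (∫ y2, (((min (F y1) (F y2))^2 + (-2) * (min (F y1) (F y2) * h y2) + h y2 * h y2)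
          + ((-(2*B)) * min (F y1) (F y2) + ((2*B) * h y2 + B^2))) ∂μ)
        = (∫ y2, ((min (F y1) (F y2))^2 + (-2) * (min (F y1) (F y2) * h y2) + h y2 * h y2) ∂μ)
          + (∫ y2, ((-(2*B)) * min (F y1) (F y2) + ((2*B) * h y2 + B^2)) ∂μ) :=
      integral_add (((hsqint y1).add i2).add hhhint) (i4.add (i5.add i6))
    have S2 : (∫ y2, ((min (F y1) (F y2))^2 + (-2) * (min (F y1) (F y2) * h y2) + h y2 * h y2) ∂μ)
        = (∫ y2, ((min (F y1) (F y2))^2 + (-2) * (min (F y1) (F y2) * h y2)) ∂μ)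
          + (∫ y2, h y2 * h y2 ∂μ) :=
      integral_add ((hsqint y1).add i2) hhhint
    have S3 : (∫ y2, ((min (F y1) (F y2))^2 + (-2) * (min (F y1) (F y2) * h y2)) ∂μ)
        = (∫ y2, (min (F y1) (F y2))^2 ∂μ) + (∫ y2, (-2:ℝ) * (min (F y1) (F y2) * h y2) ∂μ) :=
      integral_add (hsqint y1) i2
    have S4 : (∫ y2, ((-(2*B)) * min (F y1) (F y2) + ((2*B) * h y2 + B^2)) ∂μ)
        = (∫ y2, (-(2*B)) * min (F y1) (F y2) ∂μ) + (∫ y2, ((2*B) * h y2 + B^2) ∂μ) :=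
      integral_add i4 (i5.add i6)
    have S5 : (∫ y2, ((2*B) * h y2 + B^2) ∂μ)
        = (∫ y2, (2*B) * h y2 ∂μ) + (∫ _, B^2 ∂μ) := integral_add i5 i6
    have M1 : (∫ y2, (-2:ℝ) * (min (F y1) (F y2) * h y2) ∂μ) = (-2) * w y1 :=
      integral_const_mul _ _
    have M2 : (∫ y2, (-(2*B)) * min (F y1) (F y2) ∂μ) = (-(2*B)) * h y1 :=
      integral_const_mul _ _
    have M3 : (∫ y2, (2*B) * h y2 ∂μ) = (2*B) * c := integral_const_mul _ _
    have M4 : (∫ _ : ℝ, B^2 ∂μ) = B^2 := by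
      rw [integral_const]; simp [measure_univ]
    rw [hfun, S1, S2, S3, S4, S5, M1, M2, M3, M4, e5]
    rw [e3]
    rw [hB]; ring
  -- integral of the slice formula
  have hsint : Integrable s μ :=
    integrable_of_bdd hsmeas.aestronglyMeasurable (C := 1) (fun y => habs (hs0 y) (hs1 y))
  have hwint : Integrable w μ :=
    integrable_of_bdd hwmeas.aestronglyMeasurable (C := 1) (fun y => habs (hw0 y) (hw1 y))
  have hNint : (∫ y1, (s y1 - 2 * w y1 + Q - (h y1 - c)^2) ∂μ)
      = (∫ y, s y ∂μ) - 2 * Q + c^2 := by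
    have hfun : (fun y1 => s y1 - 2 * w y1 + Q - (h y1 - c)^2)
        = fun y1 => (s y1 + (-2) * w y1) + ((-1) * (h y1 * h y1) + ((2*c) * h y1 + (Q - c^2))) := by
      funext y1; ring
    have i2 : Integrable (fun y1 => (-2:ℝ) * w y1) μ := hwint.const_mul _
    have i3 : Integrable (fun y1 => (-1:ℝ) * (h y1 * h y1)) μ := hhhint.const_mul _
    have i4 : Integrable (fun y1 => (2*c) * h y1) μ := hhint.const_mul _
    have i5 : Integrable (fun _ : ℝ => Q - c^2) μ := integrable_const _
    have e2 : (∫ y, h y ∂μ) = c := rfl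
    have e3 : (∫ y, h y * h y ∂μ) = Q := rfl
    have e4 : (∫ y, w y ∂μ) = Q := hwQ
    have S1 : (∫ y1, ((s y1 + (-2) * w y1) + ((-1) * (h y1 * h y1) + ((2*c) * h y1 + (Q - c^2)))) ∂μ)
        = (∫ y1, (s y1 + (-2) * w y1) ∂μ)
          + (∫ y1, ((-1) * (h y1 * h y1) + ((2*c) * h y1 + (Q - c^2))) ∂μ) :=
      integral_add (hsint.add i2) (i3.add (i4.add i5))
    have S2 : (∫ y1, (s y1 + (-2) * w y1) ∂μ)
        = (∫ y1, s y1 ∂μ) + (∫ y1, (-2:ℝ) * w y1 ∂μ) := integral_add hsint i2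
    have S3 : (∫ y1, ((-1) * (h y1 * h y1) + ((2*c) * h y1 + (Q - c^2))) ∂μ)
        = (∫ y1, (-1:ℝ) * (h y1 * h y1) ∂μ) + (∫ y1, ((2*c) * h y1 + (Q - c^2)) ∂μ) :=
      integral_add i3 (i4.add i5)
    have S4 : (∫ y1, ((2*c) * h y1 + (Q - c^2)) ∂μ)
        = (∫ y1, (2*c) * h y1 ∂μ) + (∫ _, (Q - c^2) ∂μ) := integral_add i4 i5
    have M1 : (∫ y1, (-2:ℝ) * w y1 ∂μ) = (-2) * ∫ y1, w y1 ∂μ := integral_const_mul _ _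
    have M2 : (∫ y1, (-1:ℝ) * (h y1 * h y1) ∂μ) = (-1) * Q := integral_const_mul _ _
    have M3 : (∫ y1, (2*c) * h y1 ∂μ) = (2*c) * c := integral_const_mul _ _
    have M4 : (∫ _ : ℝ, (Q - c^2) ∂μ) = Q - c^2 := by
      rw [integral_const]; simp [measure_univ]
    rw [hfun, S1, S2, S3, S4, M1, M2, M3, M4, e4]
    ring
  -- reduce the goal to positivity of N
  rw [htriple]
  show 0 < (∫ y, s y ∂μ) - 2 * Q + c^2
  -- N is the integral of the nonneg slice integrals
  have hNval : (∫ y, s y ∂μ) - 2 * Q + c^2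
      = ∫ y1, (∫ y2, (min (F y1) (F y2) - h y1 - h y2 + c)^2 ∂μ) ∂μ := by
    rw [← hNint]
    congr 1
    funext y1
    exact (hslice y1).symm
  have hfI_nonneg : ∀ y1, 0 ≤ s y1 - 2 * w y1 + Q - (h y1 - c)^2 := fun y1 => by
    rw [← hslice y1]
    exact integral_nonneg (fun y2 => sq_nonneg _)
  rcases lt_or_ge 0 ((∫ y, s y ∂μ) - 2 * Q + c^2) with hpos | hle
  · exact hpos
  exfalso
  have hN0 : (∫ y, s y ∂μ) - 2 * Q + c^2 = 0 := le_antisymm hle (by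
    rw [hNval]
    exact integral_nonneg (fun y1 => integral_nonneg (fun y2 => sq_nonneg _)))
  -- the slice formula vanishes a.e.
  have hfIint : Integrable (fun y1 => s y1 - 2 * w y1 + Q - (h y1 - c)^2) μ := by
    refine integrable_of_bdd ?_ (C := 4) ?_
    · exact (((hsmeas.sub (hwmeas.const_mul 2)).add measurable_const).sub
        ((hhmeas.sub measurable_const).pow measurable_const)).aestronglyMeasurable
    · intro y
      have habs1 : |h y - c| ≤ 1 := abs_le.2 ⟨by linarith [hh0 y, hc1], by linarith [hh1 y, hc0]⟩
      have h1 : (h y - c)^2 ≤ 1 := by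
        calc (h y - c)^2 = |h y - c|^2 := (sq_abs _).symm
          _ ≤ 1^2 := pow_le_pow_left₀ (abs_nonneg _) habs1 2
          _ = 1 := one_pow 2
      have h2 : 0 ≤ (h y - c)^2 := sq_nonneg _
      rw [abs_le]
      constructor <;> linarith [hs0 y, hs1 y, hw0 y, hw1 y, hQ0, hQ1]
  have hfI0 : ∀ᵐ y1 ∂μ, s y1 - 2 * w y1 + Q - (h y1 - c)^2 = 0 := by
    have hint0 : ∫ y1, (s y1 - 2 * w y1 + Q - (h y1 - c)^2) ∂μ = 0 := by
      rw [hNint]; exact hN0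
    have := (integral_eq_zero_iff_of_nonneg hfI_nonneg hfIint).1 hint0
    filter_upwards [this] with y1 hy1 using hy1
  have HQrel : ∀ᵐ y1 ∂μ, ∀ᵐ y2 ∂μ, min (F y1) (F y2) = h y1 + h y2 - c := by
    filter_upwards [hfI0] with y1 hy1
    have hz : ∫ y2, (min (F y1) (F y2) - h y1 - h y2 + c)^2 ∂μ = 0 := by
      rw [hslice y1]; exact hy1
    have hintg : Integrable (fun y2 => (min (F y1) (F y2) - h y1 - h y2 + c)^2) μ := by
      refine integrable_of_bdd ?_ (C := 16) ?_
      · exact (((((hφmeas y1).sub measurable_const).sub hhmeas).add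
          measurable_const).pow measurable_const).aestronglyMeasurable
      · intro y2
        have habs2 : |min (F y1) (F y2) - h y1 - h y2 + c| ≤ 4 := by
          rw [abs_le]
          constructor <;>
            linarith [hφ0 y1 y2, hφ1 y1 y2, hh0 y1, hh1 y1, hh0 y2, hh1 y2, hc0, hc1]
        calc |(min (F y1) (F y2) - h y1 - h y2 + c)^2|
            = |min (F y1) (F y2) - h y1 - h y2 + c|^2 := by
              rw [abs_of_nonneg (sq_nonneg _), sq_abs]
          _ ≤ 4^2 := pow_le_pow_left₀ (abs_nonneg _) habs2 2
          _ ≤ 16 := by norm_num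
    have hae := (integral_eq_zero_iff_of_nonneg (fun y2 => sq_nonneg _) hintg).1 hz
    filter_upwards [hae] with y2 hy2
    have hzz : min (F y1) (F y2) - h y1 - h y2 + c = 0 :=
      (pow_eq_zero_iff (two_ne_zero)).1 hy2
    linarith
  -- F is not a.e. constant
  have hFnae : ¬ ∃ m : ℝ, ∀ᵐ y ∂μ, F y = m := by
    rintro ⟨m, hm⟩
    obtain ⟨a, ha⟩ := pointmass_of_ae_constF μ (m := m) (by
      have := hm
      rw [ae_iff] at this
      simpa [compl_setOf] using this)
    exact hnc a ha
  -- find a level r splitting F with positive mass on both sides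
  set I : Set ℝ := {r | μ {y | F y ≤ r} = 0} with hI
  have hIne : I.Nonempty := by
    refine ⟨-1, ?_⟩
    have : {y | F y ≤ -1} = ∅ := by
      ext y; simp only [mem_setOf_eq, mem_empty_iff_false, iff_false, not_le]
      linarith [hF0 y]
    simp [hI, this]
  have hIbdd : BddAbove I := by
    refine ⟨1, fun r hr => ?_⟩
    by_contra hr1
    push_neg at hr1
    have : {y | F y ≤ r} = univ := by
      ext y; simp only [mem_setOf_eq, mem_univ, iff_true]
      linarith [hF1 y]
    rw [hI] at hr
    simp only [mem_setOf_eq] at hr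
    rw [this, measure_univ] at hr
    simp at hr
  set m : ℝ := sSup I with hm
  have hlow : μ {y | F y < m} = 0 := by
    have hcover : {y | F y < m} ⊆ ⋃ n : ℕ, {y | F y ≤ m - 1/(n+1)} := by
      intro y hy
      simp only [mem_setOf_eq] at hy
      obtain ⟨n, hn⟩ := exists_nat_one_div_lt (sub_pos.2 hy)
      refine mem_iUnion.2 ⟨n, ?_⟩
      simp only [mem_setOf_eq]
      push_cast at hn ⊢
      linarith
    refine measure_mono_null hcover (measure_iUnion_null fun n => ?_)
    have hlt : m - 1/(n+1) < m := by
      have : (0:ℝ) < 1/(n+1) := by positivity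
      linarith
    obtain ⟨r, hr, hrlt⟩ := exists_lt_of_lt_csSup hIne hlt
    exact measure_mono_null (fun y hy => le_trans hy hrlt.le) hr
  have hhigh : μ {y | m < F y} ≠ 0 := by
    intro h0
    apply hFnae
    refine ⟨m, ?_⟩
    rw [ae_iff]
    refine measure_mono_null (fun y hy => ?_) (measure_union_null hlow h0)
    simp only [mem_setOf_eq] at hy ⊢
    rcases lt_trichotomy (F y) m with h | h | h
    · exact Or.inl h
    · exact absurd h hy
    · exact Or.inr h
  have hexn : ∃ n : ℕ, μ {y | m + 1/(n+1) < F y} ≠ 0 := by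
    by_contra hall
    push_neg at hall
    apply hhigh
    have hcover : {y | m < F y} ⊆ ⋃ n : ℕ, {y | m + 1/(n+1) < F y} := by
      intro y hy
      simp only [mem_setOf_eq] at hy
      obtain ⟨n, hn⟩ := exists_nat_one_div_lt (sub_pos.2 hy)
      refine mem_iUnion.2 ⟨n, ?_⟩
      simp only [mem_setOf_eq]
      push_cast at hn ⊢
      linarith
    exact measure_mono_null hcover (measure_iUnion_null hall)
  obtain ⟨n, hn⟩ := hexn
  set r : ℝ := m + 1/(n+1) with hr
  have hrm : m < r := by
    rw [hr]; exact lt_add_of_pos_right m (by positivity)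
  have hA : μ {y | F y ≤ r} ≠ 0 := by
    intro h0
    have : r ∈ I := h0
    exact absurd (le_csSup hIbdd this) (not_le.2 hrm)
  have hB : μ {y | r < F y} ≠ 0 := hn
  -- choose four generic points
  set A : Set ℝ := {y | F y ≤ r} with hAdef
  set Bs : Set ℝ := {y | r < F y} with hBdef
  have hAmeas : MeasurableSet A := hFmeas measurableSet_Iic
  have hBmeas : MeasurableSet Bs := hFmeas measurableSet_Ioi
  have hres : ∀ S : Set ℝ, μ S ≠ 0 → μ.restrict S ≠ 0 := by
    intro S hS h0
    apply hS
    rw [← Measure.restrict_apply_univ, h0]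
    simp
  haveI hA_ne : (ae (μ.restrict A)).NeBot := ae_neBot.2 (hres A hA)
  haveI hB_ne : (ae (μ.restrict Bs)).NeBot := ae_neBot.2 (hres Bs hB)
  obtain ⟨y1, hy1A, hy1Q⟩ := ((ae_restrict_mem hAmeas).and (ae_restrict_of_ae HQrel)).exists
  obtain ⟨y2, hy2A, hy2Q, hQ12⟩ := ((ae_restrict_mem hAmeas).and
    ((ae_restrict_of_ae HQrel).and (ae_restrict_of_ae hy1Q))).exists
  obtain ⟨y3, hy3B, hy3Q, hQ13, hQ23⟩ := ((ae_restrict_mem hBmeas).and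
    ((ae_restrict_of_ae HQrel).and
      ((ae_restrict_of_ae hy1Q).and (ae_restrict_of_ae hy2Q)))).exists
  obtain ⟨y4, hy4B, hQ14, hQ34⟩ := ((ae_restrict_mem hBmeas).and
    ((ae_restrict_of_ae hy1Q).and (ae_restrict_of_ae hy3Q))).exists
  have hFy1 : F y1 ≤ r := hy1A
  have hFy2 : F y2 ≤ r := hy2A
  have hFy3 : r < F y3 := hy3B
  have hFy4 : r < F y4 := hy4B
  -- derive the contradiction
  have e13 : F y1 = h y1 + h y3 - c := by
    have := hQ13
    rwa [min_eq_left (le_of_lt (lt_of_le_of_lt hFy1 hFy3))] at this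
  have e14 : F y1 = h y1 + h y4 - c := by
    have := hQ14
    rwa [min_eq_left (le_of_lt (lt_of_le_of_lt hFy1 hFy4))] at this
  have e23 : F y2 = h y2 + h y3 - c := by
    have := hQ23
    rwa [min_eq_left (le_of_lt (lt_of_le_of_lt hFy2 hFy3))] at this
  have h34 : h y4 = h y3 := by linarith
  have hminF : min (F y1) (F y2) = min (h y1) (h y2) + (h y3 - c) := by
    rw [e13, e23]
    rw [show h y1 + h y3 - c = h y1 + (h y3 - c) by ring,
      show h y2 + h y3 - c = h y2 + (h y3 - c) by ring]
    exact min_add_add_right _ _ _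
  have hminh : min (h y1) (h y2) = h y1 + h y2 - h y3 := by
    rw [hminF] at hQ12
    linarith
  have hmaxh : max (h y1) (h y2) = h y3 := by
    have := min_add_max (h y1) (h y2)
    linarith
  have hmaxF : max (F y1) (F y2) = h y3 + h y3 - c := by
    rw [e13, e23]
    rw [show h y1 + h y3 - c = h y1 + (h y3 - c) by ring,
      show h y2 + h y3 - c = h y2 + (h y3 - c) by ring]
    rw [max_add_add_right, hmaxh]
    ring
  have hmin34 : min (F y3) (F y4) = h y3 + h y3 - c := by
    rw [hQ34, h34]
  have hub : max (F y1) (F y2) ≤ r := max_le hFy1 hFy2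
  have hlb : r < min (F y3) (F y4) := lt_min hFy3 hFy4
  rw [hmaxF] at hub
  rw [hmin34] at hlb
  linarith
end Aux5

/-- If `Y` is not almost surely a constant, then
`E[G(Y)(1−G(Y))] > 0` (so `τ²` is well-defined) and `τ² > 0`. -/
theorem tauSq_pos
    {Ω : Type*} [MeasurableSpace Ω] (P : Measure Ω) [IsProbabilityMeasure P]
    (Y : Ω → ℝ) (hY : Measurable Y)
    (hYnonconst : ¬ ∃ c : ℝ, ∀ᵐ ω ∂P, Y ω = c) :
    0 < ∫ y, survG P Y y * (1 - survG P Y y) ∂(Measure.map Y P) ∧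
    0 < tauSq P Y := by
  set μ := Measure.map Y P with hμ
  haveI : IsProbabilityMeasure μ := Measure.isProbabilityMeasure_map hY.aemeasurable
  have hnc : ∀ a : ℝ, μ {a}ᶜ ≠ 0 := by
    intro a ha
    apply hYnonconst
    refine ⟨a, ?_⟩
    rw [ae_iff]
    have hP : P {ω | ¬ Y ω = a} = μ {a}ᶜ := by
      rw [hμ, Measure.map_apply hY (measurableSet_singleton a).compl]
      congr 1
    rw [hP, ha]
  have hden : 0 < ∫ y, (μ (Ici y)).toReal * (1 - (μ (Ici y)).toReal) ∂μ := denom_pos μ hnc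
  have hdenG : 0 < ∫ y, survG P Y y * (1 - survG P Y y) ∂μ := hden
  refine ⟨hdenG, ?_⟩
  have hnum := numer_pos μ hnc
  unfold tauSq phiF cdfF survG
  exact div_pos hnum (pow_pos hdenG 2)
end

section
/- Let Y be a real-valued random variable whose law is atomless (i.e., Y has a continuous distribution). Then τ² = 2/5. -/
open MeasureTheory ProbabilityTheory Filter Set
open scoped NNReal Topology

section Aux
variable (μ : Measure ℝ) [IsProbabilityMeasure μ] [NullSingletonClass μ]

lemma cdf_cont : Continuous (cdf μ) := by
  rw [continuous_iff_continuousAt]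
  intro a
  have h1 : Function.leftLim (cdf μ) a = cdf μ a := by
    have h := (cdf μ).measure_singleton a
    rw [measure_cdf, measure_singleton] at h
    have h2 : cdf μ a - Function.leftLim (cdf μ) a ≤ 0 := by
      by_contra hc
      push_neg at hc
      exact (ENNReal.ofReal_pos.2 hc).ne' h.symm
    have h3 : Function.leftLim (cdf μ) a ≤ cdf μ a :=
      (monotone_cdf μ).leftLim_le le_rfl
    linarith
  refine continuousAt_iff_continuous_left'_right'.2 ⟨?_, ?_⟩
  · exact (monotone_cdf μ).continuousWithinAt_Iio_iff_leftLim_eq.2 h1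
  · exact ((cdf μ).right_continuous a).mono Ioi_subset_Ici_self

lemma measure_cdf_le {s : ℝ} (hs : s < 1) :
    μ {y | cdf μ y ≤ s} = ENNReal.ofReal s := by
  by_cases hne : {y | cdf μ y ≤ s}.Nonempty
  · have hab : ∀ᶠ y in atTop, s < cdf μ y :=
      (tendsto_cdf_atTop μ).eventually_const_lt hs
    obtain ⟨B, hB⟩ := hab.exists_forall_of_atTop
    have hbdd : BddAbove {y | cdf μ y ≤ s} := by
      refine ⟨B, fun y hy => ?_⟩
      by_contra hc
      push_neg at hc
      exact absurd hy (not_le.2 (hB y hc.le))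
    have hclosed : IsClosed {y | cdf μ y ≤ s} :=
      isClosed_le (cdf_cont μ) continuous_const
    set t₀ := sSup {y | cdf μ y ≤ s} with ht₀
    have hmem : t₀ ∈ {y | cdf μ y ≤ s} := hclosed.csSup_mem hne hbdd
    have hset : {y | cdf μ y ≤ s} = Iic t₀ := by
      ext y
      constructor
      · exact fun hy => le_csSup hbdd hy
      · exact fun hy => le_trans (monotone_cdf μ hy) hmem
    have hts : cdf μ t₀ = s := by
      refine le_antisymm hmem ?_
      by_contra hc
      push_neg at hc
      obtain ⟨T, hT1, hT2⟩ : ∃ T, t₀ ≤ T ∧ s < cdf μ T := ⟨max B t₀, le_max_right _ _,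
        hB _ (le_max_left _ _)⟩
      obtain ⟨t, ht, htv⟩ := intermediate_value_Icc hT1 (cdf_cont μ).continuousOn
        (⟨hc.le, hT2.le⟩ : s ∈ Icc (cdf μ t₀) (cdf μ T))
      have : t ≤ t₀ := le_csSup hbdd (le_of_eq htv)
      have : cdf μ t ≤ cdf μ t₀ := monotone_cdf μ this
      rw [htv] at this
      linarith
    rw [hset, ← ofReal_cdf μ t₀, hts]
  · rw [not_nonempty_iff_eq_empty] at hne
    rw [hne, measure_empty]
    have hs0 : s ≤ 0 := by
      by_contra hc
      push_neg at hc
      have : ∀ᶠ y in atBot, cdf μ y < s := (tendsto_cdf_atBot μ).eventually_lt_const hc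
      obtain ⟨B, hB⟩ := this.exists_forall_of_atBot
      have : B ∈ {y | cdf μ y ≤ s} := (hB B le_rfl).le
      rw [hne] at this
      exact this
    rw [ENNReal.ofReal_eq_zero.2 hs0]

lemma map_cdf : Measure.map (cdf μ) μ = volume.restrict (Ioc (0:ℝ) 1) := by
  have hmeas : Measurable (cdf μ) := (cdf_cont μ).measurable
  have : IsProbabilityMeasure (Measure.map (cdf μ) μ) :=
    Measure.isProbabilityMeasure_map hmeas.aemeasurable
  refine Measure.ext_of_Iic _ _ fun s => ?_
  rw [Measure.map_apply hmeas measurableSet_Iic, Measure.restrict_apply measurableSet_Iic,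
    inter_comm, Ioc_inter_Iic, Real.volume_Ioc]
  by_cases hs : s < 1
  · rw [min_eq_right hs.le]
    exact (measure_cdf_le μ hs).trans (by rw [sub_zero])
  · push_neg at hs
    rw [min_eq_left hs]
    have : (cdf μ) ⁻¹' (Iic s) = univ := by
      ext y; simp only [mem_preimage, mem_Iic, mem_univ, iff_true]
      exact (cdf_le_one μ y).trans hs
    rw [this, measure_univ]
    norm_num

end Aux

lemma imin {a : ℝ} (h0 : 0 ≤ a) (h1 : a ≤ 1) :
    ∫ v in Ioc (0:ℝ) 1, min a v = a - a^2/2 := by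
  rw [← intervalIntegral.integral_of_le (by norm_num : (0:ℝ) ≤ 1)]
  have hc : Continuous fun v : ℝ => min a v := continuous_const.min continuous_id
  rw [← intervalIntegral.integral_add_adjacent_intervals (b := a)
    (hc.intervalIntegrable _ _) (hc.intervalIntegrable _ _)]
  have e1 : ∫ v in (0:ℝ)..a, min a v = ∫ v in (0:ℝ)..a, v := by
    refine intervalIntegral.integral_congr fun v hv => ?_
    rw [uIcc_of_le h0] at hv
    exact min_eq_right hv.2
  have e2 : ∫ v in a..(1:ℝ), min a v = ∫ v in a..(1:ℝ), a := by
    refine intervalIntegral.integral_congr fun v hv => ?_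
    rw [uIcc_of_le h1] at hv
    exact min_eq_left hv.1
  rw [e1, e2, integral_id, intervalIntegral.integral_const, smul_eq_mul]
  ring

lemma imin2 {a : ℝ} (h0 : 0 ≤ a) (h1 : a ≤ 1) :
    ∫ v in Ioc (0:ℝ) 1, min a v ^ 2 = a^2 - 2*a^3/3 := by
  rw [← intervalIntegral.integral_of_le (by norm_num : (0:ℝ) ≤ 1)]
  have hc : Continuous fun v : ℝ => min a v ^ 2 :=
    (continuous_const.min continuous_id).pow 2
  rw [← intervalIntegral.integral_add_adjacent_intervals (b := a)
    (hc.intervalIntegrable _ _) (hc.intervalIntegrable _ _)]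
  have e1 : ∫ v in (0:ℝ)..a, min a v ^ 2 = ∫ v in (0:ℝ)..a, v ^ 2 := by
    refine intervalIntegral.integral_congr fun v hv => ?_
    rw [uIcc_of_le h0] at hv
    rw [min_eq_right hv.2]
  have e2 : ∫ v in a..(1:ℝ), min a v ^ 2 = ∫ v in a..(1:ℝ), a ^ 2 := by
    refine intervalIntegral.integral_congr fun v hv => ?_
    rw [uIcc_of_le h1] at hv
    rw [min_eq_left hv.1]
  rw [e1, e2, integral_pow, intervalIntegral.integral_const, smul_eq_mul]
  norm_num
  ring

lemma J1 : ∫ u in Ioc (0:ℝ) 1, (u^2 - 2*u^3/3) = 1/6 := by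
  rw [← intervalIntegral.integral_of_le (by norm_num : (0:ℝ) ≤ 1)]
  rw [intervalIntegral.integral_congr
    (g := fun u : ℝ => u^2 - (2/3)*u^3) (fun u _ => by ring)]
  rw [intervalIntegral.integral_sub
    ((continuous_pow 2).intervalIntegrable _ _)
    ((by fun_prop : Continuous fun u:ℝ => (2/3)*u^3).intervalIntegrable _ _),
    intervalIntegral.integral_const_mul, integral_pow, integral_pow]
  norm_num

lemma J2 : ∫ u in Ioc (0:ℝ) 1, (u - u^2/2)^2 = 2/15 := by
  rw [← intervalIntegral.integral_of_le (by norm_num : (0:ℝ) ≤ 1)]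
  rw [intervalIntegral.integral_congr
    (g := fun u : ℝ => (u^2 - u^3) + (1/4)*u^4) (fun u _ => by ring)]
  rw [intervalIntegral.integral_add
    ((by fun_prop : Continuous fun u:ℝ => u^2 - u^3).intervalIntegrable _ _)
    ((by fun_prop : Continuous fun u:ℝ => (1/4)*u^4).intervalIntegrable _ _),
    intervalIntegral.integral_sub
    ((continuous_pow 2).intervalIntegrable _ _)
    ((continuous_pow 3).intervalIntegrable _ _),
    intervalIntegral.integral_const_mul, integral_pow, integral_pow, integral_pow]
  norm_num

lemma J3 : ∫ u in Ioc (0:ℝ) 1, (u - u^2/2) = 1/3 := by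
  rw [← intervalIntegral.integral_of_le (by norm_num : (0:ℝ) ≤ 1)]
  rw [intervalIntegral.integral_congr
    (g := fun u : ℝ => u - (1/2)*u^2) (fun u _ => by ring)]
  rw [intervalIntegral.integral_sub
    ((by fun_prop : Continuous fun u:ℝ => u).intervalIntegrable _ _)
    ((by fun_prop : Continuous fun u:ℝ => (1/2)*u^2).intervalIntegrable _ _),
    intervalIntegral.integral_const_mul, integral_pow, integral_id]
  norm_num

lemma J4 : ∫ u in Ioc (0:ℝ) 1, (1-u)*u = 1/6 := by
  rw [← intervalIntegral.integral_of_le (by norm_num : (0:ℝ) ≤ 1)]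
  rw [intervalIntegral.integral_congr
    (g := fun u : ℝ => u - u^2) (fun u _ => by ring)]
  rw [intervalIntegral.integral_sub
    ((by fun_prop : Continuous fun u:ℝ => u).intervalIntegrable _ _)
    ((continuous_pow 2).intervalIntegrable _ _), integral_pow, integral_id]
  norm_num


/-- If the law of `Y` is atomless (i.e. `Y` has a continuous
distribution), then `τ² = 2/5`. -/
theorem tauSq_eq_two_fifths_of_continuous
    {Ω : Type*} [MeasurableSpace Ω] (P : Measure Ω) [IsProbabilityMeasure P]
    (Y : Ω → ℝ) (hY : Measurable Y)
    (hYatomless : ∀ a : ℝ, Measure.map Y P {a} = 0) :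
    tauSq P Y = 2 / 5 := by
  have hmap0 : IsProbabilityMeasure (Measure.map Y P) :=
    Measure.isProbabilityMeasure_map hY.aemeasurable
  have hna : NullSingletonClass (Measure.map Y P) := ⟨hYatomless⟩
  set μ := Measure.map Y P with hμ
  have hF : ∀ t, cdfF P Y t = cdf μ t := fun t => (cdf_eq_real μ t).symm
  have hFmem : ∀ t, cdf μ t ∈ Icc (0:ℝ) 1 := fun t => ⟨cdf_nonneg μ t, cdf_le_one μ t⟩
  have hmeas : Measurable (cdf μ) := (cdf_cont μ).measurable
  have key : ∀ g : ℝ → ℝ, Continuous g →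
      ∫ y, g (cdf μ y) ∂μ = ∫ u in Ioc (0:ℝ) 1, g u := by
    intro g hg
    rw [← integral_map hmeas.aemeasurable hg.aestronglyMeasurable, map_cdf μ]
  have hphi : ∀ y y', phiF P Y y y' = min (cdf μ y) (cdf μ y') := fun y y' => by
    rw [phiF, hF, hF]
  have hG : ∀ t, survG P Y t = 1 - cdf μ t := by
    intro t
    rw [survG, ← hμ]
    have h1 : μ (Ici t) = μ (Ioi t) := (measure_congr (Ioi_ae_eq_Ici (μ := μ) (a := t))).symm
    rw [h1, ← compl_Iic, prob_compl_eq_one_sub measurableSet_Iic,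
      ENNReal.toReal_sub_of_le prob_le_one ENNReal.one_ne_top, ENNReal.toReal_one,
      cdf_eq_real]
    rfl
  have hmin : ∀ a, ∫ y, min (cdf μ a) (cdf μ y) ∂μ = cdf μ a - (cdf μ a)^2/2 := fun a =>
    (key (fun v => min (cdf μ a) v) (by fun_prop)).trans (imin (hFmem a).1 (hFmem a).2)
  have hA : ∫ y₁, ∫ y₂, (phiF P Y y₁ y₂) ^ 2 ∂μ ∂μ = 1/6 := by
    have inner : ∀ y₁, ∫ y₂, (phiF P Y y₁ y₂) ^ 2 ∂μ
        = (cdf μ y₁)^2 - 2*(cdf μ y₁)^3/3 := by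
      intro y₁
      simp only [hphi]
      exact (key (fun v => min (cdf μ y₁) v ^ 2) (by fun_prop)).trans
        (imin2 (hFmem y₁).1 (hFmem y₁).2)
    calc ∫ y₁, ∫ y₂, (phiF P Y y₁ y₂) ^ 2 ∂μ ∂μ
        = ∫ y₁, ((cdf μ y₁)^2 - 2*(cdf μ y₁)^3/3) ∂μ :=
          integral_congr_ae (.of_forall inner)
      _ = ∫ u in Ioc (0:ℝ) 1, (u^2 - 2*u^3/3) :=
          key (fun u => u^2 - 2*u^3/3) (by fun_prop)
      _ = 1/6 := J1
  have hB : ∫ y₁, ∫ y₂, ∫ y₃, phiF P Y y₁ y₂ * phiF P Y y₁ y₃ ∂μ ∂μ ∂μ = 2/15 := by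
    have inner2 : ∀ y₁, ∫ y₂, ∫ y₃, phiF P Y y₁ y₂ * phiF P Y y₁ y₃ ∂μ ∂μ
        = (cdf μ y₁ - (cdf μ y₁)^2/2)^2 := by
      intro y₁
      have inner3 : ∀ y₂, ∫ y₃, phiF P Y y₁ y₂ * phiF P Y y₁ y₃ ∂μ
          = phiF P Y y₁ y₂ * (cdf μ y₁ - (cdf μ y₁)^2/2) := by
        intro y₂
        rw [MeasureTheory.integral_const_mul]
        congr 1
        simp only [hphi]
        exact hmin y₁
      calc ∫ y₂, ∫ y₃, phiF P Y y₁ y₂ * phiF P Y y₁ y₃ ∂μ ∂μ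
          = ∫ y₂, phiF P Y y₁ y₂ * (cdf μ y₁ - (cdf μ y₁)^2/2) ∂μ :=
            integral_congr_ae (.of_forall inner3)
        _ = (∫ y₂, phiF P Y y₁ y₂ ∂μ) * (cdf μ y₁ - (cdf μ y₁)^2/2) :=
            integral_mul_const _ _
        _ = (cdf μ y₁ - (cdf μ y₁)^2/2)^2 := by
            have : ∫ y₂, phiF P Y y₁ y₂ ∂μ = cdf μ y₁ - (cdf μ y₁)^2/2 := by
              simp only [hphi]; exact hmin y₁
            rw [this]; ring
    calc ∫ y₁, ∫ y₂, ∫ y₃, phiF P Y y₁ y₂ * phiF P Y y₁ y₃ ∂μ ∂μ ∂μ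
        = ∫ y₁, (cdf μ y₁ - (cdf μ y₁)^2/2)^2 ∂μ :=
          integral_congr_ae (.of_forall inner2)
      _ = ∫ u in Ioc (0:ℝ) 1, (u - u^2/2)^2 :=
          key (fun u => (u - u^2/2)^2) (by fun_prop)
      _ = 2/15 := J2
  have hC : ∫ y₁, ∫ y₂, phiF P Y y₁ y₂ ∂μ ∂μ = 1/3 := by
    have inner : ∀ y₁, ∫ y₂, phiF P Y y₁ y₂ ∂μ = cdf μ y₁ - (cdf μ y₁)^2/2 := by
      intro y₁; simp only [hphi]; exact hmin y₁
    calc ∫ y₁, ∫ y₂, phiF P Y y₁ y₂ ∂μ ∂μ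
        = ∫ y₁, (cdf μ y₁ - (cdf μ y₁)^2/2) ∂μ := integral_congr_ae (.of_forall inner)
      _ = ∫ u in Ioc (0:ℝ) 1, (u - u^2/2) := key (fun u => u - u^2/2) (by fun_prop)
      _ = 1/3 := J3
  have hD : ∫ y, survG P Y y * (1 - survG P Y y) ∂μ = 1/6 := by
    have h1 : ∀ y, survG P Y y * (1 - survG P Y y) = (1 - cdf μ y) * (cdf μ y) := by
      intro y; rw [hG]; ring
    calc ∫ y, survG P Y y * (1 - survG P Y y) ∂μ
        = ∫ y, (1 - cdf μ y) * (cdf μ y) ∂μ := integral_congr_ae (.of_forall h1)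
      _ = ∫ u in Ioc (0:ℝ) 1, (1-u)*u := key (fun u => (1-u)*u) (by fun_prop)
      _ = 1/6 := J4
  rw [tauSq, ← hμ, hA, hB, hC, hD]
  norm_num
end

section
/- Let Y be a real-valued random variable and let X and Z be random vectors taking values in ℝ^p and ℝ^q respectively, all on the same probability space. Suppose Y is not almost surely equal to a measurable function of X. Then T(Y,Z|X) = 0 if and only if Y and Z are conditionally independent given X. -/
open MeasureTheory ProbabilityTheory Filter Set
open scoped NNReal Topology

/-- The conditional variance `Var(f | m) = E[(f − E[f|m])² | m]`. -/
noncomputable def condVariance {Ω : Type*} [MeasurableSpace Ω]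
    (P : Measure Ω) (m : MeasurableSpace Ω) (f : Ω → ℝ) : Ω → ℝ :=
  P[(fun ω => (f ω - (P[f | m]) ω) ^ 2) | m]

/-- The conditional dependence coefficient
`T(Y,Z|X) = (∫ E[Var(P(Y≥t | X,Z) | X)] dμ(t)) / (∫ E[Var(1_{Y≥t} | X)] dμ(t))`,
where `μ` is the law of `Y`. -/
noncomputable def Tcoef {Ω E F : Type*} [MeasurableSpace Ω] [MeasurableSpace E]
    [MeasurableSpace F] (P : Measure Ω) (Y : Ω → ℝ) (X : Ω → E) (Z : Ω → F) : ℝ :=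
  (∫ t, ∫ ω, condVariance P (MeasurableSpace.comap X inferInstance)
      (P[(fun ω' => if t ≤ Y ω' then (1 : ℝ) else 0) |
        MeasurableSpace.comap (fun ω' => (X ω', Z ω')) inferInstance]) ω ∂P
    ∂(Measure.map Y P)) /
  (∫ t, ∫ ω, condVariance P (MeasurableSpace.comap X inferInstance)
      (fun ω' => if t ≤ Y ω' then (1 : ℝ) else 0) ω ∂P
    ∂(Measure.map Y P))

/-- `Y` and `Z` are conditionally independent given `X`: for all measurable sets `s, t`,
`E[1_{Y∈s} 1_{Z∈t} | σ(X)] = E[1_{Y∈s} | σ(X)] · E[1_{Z∈t} | σ(X)]` a.s. -/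
def CondIndepGiven {Ω E F G : Type*} [MeasurableSpace Ω] [MeasurableSpace E]
    [MeasurableSpace F] [MeasurableSpace G]
    (P : Measure Ω) (X : Ω → E) (Y : Ω → F) (Z : Ω → G) : Prop :=
  ∀ s : Set F, MeasurableSet s → ∀ t : Set G, MeasurableSet t →
    (P[(fun ω => Set.indicator s (fun _ => (1 : ℝ)) (Y ω) *
          Set.indicator t (fun _ => (1 : ℝ)) (Z ω)) |
        MeasurableSpace.comap X inferInstance]) =ᵐ[P]
    (fun ω => (P[(fun ω' => Set.indicator s (fun _ => (1 : ℝ)) (Y ω')) |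
        MeasurableSpace.comap X inferInstance]) ω *
      (P[(fun ω' => Set.indicator t (fun _ => (1 : ℝ)) (Z ω')) |
        MeasurableSpace.comap X inferInstance]) ω)

set_option linter.unusedSectionVars false
set_option linter.unusedVariables false

section Kit
variable {Ω : Type*} {m m₁ m₂ : MeasurableSpace Ω} [m0 : MeasurableSpace Ω]
  {P : Measure Ω} [IsProbabilityMeasure P] {f w : Ω → ℝ}

/-- `f` is a.e. strongly measurable and a.e. in `[0,1]`. -/
def Bdd01 (P : Measure Ω) (f : Ω → ℝ) : Prop :=
  AEStronglyMeasurable f P ∧ ∀ᵐ ω ∂P, f ω ∈ Set.Icc (0:ℝ) 1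

theorem Bdd01.integrable (hf : Bdd01 P f) : Integrable f P := by
  refine Integrable.mono' (integrable_const (1:ℝ)) hf.1 ?_
  filter_upwards [hf.2] with ω h
  rw [Real.norm_eq_abs, abs_le]; exact ⟨by linarith [h.1], h.2⟩

theorem Bdd01.mul (hf : Bdd01 P f) (hw : Bdd01 P w) : Bdd01 P (fun ω => f ω * w ω) := by
  refine ⟨hf.1.mul hw.1, ?_⟩
  filter_upwards [hf.2, hw.2] with ω h1 h2
  exact ⟨mul_nonneg h1.1 h2.1, mul_le_one₀ h1.2 h2.1 h2.2⟩

theorem Bdd01.condexp (hm : m ≤ m0) (hf : Bdd01 P f) : Bdd01 P (P[f|m]) := by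
  refine ⟨(stronglyMeasurable_condExp.mono hm).aestronglyMeasurable, ?_⟩
  have h0 : 0 ≤ᵐ[P] P[f|m] := condExp_nonneg (by filter_upwards [hf.2] with ω h; exact h.1)
  have h1 : P[f|m] ≤ᵐ[P] P[(fun _ => (1:ℝ))|m] :=
    condExp_mono hf.integrable (integrable_const 1)
      (by filter_upwards [hf.2] with ω h; exact h.2)
  filter_upwards [h0, h1] with ω ha hb
  refine ⟨ha, ?_⟩
  rwa [condExp_const hm] at hb

theorem integral_mul_condexp (hm : m ≤ m0) (hw : StronglyMeasurable[m] w)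
    (hwb : Bdd01 P w) (hf : Bdd01 P f) :
    ∫ ω, w ω * (P[f|m]) ω ∂P = ∫ ω, w ω * f ω ∂P := by
  have h := condExp_mul_of_stronglyMeasurable_left (μ := P) hw (hwb.mul hf).integrable hf.integrable
  have : ∫ ω, w ω * (P[f|m]) ω ∂P = ∫ ω, (P[(fun ω => w ω * f ω)|m]) ω ∂P :=
    integral_congr_ae (by filter_upwards [h] with ω hω; exact hω.symm)
  rw [this, integral_condExp hm]

theorem sq_sub_integrable (hm : m ≤ m0) (hf : Bdd01 P f) :
    Integrable (fun ω => (f ω - (P[f|m]) ω) ^ 2) P := by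
  have hb := hf.condexp hm
  refine Integrable.mono' (integrable_const (1:ℝ))
    ((hf.1.sub hb.1).pow 2) ?_
  filter_upwards [hf.2, hb.2] with ω h1 h2
  rw [Real.norm_eq_abs, abs_pow, sq_abs]
  nlinarith [h1.1, h1.2, h2.1, h2.2]

theorem integral_condVariance_eq (hm : m ≤ m0) (hf : Bdd01 P f) :
    ∫ ω, condVariance P m f ω ∂P = ∫ ω, (f ω - (P[f|m]) ω) ^ 2 ∂P :=
  integral_condExp hm

theorem integral_condVariance_nonneg (hm : m ≤ m0) (hf : Bdd01 P f) :
    0 ≤ ∫ ω, condVariance P m f ω ∂P := by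
  rw [integral_condVariance_eq hm hf]
  exact integral_nonneg fun ω => sq_nonneg _

theorem integral_condVariance_eq_zero_iff (hm : m ≤ m0) (hf : Bdd01 P f) :
    ∫ ω, condVariance P m f ω ∂P = 0 ↔ f =ᵐ[P] P[f|m] := by
  rw [integral_condVariance_eq hm hf,
    integral_eq_zero_iff_of_nonneg_ae (Eventually.of_forall fun ω => sq_nonneg _)
      (sq_sub_integrable hm hf)]
  constructor
  · intro h
    filter_upwards [h] with ω hω
    have : (f ω - (P[f|m]) ω) ^ 2 = 0 := hω
    have := pow_eq_zero_iff (n := 2) (by norm_num) |>.mp this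
    linarith [sub_eq_zero.mp this]
  · intro h
    filter_upwards [h] with ω hω
    simp [hω]

theorem integral_condVariance_condexp_eq_zero_iff (hm12 : m₁ ≤ m₂) (hm2 : m₂ ≤ m0)
    (hf : Bdd01 P f) :
    ∫ ω, condVariance P m₁ (P[f|m₂]) ω ∂P = 0 ↔ P[f|m₂] =ᵐ[P] P[f|m₁] := by
  have hb : Bdd01 P (P[f|m₂]) := hf.condexp hm2
  rw [integral_condVariance_eq_zero_iff (hm12.trans hm2) hb]
  have htower : P[P[f|m₂]|m₁] =ᵐ[P] P[f|m₁] := condExp_condExp_of_le hm12 hm2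
  exact ⟨fun h => h.trans htower, fun h => h.trans htower.symm⟩

theorem Bdd01.sq (hf : Bdd01 P f) : Bdd01 P (fun ω => f ω ^ 2) := by
  refine ⟨(hf.1.mul hf.1).congr (Eventually.of_forall fun ω => (pow_two (f ω)).symm), ?_⟩
  filter_upwards [hf.2] with ω h
  exact ⟨sq_nonneg _, pow_le_one₀ h.1 h.2⟩

theorem integral_sq_le_one (hf : Bdd01 P f) : ∫ ω, f ω ^ 2 ∂P ≤ 1 := by
  have h := integral_mono_ae hf.sq.integrable (integrable_const (1:ℝ))
    (by filter_upwards [hf.2] with ω h; exact pow_le_one₀ h.1 h.2)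
  simpa using h

theorem integral_condVariance_expand (hm : m ≤ m0) (hf : Bdd01 P f) :
    ∫ ω, condVariance P m f ω ∂P
      = ∫ ω, f ω ^ 2 ∂P - ∫ ω, (P[f|m]) ω ^ 2 ∂P := by
  rw [integral_condVariance_eq hm hf]
  have heb := hf.condexp hm
  have h1 : ∫ ω, (P[f|m]) ω * (P[f|m]) ω ∂P = ∫ ω, (P[f|m]) ω * f ω ∂P :=
    integral_mul_condexp hm stronglyMeasurable_condExp heb hf
  have hint1 : Integrable (fun ω => f ω ^ 2) P := hf.sq.integrable
  have hint2 : Integrable (fun ω => (P[f|m]) ω * f ω) P := (heb.mul hf).integrable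
  have hint3 : Integrable (fun ω => (P[f|m]) ω * (P[f|m]) ω) P := (heb.mul heb).integrable
  calc ∫ ω, (f ω - (P[f|m]) ω) ^ 2 ∂P
      = ∫ ω, (f ω ^ 2 - (2 * ((P[f|m]) ω * f ω) - (P[f|m]) ω * (P[f|m]) ω)) ∂P := by
        congr 1; funext ω; ring
    _ = ∫ ω, f ω ^ 2 ∂P - ∫ ω, (2 * ((P[f|m]) ω * f ω) - (P[f|m]) ω * (P[f|m]) ω) ∂P :=
        integral_sub hint1 ((hint2.const_mul 2).sub hint3)
    _ = ∫ ω, f ω ^ 2 ∂P - (2 * ∫ ω, (P[f|m]) ω * f ω ∂P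
          - ∫ ω, (P[f|m]) ω * (P[f|m]) ω ∂P) := by
        rw [integral_sub (hint2.const_mul 2) hint3, integral_const_mul]
    _ = ∫ ω, f ω ^ 2 ∂P - ∫ ω, (P[f|m]) ω ^ 2 ∂P := by
        rw [← h1]
        have : ∫ ω, (P[f|m]) ω * (P[f|m]) ω ∂P = ∫ ω, (P[f|m]) ω ^ 2 ∂P := by
          congr 1; funext ω; ring
        rw [this]; ring

theorem integral_condVariance_le_one (hm : m ≤ m0) (hf : Bdd01 P f) :
    ∫ ω, condVariance P m f ω ∂P ≤ 1 := by
  rw [integral_condVariance_expand hm hf]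
  have h1 := integral_sq_le_one hf
  have h2 : 0 ≤ ∫ ω, (P[f|m]) ω ^ 2 ∂P := integral_nonneg fun ω => sq_nonneg _
  linarith

theorem integral_condExp_sq_mono (hm : m ≤ m0) {f g : Ω → ℝ} (hf : Bdd01 P f) (hg : Bdd01 P g)
    (hfg : f ≤ᵐ[P] g) :
    ∫ ω, (P[f|m]) ω ^ 2 ∂P ≤ ∫ ω, (P[g|m]) ω ^ 2 ∂P := by
  have hmono := condExp_mono (μ := P) (m := m) hf.integrable hg.integrable hfg
  refine integral_mono_ae (hf.condexp hm).sq.integrable (hg.condexp hm).sq.integrable ?_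
  filter_upwards [hmono, (hf.condexp hm).2] with ω h1 h2
  exact pow_le_pow_left₀ h2.1 h1 2

theorem integral_sq_mono {f g : Ω → ℝ} (hf : Bdd01 P f) (hg : Bdd01 P g)
    (hfg : f ≤ᵐ[P] g) : ∫ ω, f ω ^ 2 ∂P ≤ ∫ ω, g ω ^ 2 ∂P := by
  refine integral_mono_ae hf.sq.integrable hg.sq.integrable ?_
  filter_upwards [hfg, hf.2] with ω h1 h2
  exact pow_le_pow_left₀ h2.1 h1 2

end Kit

section RealCore

/-- If every point of `J` has a null gap `(s, y)` just below it and is itself not an atom,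
then `J` is null. -/
theorem null_of_gap (μ : Measure ℝ) [IsFiniteMeasure μ] (s : ℝ) :
    μ {y | s < y ∧ μ (Set.Ioo s y) = 0 ∧ μ {y} = 0} = 0 := by
  set J := {y | s < y ∧ μ (Set.Ioo s y) = 0 ∧ μ {y} = 0} with hJdef
  have hJy : ∀ y ∈ J, μ (Set.Ioc s y) = 0 := by
    intro y hy
    have hsub : Set.Ioc s y ⊆ Set.Ioo s y ∪ {y} := by
      intro x hx
      rcases lt_or_eq_of_le hx.2 with h | h
      · exact Or.inl ⟨hx.1, h⟩
      · exact Or.inr (by simp [h])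
    refine le_antisymm ?_ zero_le
    calc μ (Set.Ioc s y) ≤ μ (Set.Ioo s y ∪ {y}) := measure_mono hsub
      _ ≤ μ (Set.Ioo s y) + μ {y} := measure_union_le _ _
      _ = 0 := by rw [hy.2.1, hy.2.2, add_zero]
  rcases Set.eq_empty_or_nonempty J with h | h
  · simp [h]
  by_cases hb : BddAbove J
  · obtain ⟨u, hu_mono, hu_tend, hu_mem⟩ := exists_seq_tendsto_sSup h hb
    have hsub : J ⊆ (⋃ n, Set.Ioc s (u n)) ∪ ({sSup J} ∩ J) := by
      intro y hy
      rcases lt_or_eq_of_le (le_csSup hb hy) with hlt | heq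
      · obtain ⟨n, hn⟩ := (hu_tend.eventually (eventually_gt_nhds hlt)).exists
        exact Or.inl (Set.mem_iUnion.2 ⟨n, hy.1, hn.le⟩)
      · exact Or.inr ⟨by simp [heq], hy⟩
    refine measure_mono_null hsub (le_antisymm ?_ zero_le)
    calc μ ((⋃ n, Set.Ioc s (u n)) ∪ ({sSup J} ∩ J))
        ≤ μ (⋃ n, Set.Ioc s (u n)) + μ ({sSup J} ∩ J) := measure_union_le _ _
      _ = 0 := by
          rw [measure_iUnion_null fun n => hJy _ (hu_mem n)]
          rw [zero_add]
          by_cases hc : sSup J ∈ J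
          · refine le_antisymm ?_ zero_le
            calc μ ({sSup J} ∩ J) ≤ μ {sSup J} := measure_mono Set.inter_subset_left
              _ = 0 := hc.2.2
          · have : {sSup J} ∩ J = ∅ := by
              ext x; simp only [Set.mem_inter_iff, Set.mem_singleton_iff, Set.mem_empty_iff_false,
                iff_false, not_and]
              rintro rfl; exact hc
            rw [this, measure_empty]
  · have hex : ∀ n : ℕ, ∃ y, y ∈ J ∧ (n : ℝ) < y := by
      intro n
      obtain ⟨y, hyJ, hny⟩ := not_bddAbove_iff.mp hb n
      exact ⟨y, hyJ, hny⟩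
    choose u hu hltu using hex
    have hsub : J ⊆ ⋃ n, Set.Ioc s (u n) := by
      intro y hy
      obtain ⟨n, hn⟩ := exists_nat_gt y
      exact Set.mem_iUnion.2 ⟨n, hy.1, (hn.trans (hltu n)).le⟩
    exact measure_mono_null hsub (measure_iUnion_null fun n => hJy _ (hu n))

/-- Countable skeleton: given a `μ`-full set `T₀`, there is a countable `C ⊆ T₀` that
approximates `μ`-a.e. point from below. -/
theorem exists_countable_skeleton (μ : Measure ℝ) [IsFiniteMeasure μ] {T₀ : Set ℝ}
    (hT₀ : μ T₀ᶜ = 0) :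
    ∃ C : Set ℝ, C ⊆ T₀ ∧ C.Countable ∧
      ∀ᵐ y ∂μ, ∀ s : ℝ, s < y → (C ∩ Set.Ioc s y).Nonempty := by
  have hpick : ∀ pq : ℚ × ℚ, ∃ x : ℝ,
      (T₀ ∩ Set.Ioc (pq.1 : ℝ) (pq.2 : ℝ)).Nonempty →
        x ∈ T₀ ∩ Set.Ioc (pq.1 : ℝ) (pq.2 : ℝ) := by
    intro pq
    by_cases h : (T₀ ∩ Set.Ioc (pq.1 : ℝ) (pq.2 : ℝ)).Nonempty
    · obtain ⟨x, hx⟩ := h; exact ⟨x, fun _ => hx⟩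
    · exact ⟨0, fun h' => absurd h' h⟩
  choose c hc using hpick
  set A : Set ℝ := {y | μ {y} ≠ 0} with hAdef
  have hAcount : A.Countable := by
    have := MeasureTheory.Measure.countable_meas_pos_of_disjoint_iUnion₀
      (μ := μ) (As := fun y : ℝ => {y})
      (fun y => measurableSet_singleton y |>.nullMeasurableSet)
      (fun y z hyz => Disjoint.aedisjoint (by simpa [Set.disjoint_singleton] using hyz))
    refine this.mono ?_
    intro y hy
    show 0 < μ {y}
    exact pos_iff_ne_zero.mpr hy
  have hAsub : A ⊆ T₀ := by
    intro y hy
    by_contra hyT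
    exact hy (measure_mono_null (by simpa using hyT : {y} ⊆ T₀ᶜ) hT₀)
  set C : Set ℝ := (Set.range c ∩ T₀) ∪ A with hCdef
  refine ⟨C, ?_, ?_, ?_⟩
  · exact Set.union_subset Set.inter_subset_right hAsub
  · exact ((Set.countable_range c).mono Set.inter_subset_left).union hAcount
  · -- a.e. approximation
    rw [ae_iff]
    have hbad : {y | ¬ ∀ s : ℝ, s < y → (C ∩ Set.Ioc s y).Nonempty}
        ⊆ ⋃ r : ℚ, {y | (r : ℝ) < y ∧ μ (Set.Ioo (r : ℝ) y) = 0 ∧ μ {y} = 0} := by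
      intro y hy
      push_neg at hy
      obtain ⟨s, hsy, hempty⟩ := hy
      -- y is not an atom
      have hyA : μ {y} = 0 := by
        by_contra h
        have : y ∈ C := Or.inr h
        have : y ∈ C ∩ Set.Ioc s y := ⟨this, hsy, le_rfl⟩
        rw [hempty] at this
        exact this
      -- no T₀ points in rational subintervals
      have hrect : ∀ a b : ℚ, s ≤ (a : ℝ) → (a : ℝ) < (b : ℝ) → (b : ℝ) ≤ y →
          T₀ ∩ Set.Ioc (a : ℝ) (b : ℝ) = ∅ := by
        intro a b hsa hab hby
        rw [Set.eq_empty_iff_forall_notMem]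
        intro x hx
        have hne : (T₀ ∩ Set.Ioc (a : ℝ) (b : ℝ)).Nonempty := ⟨x, hx⟩
        have hcmem := hc (a, b) hne
        have : c (a, b) ∈ C ∩ Set.Ioc s y := by
          refine ⟨Or.inl ⟨Set.mem_range_self _, hcmem.1⟩, ?_⟩
          exact ⟨lt_of_le_of_lt hsa hcmem.2.1, hcmem.2.2.trans hby⟩
        rw [hempty] at this
        exact this
      -- hence the open gap is null
      have hgap : μ (Set.Ioo s y) = 0 := by
        refine le_antisymm ?_ zero_le
        have hsubT : Set.Ioo s y ∩ T₀ = ∅ := by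
          rw [Set.eq_empty_iff_forall_notMem]
          rintro x ⟨⟨hsx, hxy⟩, hxT⟩
          obtain ⟨a, hsa, hax⟩ := exists_rat_btwn hsx
          obtain ⟨b, hxb, hby⟩ := exists_rat_btwn hxy
          have := hrect a b hsa.le (hax.trans hxb) hby.le
          rw [Set.eq_empty_iff_forall_notMem] at this
          exact this x ⟨hxT, hax, hxb.le⟩
        calc μ (Set.Ioo s y) = μ (Set.Ioo s y ∩ T₀ ∪ Set.Ioo s y ∩ T₀ᶜ) := by
              rw [Set.inter_union_compl]
          _ ≤ μ (Set.Ioo s y ∩ T₀) + μ (Set.Ioo s y ∩ T₀ᶜ) := measure_union_le _ _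
          _ ≤ 0 + 0 := by
              refine add_le_add ?_ ?_
              · rw [hsubT]; simp
              · exact le_trans (measure_mono Set.inter_subset_right) hT₀.le
          _ = 0 := by simp
      obtain ⟨r, hsr, hry⟩ := exists_rat_btwn hsy
      refine Set.mem_iUnion.2 ⟨r, hry, ?_, hyA⟩
      refine measure_mono_null (fun x hx => ?_) hgap
      exact ⟨hsr.trans hx.1, hx.2⟩
    exact measure_mono_null hbad (measure_iUnion_null fun r => null_of_gap μ r)

/-- Two measures dominated by a finite measure `μ` that agree on `Ici t` for `μ`-a.e. `t`
agree everywhere. -/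
theorem measure_ext_of_Ici_ae {μ ν₁ ν₂ : Measure ℝ} [IsFiniteMeasure μ]
    (h₁ : ν₁ ≤ μ) (h₂ : ν₂ ≤ μ) {T₀ : Set ℝ} (hT₀ : μ T₀ᶜ = 0)
    (h : ∀ t ∈ T₀, ν₁ (Set.Ici t) = ν₂ (Set.Ici t)) : ν₁ = ν₂ := by
  have h₁' : ∀ s, ν₁ s ≤ μ s := Measure.le_iff'.mp h₁
  have h₂' : ∀ s, ν₂ s ≤ μ s := Measure.le_iff'.mp h₂
  haveI : IsFiniteMeasure ν₁ := ⟨lt_of_le_of_lt (h₁' _) (measure_lt_top μ _)⟩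
  obtain ⟨C, hCT, hCc, hae⟩ := exists_countable_skeleton μ hT₀
  set G : Set ℝ := {y | ∀ s : ℝ, s < y → (C ∩ Set.Ioc s y).Nonempty} with hGdef
  have hGc : μ Gᶜ = 0 := by rw [ae_iff] at hae; exact hae
  refine MeasureTheory.Measure.ext_of_Ici ν₁ ν₂ ?_
  intro t
  by_cases hat : μ {t} ≠ 0
  · refine h t ?_
    by_contra hT
    exact hat (measure_mono_null (by simpa using hT : {t} ⊆ T₀ᶜ) hT₀)
  push_neg at hat
  by_cases hCt : (C ∩ Set.Ioi t).Nonempty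
  · obtain ⟨g, hg⟩ := ((hCc.mono Set.inter_subset_left).exists_eq_range hCt)
    set m : ℕ → ℝ := fun n => (Finset.range (n + 1)).inf' (by simp) g with hmdef
    have hgmem : ∀ n, g n ∈ C ∩ Set.Ioi t := fun n => hg ▸ Set.mem_range_self n
    have hmmem : ∀ n, m n ∈ C ∩ Set.Ioi t := by
      intro n
      obtain ⟨k, _, hk⟩ := Finset.exists_mem_eq_inf' (s := Finset.range (n + 1))
        (by simp) g
      have hmk : m n = g k := hk
      rw [hmk]; exact hgmem k
    set W : Set ℝ := ⋃ n, Set.Ici (m n) with hWdef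
    have hWmono : Monotone fun n => Set.Ici (m n) := by
      intro a b hab
      refine Set.Ici_subset_Ici.2 ?_
      exact Finset.inf'_mono g (by
        intro x hx
        simp only [Finset.mem_range] at hx ⊢
        omega) _
    have hWab : ν₁ W = ν₂ W := by
      rw [hWdef, hWmono.measure_iUnion, hWmono.measure_iUnion]
      exact iSup_congr fun n => h _ (hCT (hmmem n).1)
    have hWsub : W ⊆ Set.Ici t := by
      rintro x hx
      obtain ⟨n, hn⟩ := Set.mem_iUnion.mp hx
      exact le_of_lt (lt_of_lt_of_le (hmmem n).2 (Set.mem_Ici.mp hn))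
    have hdiff : ∀ (ν : Measure ℝ), (∀ s, ν s ≤ μ s) → ν (Set.Ici t) = ν W := by
      intro ν hν
      have hd : Set.Ici t \ W ⊆ {t} ∪ Gᶜ := by
        rintro y ⟨hyt, hyW⟩
        rcases eq_or_lt_of_le (Set.mem_Ici.mp hyt) with heq | hlt
        · exact Or.inl (by simp [heq.symm])
        · refine Or.inr fun hyG => ?_
          obtain ⟨x, hxC, hxt, hxy⟩ := hyG t hlt
          have hxr : x ∈ Set.range g := by rw [← hg]; exact ⟨hxC, hxt⟩
          obtain ⟨k, hk⟩ := hxr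
          refine hyW (Set.mem_iUnion.2 ⟨k, ?_⟩)
          have hmk : m k ≤ g k := Finset.inf'_le g (by simp)
          rw [hk] at hmk
          exact le_trans hmk hxy
      have hnull : ν (Set.Ici t \ W) = 0 := by
        refine le_antisymm ?_ zero_le
        calc ν (Set.Ici t \ W) ≤ ν ({t} ∪ Gᶜ) := measure_mono hd
          _ ≤ ν {t} + ν Gᶜ := measure_union_le _ _
          _ ≤ μ {t} + μ Gᶜ := add_le_add (hν _) (hν _)
          _ = 0 := by rw [hat, hGc, add_zero]
      have hle : ν (Set.Ici t) ≤ ν W := by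
        calc ν (Set.Ici t) = ν (W ∪ Set.Ici t \ W) := by
              rw [Set.union_diff_cancel hWsub]
          _ ≤ ν W + ν (Set.Ici t \ W) := measure_union_le _ _
          _ = ν W := by rw [hnull, add_zero]
      exact le_antisymm hle (measure_mono hWsub)
    rw [hdiff ν₁ h₁', hdiff ν₂ h₂', hWab]
  · -- no points of C above t : the whole of `Ioi t` is null
    have hsubG : Set.Ioi t ⊆ Gᶜ := by
      intro y hy
      simp only [Set.mem_compl_iff]
      intro hyG
      obtain ⟨x, hxC, hxt, _⟩ := hyG t hy
      exact hCt ⟨x, hxC, hxt⟩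
    have hIoi : μ (Set.Ioi t) = 0 := measure_mono_null hsubG hGc
    have hz : ∀ (ν : Measure ℝ), (∀ s, ν s ≤ μ s) → ν (Set.Ici t) = 0 := by
      intro ν hν
      refine le_antisymm ?_ zero_le
      calc ν (Set.Ici t) ≤ ν ({t} ∪ Set.Ioi t) := by
            refine measure_mono fun x hx => ?_
            rcases eq_or_lt_of_le (Set.mem_Ici.mp hx) with heq | hlt
            · exact Or.inl (by simp [heq.symm])
            · exact Or.inr hlt
        _ ≤ ν {t} + ν (Set.Ioi t) := measure_union_le _ _
        _ ≤ μ {t} + μ (Set.Ioi t) := add_le_add (hν _) (hν _)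
        _ = 0 := by rw [hat, hIoi, add_zero]
    rw [hz ν₁ h₁', hz ν₂ h₂']

end RealCore

section Rect
variable {Ω : Type*} {m m₂ : MeasurableSpace Ω} [m0 : MeasurableSpace Ω]
  {P : Measure Ω} [IsProbabilityMeasure P]

/-- The basic rectangle computation. -/
theorem rect_integral_eq (hm : m ≤ m0) {f ξ ζ : Ω → ℝ}
    (hξm : StronglyMeasurable[m] ξ) (hξb : Bdd01 P ξ) (hζb : Bdd01 P ζ) (hfb : Bdd01 P f)
    (hCI : (P[(fun ω => f ω * ζ ω)|m]) =ᵐ[P]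
      (fun ω => (P[f|m]) ω * (P[ζ|m]) ω)) :
    ∫ ω, ξ ω * ζ ω * (P[f|m]) ω ∂P = ∫ ω, ξ ω * ζ ω * f ω ∂P := by
  have heb : Bdd01 P (P[f|m]) := hfb.condexp hm
  have hξem : StronglyMeasurable[m] (fun ω => ξ ω * (P[f|m]) ω) :=
    hξm.mul stronglyMeasurable_condExp
  have h1 : ∫ ω, (ξ ω * (P[f|m]) ω) * (P[ζ|m]) ω ∂P
      = ∫ ω, (ξ ω * (P[f|m]) ω) * ζ ω ∂P :=
    integral_mul_condexp hm hξem (hξb.mul heb) hζb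
  have h2 : ∫ ω, ξ ω * (P[(fun ω => f ω * ζ ω)|m]) ω ∂P
      = ∫ ω, ξ ω * (f ω * ζ ω) ∂P :=
    integral_mul_condexp hm hξm hξb (hfb.mul hζb)
  have h3 : ∫ ω, ξ ω * (P[(fun ω => f ω * ζ ω)|m]) ω ∂P
      = ∫ ω, ξ ω * ((P[f|m]) ω * (P[ζ|m]) ω) ∂P :=
    integral_congr_ae (by filter_upwards [hCI] with ω hω; rw [hω])
  calc ∫ ω, ξ ω * ζ ω * (P[f|m]) ω ∂P
      = ∫ ω, (ξ ω * (P[f|m]) ω) * ζ ω ∂P := by congr 1; funext ω; ring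
    _ = ∫ ω, (ξ ω * (P[f|m]) ω) * (P[ζ|m]) ω ∂P := h1.symm
    _ = ∫ ω, ξ ω * (P[(fun ω => f ω * ζ ω)|m]) ω ∂P := by
        rw [h3]; congr 1; funext ω; ring
    _ = ∫ ω, ξ ω * (f ω * ζ ω) ∂P := h2
    _ = ∫ ω, ξ ω * ζ ω * f ω ∂P := by congr 1; funext ω; ring

/-- General collapse lemma: if the defining set-integral identity holds on a generating
π-system, the conditional expectation w.r.t. the larger σ-algebra collapses. -/
theorem condexp_collapse_general (hm12 : m ≤ m₂) (hm2 : m₂ ≤ m0)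
    {𝒞 : Set (Set Ω)} (h_eq : m₂ = MeasurableSpace.generateFrom 𝒞) (h_pi : IsPiSystem 𝒞)
    {f : Ω → ℝ} (hfb : Bdd01 P f)
    (hbasic : ∀ A ∈ 𝒞, ∫ x in A, (P[f|m]) x ∂P = ∫ x in A, f x ∂P) :
    P[f|m₂] =ᵐ[P] P[f|m] := by
  have hmX : m ≤ m0 := hm12.trans hm2
  have heb : Bdd01 P (P[f|m]) := hfb.condexp hmX
  have key : ∀ A : Set Ω, MeasurableSet[m₂] A →
      ∫ x in A, (P[f|m]) x ∂P = ∫ x in A, f x ∂P := by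
    intro A hA
    refine MeasurableSpace.induction_on_inter (m := m₂)
      (C := fun A _ => ∫ x in A, (P[f|m]) x ∂P = ∫ x in A, f x ∂P)
      h_eq h_pi ?_ ?_ ?_ ?_ A hA
    · simp
    · exact hbasic
    · intro A hA ih
      have hA' : MeasurableSet A := hm2 _ hA
      have h1 := integral_add_compl hA' heb.integrable
      have h2 := integral_add_compl hA' hfb.integrable
      have h3 : ∫ x, (P[f|m]) x ∂P = ∫ x, f x ∂P := integral_condExp hmX
      linarith
    · intro g hdisj hmeas ih
      have hg' : ∀ i, MeasurableSet (g i) := fun i => hm2 _ (hmeas i)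
      rw [integral_iUnion hg' hdisj heb.integrable.integrableOn,
        integral_iUnion hg' hdisj hfb.integrable.integrableOn]
      exact tsum_congr ih
  refine (ae_eq_condExp_of_forall_setIntegral_eq hm2 hfb.integrable
    (fun A _ _ => heb.integrable.integrableOn) (fun A hA _ => key A hA) ?_).symm
  exact ⟨P[f|m], stronglyMeasurable_condExp.mono hm12, EventuallyEq.rfl⟩

end Rect

section Setting

variable {Ω E F : Type*} [mE : MeasurableSpace E] [mF : MeasurableSpace F]
  [m0 : MeasurableSpace Ω] {P : Measure Ω} [IsProbabilityMeasure P]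
  {Y : Ω → ℝ} {X : Ω → E} {Z : Ω → F}

theorem comap_fst_le (hX : Measurable X) (hZ : Measurable Z) :
    MeasurableSpace.comap X mE ≤
      MeasurableSpace.comap (fun ω => (X ω, Z ω)) inferInstance := by
  have : X = Prod.fst ∘ (fun ω => (X ω, Z ω)) := rfl
  rw [this, ← MeasurableSpace.comap_comp]
  exact MeasurableSpace.comap_mono measurable_fst.comap_le

theorem bdd01_indicator_comp {G : Type*} [MeasurableSpace G] {W : Ω → G}
    (hW : Measurable W) {s : Set G} (hs : MeasurableSet s) :
    Bdd01 P (fun ω => Set.indicator s (fun _ => (1:ℝ)) (W ω)) := by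
  constructor
  · exact ((measurable_const.indicator hs).comp hW).aestronglyMeasurable
  · refine Eventually.of_forall fun ω => ?_
    by_cases h : W ω ∈ s <;> simp [h]

theorem indicator_comp_eq_indicator_preimage {G : Type*} (W : Ω → G) (s : Set G) :
    (fun ω => Set.indicator s (fun _ => (1:ℝ)) (W ω))
      = Set.indicator (W ⁻¹' s) (fun _ => (1:ℝ)) := by
  funext ω; by_cases h : W ω ∈ s <;> simp [h]

theorem stronglyMeasurable_indicator_comp {G : Type*} [mG : MeasurableSpace G] (W : Ω → G)
    {s : Set G} (hs : MeasurableSet s) :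
    StronglyMeasurable[MeasurableSpace.comap W mG]
      (fun ω => Set.indicator s (fun _ => (1:ℝ)) (W ω)) := by
  rw [indicator_comp_eq_indicator_preimage]
  exact stronglyMeasurable_const.indicator ⟨s, hs, rfl⟩

theorem setIntegral_eq_integral_indicator_mul {A : Set Ω} (hA : MeasurableSet A) (f : Ω → ℝ) :
    ∫ x in A, f x ∂P = ∫ ω, Set.indicator A (fun _ => (1:ℝ)) ω * f ω ∂P := by
  rw [← integral_indicator hA]
  congr 1
  ext ω
  by_cases h : ω ∈ A <;> simp [h]

/-- The σ-algebra generated by `(X, Z)` is generated by the π-system of rectangles. -/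
theorem comap_pair_eq_generateFrom (X : Ω → E) (Z : Ω → F) :
    MeasurableSpace.comap (fun ω => (X ω, Z ω)) inferInstance
      = MeasurableSpace.generateFrom
          ((fun S => (fun ω => (X ω, Z ω)) ⁻¹' S) ''
            (image2 (· ×ˢ ·) { u : Set E | MeasurableSet u } { v : Set F | MeasurableSet v })) := by
  have h1 : (inferInstance : MeasurableSpace (E × F)) = MeasurableSpace.generateFrom
      (image2 (· ×ˢ ·) { u : Set E | MeasurableSet u } { v : Set F | MeasurableSet v }) :=
    generateFrom_prod.symm
  rw [h1, MeasurableSpace.comap_generateFrom]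

theorem isPiSystem_rect (X : Ω → E) (Z : Ω → F) :
    IsPiSystem ((fun S => (fun ω => (X ω, Z ω)) ⁻¹' S) ''
      (image2 (· ×ˢ ·) { u : Set E | MeasurableSet u } { v : Set F | MeasurableSet v })) := by
  have h := (isPiSystem_prod (α := E) (β := F)).comap (fun ω => (X ω, Z ω))
  convert h using 1
  ext s; simp only [Set.mem_image, Set.mem_setOf_eq]

/-- Under conditional independence, the conditional expectation of `1_{Y ∈ s}` given
`σ(X,Z)` collapses to the conditional expectation given `σ(X)`. -/
theorem condexp_collapse_of_condIndep (hY : Measurable Y) (hX : Measurable X)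
    (hZ : Measurable Z) (hCI : CondIndepGiven P X Y Z) {s : Set ℝ} (hs : MeasurableSet s) :
    P[(fun ω => Set.indicator s (fun _ => (1:ℝ)) (Y ω)) |
        MeasurableSpace.comap (fun ω => (X ω, Z ω)) inferInstance]
      =ᵐ[P] P[(fun ω => Set.indicator s (fun _ => (1:ℝ)) (Y ω)) |
        MeasurableSpace.comap X mE] := by
  have hmX : MeasurableSpace.comap X mE ≤ m0 := hX.comap_le
  have hfb : Bdd01 P (fun ω => Set.indicator s (fun _ => (1:ℝ)) (Y ω)) :=
    bdd01_indicator_comp hY hs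
  refine condexp_collapse_general (comap_fst_le hX hZ) ((hX.prodMk hZ).comap_le)
    (comap_pair_eq_generateFrom X Z) (isPiSystem_rect X Z) hfb ?_
  rintro A ⟨S, ⟨B₁, hB₁, B₂, hB₂, rfl⟩, rfl⟩
  beta_reduce
  rw [Set.mk_preimage_prod]
  have hAmeas : MeasurableSet (X ⁻¹' B₁ ∩ Z ⁻¹' B₂) := (hX hB₁).inter (hZ hB₂)
  have hind : Set.indicator (X ⁻¹' B₁ ∩ Z ⁻¹' B₂) (fun _ => (1:ℝ))
      = fun ω => Set.indicator B₁ (fun _ => (1:ℝ)) (X ω)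
        * Set.indicator B₂ (fun _ => (1:ℝ)) (Z ω) := by
    funext ω
    by_cases h1 : X ω ∈ B₁ <;> by_cases h2 : Z ω ∈ B₂ <;>
      simp [Set.indicator_apply, h1, h2]
  rw [setIntegral_eq_integral_indicator_mul hAmeas,
    setIntegral_eq_integral_indicator_mul hAmeas, hind]
  exact rect_integral_eq hmX (stronglyMeasurable_indicator_comp X hB₁)
    (bdd01_indicator_comp hX hB₁) (bdd01_indicator_comp hZ hB₂) hfb
    (hCI s hs B₂ hB₂)

theorem comap_snd_le (hX : Measurable X) (hZ : Measurable Z) :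
    MeasurableSpace.comap Z mF ≤
      MeasurableSpace.comap (fun ω => (X ω, Z ω)) inferInstance := by
  have : Z = Prod.snd ∘ (fun ω => (X ω, Z ω)) := rfl
  rw [this, ← MeasurableSpace.comap_comp]
  exact MeasurableSpace.comap_mono measurable_snd.comap_le

/-- If for `μ_Y`-a.e. `t` the conditional expectation of `1_{Y ≥ t}` given `σ(X,Z)` collapses
to that given `σ(X)`, then `Y` and `Z` are conditionally independent given `X`. -/
theorem condIndep_of_ae_collapse (hY : Measurable Y) (hX : Measurable X) (hZ : Measurable Z)
    (hae : ∀ᵐ t ∂(Measure.map Y P),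
      P[(fun ω => Set.indicator (Set.Ici t) (fun _ => (1:ℝ)) (Y ω)) |
          MeasurableSpace.comap (fun ω => (X ω, Z ω)) inferInstance] =ᵐ[P]
      P[(fun ω => Set.indicator (Set.Ici t) (fun _ => (1:ℝ)) (Y ω)) |
          MeasurableSpace.comap X mE]) :
    CondIndepGiven P X Y Z := by
  have hmX : MeasurableSpace.comap X mE ≤ m0 := hX.comap_le
  have hmXZ : MeasurableSpace.comap (fun ω => (X ω, Z ω))
      (inferInstance : MeasurableSpace (E × F)) ≤ m0 := (hX.prodMk hZ).comap_le
  haveI : IsProbabilityMeasure (Measure.map Y P) :=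
    Measure.isProbabilityMeasure_map hY.aemeasurable
  intro s hs B hB
  -- notation
  set ζ : Ω → ℝ := fun ω => Set.indicator B (fun _ => (1:ℝ)) (Z ω) with hζdef
  have hζb : Bdd01 P ζ := bdd01_indicator_comp hZ hB
  have hζm : StronglyMeasurable[MeasurableSpace.comap (fun ω => (X ω, Z ω)) inferInstance] ζ :=
    (stronglyMeasurable_indicator_comp Z hB).mono (comap_snd_le hX hZ)
  set c : Ω → ℝ := P[ζ | MeasurableSpace.comap X mE] with hcdef
  have hcb : Bdd01 P c := hζb.condexp hmX
  have hcm : StronglyMeasurable[MeasurableSpace.comap X mE] c := stronglyMeasurable_condExp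
  have hfsb : Bdd01 P (fun ω => Set.indicator s (fun _ => (1:ℝ)) (Y ω)) :=
    bdd01_indicator_comp hY hs
  -- it suffices to check the defining set-integral property on σ(X)-sets
  refine (ae_eq_condExp_of_forall_setIntegral_eq hmX (hfsb.mul hζb).integrable
    (fun A _ _ => ((hfsb.condexp hmX).mul hcb).integrable.integrableOn)
    (fun A hA _ => ?_)
    ⟨_, stronglyMeasurable_condExp.mul hcm, EventuallyEq.rfl⟩).symm
  have hA' : MeasurableSet A := hmX A hA
  have hA'' : MeasurableSet[MeasurableSpace.comap (fun ω => (X ω, Z ω)) inferInstance] A :=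
    comap_fst_le hX hZ A hA
  set ι : Ω → ℝ := Set.indicator A (fun _ => (1:ℝ)) with hιdef
  have hιb : Bdd01 P ι := by
    refine ⟨(stronglyMeasurable_const.indicator hA').aestronglyMeasurable, ?_⟩
    refine Eventually.of_forall fun ω => ?_
    by_cases h : ω ∈ A <;> simp [hιdef, h]
  have hιm : StronglyMeasurable[MeasurableSpace.comap X mE] ι :=
    stronglyMeasurable_const.indicator hA
  -- the two measures on ℝ
  set ν₁ : Measure ℝ := Measure.map Y (P.restrict (A ∩ Z ⁻¹' B)) with hν₁def
  set ν₂ : Measure ℝ := Measure.map Y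
    (P.withDensity (fun ω => ENNReal.ofReal (ι ω * c ω))) with hν₂def
  have hABmeas : MeasurableSet (A ∩ Z ⁻¹' B) := hA'.inter (hZ hB)
  -- (i) the first measure computes the left-hand set integrals
  have hκ₁ : ∀ u : Set ℝ, MeasurableSet u →
      ∫ x in A, Set.indicator u (fun _ => (1:ℝ)) (Y x) * ζ x ∂P = (ν₁ u).toReal := by
    intro u hu
    have hset : ∀ x, Set.indicator u (fun _ => (1:ℝ)) (Y x) * ζ x
        = Set.indicator (Y ⁻¹' u ∩ Z ⁻¹' B) (fun _ => (1:ℝ)) x := by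
      intro x
      by_cases h1 : Y x ∈ u <;> by_cases h2 : Z x ∈ B <;>
        simp [hζdef, Set.indicator_apply, h1, h2]
    rw [hν₁def, Measure.map_apply hY hu, Measure.restrict_apply (hY hu)]
    calc ∫ x in A, Set.indicator u (fun _ => (1:ℝ)) (Y x) * ζ x ∂P
        = ∫ x in A, Set.indicator (Y ⁻¹' u ∩ Z ⁻¹' B) (fun _ => (1:ℝ)) x ∂P := by
          exact integral_congr_ae (Eventually.of_forall fun x => hset x)
      _ = ∫ x in A ∩ (Y ⁻¹' u ∩ Z ⁻¹' B), (1:ℝ) ∂P := setIntegral_indicator ((hY hu).inter (hZ hB))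
      _ = (P (A ∩ (Y ⁻¹' u ∩ Z ⁻¹' B))).toReal := by rw [setIntegral_const, smul_eq_mul, mul_one, measureReal_def]
      _ = (P (Y ⁻¹' u ∩ (A ∩ Z ⁻¹' B))).toReal := by
          have hseteq : A ∩ (Y ⁻¹' u ∩ Z ⁻¹' B) = Y ⁻¹' u ∩ (A ∩ Z ⁻¹' B) := by
            ext x; simp only [Set.mem_inter_iff]; tauto
          rw [hseteq]
  -- (ii) the second measure computes the right-hand set integrals
  have hκ₂ : ∀ u : Set ℝ, MeasurableSet u →
      ∫ x in A, (P[(fun ω => Set.indicator u (fun _ => (1:ℝ)) (Y ω)) |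
          MeasurableSpace.comap X mE]) x * c x ∂P = (ν₂ u).toReal := by
    intro u hu
    have hub : Bdd01 P (fun ω => Set.indicator u (fun _ => (1:ℝ)) (Y ω)) :=
      bdd01_indicator_comp hY hu
    have step1 : ∫ x in A, (P[(fun ω => Set.indicator u (fun _ => (1:ℝ)) (Y ω)) |
        MeasurableSpace.comap X mE]) x * c x ∂P
        = ∫ ω, (ι ω * c ω) * Set.indicator u (fun _ => (1:ℝ)) (Y ω) ∂P := by
      rw [setIntegral_eq_integral_indicator_mul hA']
      have := integral_mul_condexp (P := P) hmX (hιm.mul hcm) (hιb.mul hcb) hub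
      calc ∫ ω, Set.indicator A (fun _ => (1:ℝ)) ω
            * ((P[(fun ω => Set.indicator u (fun _ => (1:ℝ)) (Y ω)) |
              MeasurableSpace.comap X mE]) ω * c ω) ∂P
          = ∫ ω, (ι ω * c ω) * (P[(fun ω => Set.indicator u (fun _ => (1:ℝ)) (Y ω)) |
              MeasurableSpace.comap X mE]) ω ∂P := by
            congr 1; funext ω; rw [hιdef]; ring
        _ = ∫ ω, (ι ω * c ω) * Set.indicator u (fun _ => (1:ℝ)) (Y ω) ∂P := this
    rw [step1]
    -- now identify with the withDensity measure
    have hcnn : ∀ᵐ ω ∂P, 0 ≤ ι ω * c ω := by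
      filter_upwards [hιb.2, hcb.2] with ω h1 h2
      exact mul_nonneg h1.1 h2.1
    have haes : AEStronglyMeasurable (fun ω => ι ω * c ω) P := hιb.1.mul hcb.1
    have key : ∫ ω, (ι ω * c ω) * Set.indicator u (fun _ => (1:ℝ)) (Y ω) ∂P
        = ∫ x in Y ⁻¹' u, (ι x * c x) ∂P := by
      rw [setIntegral_eq_integral_indicator_mul (hY hu)]
      congr 1; funext ω
      by_cases h : Y ω ∈ u <;>
        simp [Set.indicator_apply, Set.mem_preimage, h]
    rw [key, hν₂def, Measure.map_apply hY hu,
      withDensity_apply _ (hY hu)]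
    rw [integral_eq_lintegral_of_nonneg_ae (ae_restrict_of_ae hcnn)
      (haes.restrict)]
  -- (iii) both measures are dominated by the law of Y
  have hdom₁ : ν₁ ≤ Measure.map Y P := by
    refine Measure.le_iff.mpr fun u hu => ?_
    rw [hν₁def, Measure.map_apply hY hu, Measure.map_apply hY hu,
      Measure.restrict_apply (hY hu)]
    exact measure_mono Set.inter_subset_left
  have hdom₂ : ν₂ ≤ Measure.map Y P := by
    refine Measure.le_iff.mpr fun u hu => ?_
    rw [hν₂def, Measure.map_apply hY hu, Measure.map_apply hY hu,
      withDensity_apply _ (hY hu)]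
    have hb : ∀ᵐ ω ∂P, ENNReal.ofReal (ι ω * c ω) ≤ 1 := by
      filter_upwards [hιb.2, hcb.2] with ω h1 h2
      exact ENNReal.ofReal_le_one.mpr (mul_le_one₀ h1.2 h2.1 h2.2)
    calc ∫⁻ x in Y ⁻¹' u, ENNReal.ofReal (ι x * c x) ∂P
        ≤ ∫⁻ _ in Y ⁻¹' u, 1 ∂P := lintegral_mono_ae (ae_restrict_of_ae hb)
      _ = P (Y ⁻¹' u) := setLIntegral_one _
  -- (iv) the measures agree on Ici t for a.e. t
  have hagree : ∀ t : ℝ,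
      (P[(fun ω => Set.indicator (Set.Ici t) (fun _ => (1:ℝ)) (Y ω)) |
          MeasurableSpace.comap (fun ω => (X ω, Z ω)) inferInstance] =ᵐ[P]
        P[(fun ω => Set.indicator (Set.Ici t) (fun _ => (1:ℝ)) (Y ω)) |
          MeasurableSpace.comap X mE]) →
      ν₁ (Set.Ici t) = ν₂ (Set.Ici t) := by
    intro t ht
    have hfi : Bdd01 P (fun ω => Set.indicator (Set.Ici t) (fun _ => (1:ℝ)) (Y ω)) :=
      bdd01_indicator_comp hY measurableSet_Ici
    have hwm : StronglyMeasurable[MeasurableSpace.comap (fun ω => (X ω, Z ω)) inferInstance]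
        (fun ω => ι ω * ζ ω) := by
      refine StronglyMeasurable.mul ?_ hζm
      exact (stronglyMeasurable_const.indicator hA'')
    have e1 : ∫ x in A, Set.indicator (Set.Ici t) (fun _ => (1:ℝ)) (Y x) * ζ x ∂P
        = ∫ ω, (ι ω * ζ ω) * (P[(fun ω => Set.indicator (Set.Ici t) (fun _ => (1:ℝ)) (Y ω)) |
            MeasurableSpace.comap (fun ω => (X ω, Z ω)) inferInstance]) ω ∂P := by
      rw [setIntegral_eq_integral_indicator_mul hA']
      rw [integral_mul_condexp (P := P) hmXZ hwm (hιb.mul hζb) hfi]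
      congr 1; funext ω; rw [hιdef]; ring
    have e2 : ∫ ω, (ι ω * ζ ω) * (P[(fun ω => Set.indicator (Set.Ici t) (fun _ => (1:ℝ)) (Y ω)) |
            MeasurableSpace.comap (fun ω => (X ω, Z ω)) inferInstance]) ω ∂P
        = ∫ ω, (ι ω * ζ ω) * (P[(fun ω => Set.indicator (Set.Ici t) (fun _ => (1:ℝ)) (Y ω)) |
            MeasurableSpace.comap X mE]) ω ∂P := by
      refine integral_congr_ae ?_
      filter_upwards [ht] with ω hω
      rw [hω]
    have e3 : ∫ ω, (ι ω * ζ ω) * (P[(fun ω => Set.indicator (Set.Ici t) (fun _ => (1:ℝ)) (Y ω)) |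
            MeasurableSpace.comap X mE]) ω ∂P
        = ∫ x in A, (P[(fun ω => Set.indicator (Set.Ici t) (fun _ => (1:ℝ)) (Y ω)) |
            MeasurableSpace.comap X mE]) x * c x ∂P := by
      have het : Bdd01 P (P[(fun ω => Set.indicator (Set.Ici t) (fun _ => (1:ℝ)) (Y ω)) |
          MeasurableSpace.comap X mE]) := hfi.condexp hmX
      have h4 := integral_mul_condexp (P := P) hmX
        (hιm.mul (stronglyMeasurable_condExp (f := fun ω =>
          Set.indicator (Set.Ici t) (fun _ => (1:ℝ)) (Y ω))))
        (hιb.mul het) hζb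
      rw [setIntegral_eq_integral_indicator_mul hA']
      calc ∫ ω, (ι ω * ζ ω) * (P[(fun ω => Set.indicator (Set.Ici t) (fun _ => (1:ℝ)) (Y ω)) |
            MeasurableSpace.comap X mE]) ω ∂P
          = ∫ ω, (ι ω * (P[(fun ω => Set.indicator (Set.Ici t) (fun _ => (1:ℝ)) (Y ω)) |
              MeasurableSpace.comap X mE]) ω) * ζ ω ∂P := by
            congr 1; funext ω; ring
        _ = ∫ ω, (ι ω * (P[(fun ω => Set.indicator (Set.Ici t) (fun _ => (1:ℝ)) (Y ω)) |
              MeasurableSpace.comap X mE]) ω) * c ω ∂P := h4.symm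
        _ = ∫ ω, Set.indicator A (fun _ => (1:ℝ)) ω
              * ((P[(fun ω => Set.indicator (Set.Ici t) (fun _ => (1:ℝ)) (Y ω)) |
                MeasurableSpace.comap X mE]) ω * c ω) ∂P := by
            congr 1; funext ω; rw [hιdef]; ring
    have hfin₁ : ν₁ (Set.Ici t) ≠ ⊤ :=
      (lt_of_le_of_lt (Measure.le_iff'.mp hdom₁ _) (measure_lt_top _ _)).ne
    have hfin₂ : ν₂ (Set.Ici t) ≠ ⊤ :=
      (lt_of_le_of_lt (Measure.le_iff'.mp hdom₂ _) (measure_lt_top _ _)).ne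
    rw [← ENNReal.toReal_eq_toReal_iff' hfin₁ hfin₂]
    rw [← hκ₁ _ measurableSet_Ici, ← hκ₂ _ measurableSet_Ici]
    rw [e1, e2, e3]
  -- conclude that the measures are equal
  have hT₀ : (Measure.map Y P) {t : ℝ | ¬ (P[(fun ω => Set.indicator (Set.Ici t)
      (fun _ => (1:ℝ)) (Y ω)) | MeasurableSpace.comap (fun ω => (X ω, Z ω)) inferInstance]
        =ᵐ[P] P[(fun ω => Set.indicator (Set.Ici t) (fun _ => (1:ℝ)) (Y ω)) |
          MeasurableSpace.comap X mE])}ᶜᶜ = 0 := by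
    rw [compl_compl]
    exact (ae_iff.mp hae)
  have hν : ν₁ = ν₂ := by
    refine measure_ext_of_Ici_ae hdom₁ hdom₂ (T₀ := {t : ℝ | (P[(fun ω => Set.indicator
      (Set.Ici t) (fun _ => (1:ℝ)) (Y ω)) |
        MeasurableSpace.comap (fun ω => (X ω, Z ω)) inferInstance]
        =ᵐ[P] P[(fun ω => Set.indicator (Set.Ici t) (fun _ => (1:ℝ)) (Y ω)) |
          MeasurableSpace.comap X mE])}) ?_ ?_
    · rw [ae_iff] at hae
      convert hae using 2
      ext t; exact Iff.rfl
    · intro t ht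
      exact hagree t ht
  rw [hκ₂ s hs, hκ₁ s hs, hν]

/-- If for `μ_Y`-a.e. `t` the indicator `1_{Y ≥ t}` is a.e. equal to its conditional
expectation given `σ(X)`, then `Y` is a.e. equal to a measurable function of `X`. -/
theorem exists_factor_of_ae_indicator_eq (hY : Measurable Y) (hX : Measurable X)
    (hae : ∀ᵐ t ∂(Measure.map Y P),
      (fun ω => Set.indicator (Set.Ici t) (fun _ => (1:ℝ)) (Y ω)) =ᵐ[P]
        P[(fun ω => Set.indicator (Set.Ici t) (fun _ => (1:ℝ)) (Y ω)) |
          MeasurableSpace.comap X mE]) :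
    ∃ h : E → ℝ, Measurable h ∧ ∀ᵐ ω ∂P, Y ω = h (X ω) := by
  classical
  have hmX : MeasurableSpace.comap X mE ≤ m0 := hX.comap_le
  haveI : IsProbabilityMeasure (Measure.map Y P) :=
    Measure.isProbabilityMeasure_map hY.aemeasurable
  set T₀ : Set ℝ := {t : ℝ | (fun ω => Set.indicator (Set.Ici t) (fun _ => (1:ℝ)) (Y ω)) =ᵐ[P]
      P[(fun ω => Set.indicator (Set.Ici t) (fun _ => (1:ℝ)) (Y ω)) |
        MeasurableSpace.comap X mE]} with hT₀def
  have hT₀c : (Measure.map Y P) T₀ᶜ = 0 := by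
    rw [ae_iff] at hae
    convert hae using 2
    ext t; exact Iff.rfl
  obtain ⟨C, hCT, hCc, haeC⟩ := exists_countable_skeleton (Measure.map Y P) hT₀c
  -- C is nonempty
  have hCne : C.Nonempty := by
    by_contra hne
    rw [Set.not_nonempty_iff_eq_empty] at hne
    have hfalse : ∀ᵐ y ∂(Measure.map Y P), False := by
      filter_upwards [haeC] with y hy
      obtain ⟨x, hx⟩ := hy (y - 1) (by linarith)
      rw [hne] at hx
      exact hx.1
    rw [ae_iff] at hfalse
    simp only [not_false_iff] at hfalse
    have : (Measure.map Y P) Set.univ = 0 := by simpa using hfalse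
    simp [measure_univ] at this
  obtain ⟨g, hgC⟩ := hCc.exists_eq_range hCne
  -- extract the X-measurable sets
  have hSn : ∀ n : ℕ, ∃ B : Set E, MeasurableSet B ∧
      X ⁻¹' B = {ω | (P[(fun ω => Set.indicator (Set.Ici (g n)) (fun _ => (1:ℝ)) (Y ω)) |
        MeasurableSpace.comap X mE]) ω = 1} := by
    intro n
    have hsm : MeasurableSet[MeasurableSpace.comap X mE]
        {ω | (P[(fun ω => Set.indicator (Set.Ici (g n)) (fun _ => (1:ℝ)) (Y ω)) |
          MeasurableSpace.comap X mE]) ω = 1} := by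
      have hm := (stronglyMeasurable_condExp (m := MeasurableSpace.comap X mE)
        (f := fun ω => Set.indicator (Set.Ici (g n)) (fun _ => (1:ℝ)) (Y ω)) (μ := P)).measurable
      exact hm (measurableSet_singleton (1:ℝ))
    obtain ⟨B, hB, hBeq⟩ := hsm
    exact ⟨B, hB, hBeq⟩
  choose B hBmeas hBeq using hSn
  -- the candidate function
  set φ : E → ℝ := fun x => ⨆ n : ℕ,
    (if x ∈ B n then Real.arctan (g n) else -(Real.pi / 2)) with hφdef
  have hφm : Measurable φ := by
    refine Measurable.iSup fun n => Measurable.ite (hBmeas n) measurable_const measurable_const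
  refine ⟨fun x => Real.sin (φ x) / Real.cos (φ x),
    (Real.measurable_sin.comp hφm).div (Real.measurable_cos.comp hφm), ?_⟩
  -- a.e. identities
  have hgT : ∀ n, (g n) ∈ T₀ := fun n => hCT (hgC ▸ Set.mem_range_self n)
  have hGood1 : ∀ᵐ ω ∂P, ∀ n : ℕ,
      Set.indicator (Set.Ici (g n)) (fun _ => (1:ℝ)) (Y ω)
        = (P[(fun ω => Set.indicator (Set.Ici (g n)) (fun _ => (1:ℝ)) (Y ω)) |
          MeasurableSpace.comap X mE]) ω := by
    rw [ae_all_iff]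
    exact fun n => hgT n
  set G : Set ℝ := {y | ∀ s : ℝ, s < y → (C ∩ Set.Ioc s y).Nonempty} with hGdef
  have hGc : (Measure.map Y P) Gᶜ = 0 := by rw [ae_iff] at haeC; exact haeC
  have hGood2 : ∀ᵐ ω ∂P, Y ω ∈ G := by
    rw [ae_iff]
    refine le_antisymm (le_trans ?_ (le_of_eq hGc)) zero_le
    have hsub : {ω | ¬ Y ω ∈ G} ⊆ Y ⁻¹' Gᶜ := fun ω h => h
    exact le_trans (measure_mono hsub) (Measure.le_map_apply hY.aemeasurable _)
  filter_upwards [hGood1, hGood2] with ω h1 h2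
  -- pointwise: the membership equivalence
  have hmem : ∀ n : ℕ, X ω ∈ B n ↔ g n ≤ Y ω := by
    intro n
    have hx : (X ω ∈ B n) ↔ ω ∈ X ⁻¹' B n := Iff.rfl
    rw [hx, hBeq n]
    simp only [Set.mem_setOf_eq]
    rw [← h1 n]
    by_cases h : g n ≤ Y ω
    · simp [Set.indicator_apply, Set.mem_Ici, h]
    · simp [Set.indicator_apply, Set.mem_Ici, h]
  -- the sup is arctan (Y ω)
  have hbdd : BddAbove (Set.range fun n : ℕ =>
      (if X ω ∈ B n then Real.arctan (g n) else -(Real.pi / 2))) := by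
    refine ⟨Real.pi / 2, ?_⟩
    rintro _ ⟨n, rfl⟩
    by_cases h : X ω ∈ B n
    · simp only [h, if_true]
      exact (Real.arctan_lt_pi_div_two _).le
    · simp only [h, if_false]
      linarith [Real.pi_pos]
  have hsup : φ (X ω) = Real.arctan (Y ω) := by
    refine le_antisymm ?_ ?_
    · refine ciSup_le fun n => ?_
      by_cases h : X ω ∈ B n
      · simp only [h, if_true]
        exact Real.arctan_strictMono.monotone ((hmem n).mp h)
      · simp only [h, if_false]
        exact (Real.neg_pi_div_two_lt_arctan _).le
    · refine le_of_forall_lt fun w hw => ?_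
      -- find c ∈ C with c ≤ Y ω and w < arctan c
      have hfind : ∃ n : ℕ, g n ≤ Y ω ∧ w < Real.arctan (g n) := by
        by_cases hwlow : w ≤ -(Real.pi / 2)
        · obtain ⟨x, hxC, hxIoc⟩ := h2 (Y ω - 1) (by linarith)
          rw [hgC] at hxC
          obtain ⟨n, rfl⟩ := hxC
          exact ⟨n, hxIoc.2, lt_of_le_of_lt hwlow (Real.neg_pi_div_two_lt_arctan _)⟩
        · push_neg at hwlow
          have hw2 : -(Real.pi / 2) < w := hwlow
          have hw3 : w < Real.pi / 2 := lt_trans hw (Real.arctan_lt_pi_div_two _)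
          have htw : Real.tan w < Y ω := by
            by_contra hcon
            push_neg at hcon
            have hmono := Real.arctan_strictMono.monotone hcon
            rw [Real.arctan_tan hw2 hw3] at hmono
            exact absurd hw (not_lt.2 hmono)
          obtain ⟨x, hxC, hxIoc⟩ := h2 (Real.tan w) htw
          rw [hgC] at hxC
          obtain ⟨n, rfl⟩ := hxC
          refine ⟨n, hxIoc.2, ?_⟩
          have harc := Real.arctan_strictMono hxIoc.1
          rwa [Real.arctan_tan hw2 hw3] at harc
      obtain ⟨n, hle, hlt⟩ := hfind
      have hX : X ω ∈ B n := (hmem n).mpr hle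
      calc w < Real.arctan (g n) := hlt
        _ = (if X ω ∈ B n then Real.arctan (g n) else -(Real.pi / 2)) := by rw [if_pos hX]
        _ ≤ φ (X ω) := le_ciSup hbdd n
  rw [hsup, ← Real.tan_eq_sin_div_cos, Real.tan_arctan]


end Setting


/-- If `Y` is not almost surely equal to a measurable function of `X`,
then `T(Y,Z|X) = 0` if and only if `Y` and `Z` are conditionally independent given `X`. -/
theorem Tcoef_eq_zero_iff_condIndep {p q : ℕ}
    {Ω : Type*} [MeasurableSpace Ω] (P : Measure Ω) [IsProbabilityMeasure P]
    (Y : Ω → ℝ) (X : Ω → (Fin p → ℝ)) (Z : Ω → (Fin q → ℝ))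
    (hY : Measurable Y) (hX : Measurable X) (hZ : Measurable Z)
    (hYnotfun : ¬ ∃ h : (Fin p → ℝ) → ℝ, Measurable h ∧ ∀ᵐ ω ∂P, Y ω = h (X ω)) :
    Tcoef P Y X Z = 0 ↔ CondIndepGiven P X Y Z := by
  have hmX : MeasurableSpace.comap X inferInstance ≤ ‹MeasurableSpace Ω› := hX.comap_le
  have hmXZ : MeasurableSpace.comap (fun ω => (X ω, Z ω)) inferInstance
      ≤ ‹MeasurableSpace Ω› := (hX.prodMk hZ).comap_le
  have hle : MeasurableSpace.comap X inferInstance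
      ≤ MeasurableSpace.comap (fun ω => (X ω, Z ω)) inferInstance := comap_fst_le hX hZ
  haveI : IsProbabilityMeasure (Measure.map Y P) := Measure.isProbabilityMeasure_map hY.aemeasurable
  -- replace `if` by indicator
  have hif : ∀ t : ℝ, (fun ω' => if t ≤ Y ω' then (1:ℝ) else 0)
      = fun ω' => Set.indicator (Set.Ici t) (fun _ => (1:ℝ)) (Y ω') := by
    intro t; funext ω; simp [Set.indicator_apply, Set.mem_Ici]
  set N : ℝ → ℝ := fun t => ∫ ω, condVariance P (MeasurableSpace.comap X inferInstance)
      (P[(fun ω' => Set.indicator (Set.Ici t) (fun _ => (1:ℝ)) (Y ω')) |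
        MeasurableSpace.comap (fun ω' => (X ω', Z ω')) inferInstance]) ω ∂P with hNdef
  set D : ℝ → ℝ := fun t => ∫ ω, condVariance P (MeasurableSpace.comap X inferInstance)
      (fun ω' => Set.indicator (Set.Ici t) (fun _ => (1:ℝ)) (Y ω')) ω ∂P with hDdef
  have hTc : Tcoef P Y X Z
      = (∫ t, N t ∂(Measure.map Y P)) / (∫ t, D t ∂(Measure.map Y P)) := by
    rw [Tcoef]
    simp only [hif]
    rfl
  rw [hTc]
  have hindb : ∀ t : ℝ, Bdd01 P (fun ω => Set.indicator (Set.Ici t) (fun _ => (1:ℝ)) (Y ω)) :=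
    fun t => bdd01_indicator_comp hY measurableSet_Ici
  have hindmono : ∀ {t t' : ℝ}, t ≤ t' →
      (fun ω => Set.indicator (Set.Ici t') (fun _ => (1:ℝ)) (Y ω))
        ≤ᵐ[P] (fun ω => Set.indicator (Set.Ici t) (fun _ => (1:ℝ)) (Y ω)) := by
    intro t t' h
    refine Eventually.of_forall fun ω => ?_
    exact Set.indicator_le_indicator_of_subset (Set.Ici_subset_Ici.2 h)
      (fun _ => zero_le_one) _
  constructor
  · -- hard direction
    intro hT
    -- the denominator does not vanish
    have hDnonneg : ∀ t, 0 ≤ D t := fun t => integral_condVariance_nonneg hmX (hindb t)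
    have hDle : ∀ t, D t ≤ 1 := fun t => integral_condVariance_le_one hmX (hindb t)
    have hNnonneg : ∀ t, 0 ≤ N t :=
      fun t => integral_condVariance_nonneg hmX ((hindb t).condexp hmXZ)
    have hNle : ∀ t, N t ≤ 1 :=
      fun t => integral_condVariance_le_one hmX ((hindb t).condexp hmXZ)
    -- expansions
    have hB₁ : Antitone (fun t => ∫ ω, (P[(fun ω' => Set.indicator (Set.Ici t)
        (fun _ => (1:ℝ)) (Y ω')) | MeasurableSpace.comap X inferInstance]) ω ^ 2 ∂P) := by
      intro t t' h
      exact integral_condExp_sq_mono hmX (hindb t') (hindb t) (hindmono h)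
    have hA₁ : Antitone (fun t => ∫ ω, (P[(fun ω' => Set.indicator (Set.Ici t)
        (fun _ => (1:ℝ)) (Y ω')) |
          MeasurableSpace.comap (fun ω' => (X ω', Z ω')) inferInstance]) ω ^ 2 ∂P) := by
      intro t t' h
      exact integral_condExp_sq_mono hmXZ (hindb t') (hindb t) (hindmono h)
    have hA₀ : Antitone (fun t => ∫ ω, (Set.indicator (Set.Ici t)
        (fun _ => (1:ℝ)) (Y ω)) ^ 2 ∂P) := by
      intro t t' h
      exact integral_sq_mono (hindb t') (hindb t) (hindmono h)
    have hNeq : N = fun t => (∫ ω, (P[(fun ω' => Set.indicator (Set.Ici t)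
        (fun _ => (1:ℝ)) (Y ω')) |
          MeasurableSpace.comap (fun ω' => (X ω', Z ω')) inferInstance]) ω ^ 2 ∂P)
        - ∫ ω, (P[(fun ω' => Set.indicator (Set.Ici t)
            (fun _ => (1:ℝ)) (Y ω')) | MeasurableSpace.comap X inferInstance]) ω ^ 2 ∂P := by
      funext t
      simp only [hNdef]
      rw [integral_condVariance_expand hmX ((hindb t).condexp hmXZ)]
      congr 1
      refine integral_congr_ae ?_
      filter_upwards [condExp_condExp_of_le hle hmXZ
        (f := fun ω' => Set.indicator (Set.Ici t) (fun _ => (1:ℝ)) (Y ω'))] with ω hω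
      rw [hω]
    have hDeq : D = fun t => (∫ ω, (Set.indicator (Set.Ici t)
        (fun _ => (1:ℝ)) (Y ω)) ^ 2 ∂P)
        - ∫ ω, (P[(fun ω' => Set.indicator (Set.Ici t)
            (fun _ => (1:ℝ)) (Y ω')) | MeasurableSpace.comap X inferInstance]) ω ^ 2 ∂P := by
      funext t
      simp only [hDdef]
      rw [integral_condVariance_expand hmX (hindb t)]
    have hNmeas : Measurable N := by
      rw [hNeq]; exact hA₁.measurable.sub hB₁.measurable
    have hDmeas : Measurable D := by
      rw [hDeq]; exact hA₀.measurable.sub hB₁.measurable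
    have hNint : Integrable N (Measure.map Y P) := by
      refine Integrable.mono' (integrable_const (1:ℝ)) hNmeas.aestronglyMeasurable ?_
      refine Eventually.of_forall fun t => ?_
      rw [Real.norm_eq_abs, abs_le]
      exact ⟨by linarith [hNnonneg t], hNle t⟩
    have hDint : Integrable D (Measure.map Y P) := by
      refine Integrable.mono' (integrable_const (1:ℝ)) hDmeas.aestronglyMeasurable ?_
      refine Eventually.of_forall fun t => ?_
      rw [Real.norm_eq_abs, abs_le]
      exact ⟨by linarith [hDnonneg t], hDle t⟩
    -- denominator is nonzero
    have hden : ∫ t, D t ∂(Measure.map Y P) ≠ 0 := by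
      intro h0
      have hae : ∀ᵐ t ∂(Measure.map Y P), D t = 0 := by
        rw [integral_eq_zero_iff_of_nonneg_ae (Eventually.of_forall hDnonneg) hDint] at h0
        filter_upwards [h0] with t ht
        exact ht
      have hcol : ∀ᵐ t ∂(Measure.map Y P),
          (fun ω => Set.indicator (Set.Ici t) (fun _ => (1:ℝ)) (Y ω)) =ᵐ[P]
            P[(fun ω => Set.indicator (Set.Ici t) (fun _ => (1:ℝ)) (Y ω)) |
              MeasurableSpace.comap X inferInstance] := by
        filter_upwards [hae] with t ht
        exact (integral_condVariance_eq_zero_iff hmX (hindb t)).mp ht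
      exact hYnotfun (exists_factor_of_ae_indicator_eq hY hX hcol)
    -- so the numerator vanishes
    have hnum : ∫ t, N t ∂(Measure.map Y P) = 0 := by
      rcases div_eq_zero_iff.mp hT with h | h
      · exact h
      · exact absurd h hden
    have hNae : ∀ᵐ t ∂(Measure.map Y P), N t = 0 := by
      rw [integral_eq_zero_iff_of_nonneg_ae (Eventually.of_forall hNnonneg) hNint] at hnum
      filter_upwards [hnum] with t ht
      exact ht
    have hcol : ∀ᵐ t ∂(Measure.map Y P),
        P[(fun ω => Set.indicator (Set.Ici t) (fun _ => (1:ℝ)) (Y ω)) |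
            MeasurableSpace.comap (fun ω => (X ω, Z ω)) inferInstance] =ᵐ[P]
          P[(fun ω => Set.indicator (Set.Ici t) (fun _ => (1:ℝ)) (Y ω)) |
            MeasurableSpace.comap X inferInstance] := by
      filter_upwards [hNae] with t ht
      exact (integral_condVariance_condexp_eq_zero_iff hle hmXZ (hindb t)).mp ht
    exact condIndep_of_ae_collapse hY hX hZ hcol
  · -- easy direction
    intro hCI
    have hcol : ∀ t : ℝ,
        P[(fun ω => Set.indicator (Set.Ici t) (fun _ => (1:ℝ)) (Y ω)) |
            MeasurableSpace.comap (fun ω => (X ω, Z ω)) inferInstance] =ᵐ[P]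
          P[(fun ω => Set.indicator (Set.Ici t) (fun _ => (1:ℝ)) (Y ω)) |
            MeasurableSpace.comap X inferInstance] :=
      fun t => condexp_collapse_of_condIndep hY hX hZ hCI measurableSet_Ici
    have hNzero : N = fun _ => (0:ℝ) := by
      funext t
      simp only [hNdef]
      exact (integral_condVariance_condexp_eq_zero_iff hle hmXZ (hindb t)).mpr (hcol t)
    rw [hNzero]
    simp
end
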